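/- arXiv:1707.08039 — 5 statements merged into one kernel-verified Lean document; each statement's English description precedes it below -/
import Mathlib

section
/- There is an absolute constant c > 0 such that the following holds for every instance of scheduling precedence-constrained jobs on related machines (Q|prec|C_max) with m ≥ 3 machines: for every feasible solution (x, C, D) to the LP relaxation with makespan bound D, there exists a valid schedule whose makespan is at most c·(log m / log log m)·D. In particular, the integrality gap of this LP relaxation for Q|prec|C_max is O(log m / log log m). -/
open Finset


section helpers
variable {α β : Type*}

lemma fold_max_nonneg (s : Finset α) (f : α → ℝ) :
    (0:ℝ) ≤ s.fold max 0 f := by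
  rw [Finset.le_fold_max]; left; rfl

lemma fold_max_attained (s : Finset α) (f : α → ℝ) :
    s.fold max 0 f = 0 ∨ ∃ a ∈ s, s.fold max 0 f = f a := by
  classical
  induction s using Finset.induction_on with
  | empty => left; simp
  | @insert a s hx ih =>
    rw [Finset.fold_insert hx]
    rcases le_total (f a) (s.fold max 0 f) with h | h
    · rw [max_eq_right h]
      rcases ih with h0 | ⟨b, hb, he⟩
      · left; exact h0
      · right; exact ⟨b, Finset.mem_insert_of_mem hb, he⟩
    · rw [max_eq_left h]
      right; exact ⟨a, Finset.mem_insert_self a s, rfl⟩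

lemma le_fold_max_of_mem (s : Finset α) (f : α → ℝ) {a : α} (ha : a ∈ s) :
    f a ≤ s.fold max 0 f := by
  rw [Finset.le_fold_max]; right; exact ⟨a, ha, le_rfl⟩

lemma fold_max_le_of (s : Finset α) (f : α → ℝ) {c : ℝ} (h0 : 0 ≤ c)
    (h : ∀ a ∈ s, f a ≤ c) : s.fold max 0 f ≤ c := by
  rw [Finset.fold_max_le]; exact ⟨h0, h⟩

/-- existence of a list sorted (descending) by a key -/
lemma exists_sorted_list [DecidableEq α] (s : Finset α) (τ : α → ℝ) :
    ∃ l : List α, l.Nodup ∧ (∀ j, j ∈ l ↔ j ∈ s) ∧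
      l.Pairwise (fun a b => τ b ≤ τ a) := by
  classical
  induction s using Finset.strongInduction with
  | _ s ih =>
    rcases s.eq_empty_or_nonempty with rfl | hs
    · exact ⟨[], by simp, by simp, List.Pairwise.nil⟩
    · obtain ⟨a, ha, hmax⟩ := s.exists_max_image τ hs
      obtain ⟨l, hnd, hmem, hsort⟩ := ih (s.erase a) (Finset.erase_ssubset ha)
      refine ⟨a :: l, ?_, ?_, ?_⟩
      · refine List.nodup_cons.2 ⟨fun hc => ?_, hnd⟩
        exact (Finset.notMem_erase a s) ((hmem a).1 hc)
      · intro j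
        simp only [List.mem_cons, hmem, Finset.mem_erase]
        constructor
        · rintro (rfl | ⟨-, hj⟩)
          · exact ha
          · exact hj
        · intro hj
          by_cases hja : j = a
          · left; exact hja
          · right; exact ⟨hja, hj⟩
      · refine List.pairwise_cons.2 ⟨fun b hb => ?_, hsort⟩
        exact hmax b (Finset.mem_of_mem_erase ((hmem b).1 hb))
end helpers

section packing
variable {J M : Type} [Fintype J] [Fintype M] [DecidableEq J] [DecidableEq M]

/-- Greedy packing of jobs to machines with nested allowed sets. -/
lemma greedy_packing (p : J → ℝ) (hp : ∀ j, 0 < p j) (τ : J → ℝ)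
    (s : M → ℝ) (hs : ∀ i, 0 < s i) (D : ℝ) (hD : 0 < D)
    (allowed : J → Finset M) (hne : ∀ j, (allowed j).Nonempty)
    (hnest : ∀ j j', τ j ≤ τ j' → allowed j' ⊆ allowed j)
    (hvol : ∀ j, ∑ j' ∈ univ.filter (fun j' => τ j ≤ τ j'), p j'
        ≤ (8/3) * D * ∑ i ∈ allowed j, s i)
    (hpiece : ∀ j, ∀ i ∈ allowed j, p j ≤ 4 * s i * D) :
    ∃ σ0 : J → M, (∀ j, σ0 j ∈ allowed j) ∧
      ∀ i, ∑ j ∈ univ.filter (fun j => σ0 j = i), p j ≤ 7 * s i * D := by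
  classical
  obtain ⟨l, hnd, hmem, hsort⟩ := exists_sorted_list (univ : Finset J) τ
  suffices H : ∀ (l' : List J), ∀ (done : Finset J) (σ0 : J → M),
      l'.Pairwise (fun a b => τ b ≤ τ a) → l'.Nodup →
      (∀ j ∈ l', j ∉ done) →
      (∀ j ∈ done, σ0 j ∈ allowed j) →
      (∀ j ∈ done, ∀ j' ∈ l', τ j' ≤ τ j) →
      (∀ i, ∑ j ∈ done.filter (fun j => σ0 j = i), p j ≤ 7 * s i * D) →
      ∃ σ1 : J → M, (∀ j ∈ done, σ1 j = σ0 j) ∧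
        (∀ j, j ∈ l' ∨ j ∈ done → σ1 j ∈ allowed j) ∧
        ∀ i, ∑ j ∈ (done ∪ l'.toFinset).filter (fun j => σ1 j = i), p j ≤ 7 * s i * D by
    obtain ⟨σ1, _, hall, hload⟩ := H l ∅ (fun j => (hne j).choose)
      hsort hnd (by simp) (by simp) (by simp)
      (by intro i; simp only [Finset.filter_empty, Finset.sum_empty]
          nlinarith [hs i, hD])
    refine ⟨σ1, fun j => hall j (Or.inl ((hmem j).2 (mem_univ j))), fun i => ?_⟩
    have he : (univ : Finset J) = ∅ ∪ l.toFinset := by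
      ext j; simp [← hmem j]
    rw [he]; exact hload i
  intro l'
  induction l' with
  | nil =>
    intro done σ0 _ _ _ hmemd _ hload
    exact ⟨σ0, fun _ _ => rfl, fun j hj => hmemd j (by tauto), by simpa using hload⟩
  | cons j rest ih =>
    intro done σ0 hsort' hnd' hdisj hmemd hτ hload
    -- find a machine with slack
    have hjd : j ∉ done := hdisj j List.mem_cons_self
    have hkey : ∃ i0 ∈ allowed j, ∑ j' ∈ done.filter (fun j' => σ0 j' = i0), p j' ≤ 3 * s i0 * D := by
      by_contra hcon
      push_neg at hcon
      have hsum : ∑ i ∈ allowed j, ∑ j' ∈ done.filter (fun j' => σ0 j' = i), p j'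
          = ∑ j' ∈ done.filter (fun j' => σ0 j' ∈ allowed j), p j' :=
        Finset.sum_fiberwise_eq_sum_filter done (allowed j) σ0 p
      have hfull : done.filter (fun j' => σ0 j' ∈ allowed j) = done := by
        apply Finset.filter_true_of_mem
        intro j' hj'
        exact hnest j j' (hτ j' hj' j List.mem_cons_self) (hmemd j' hj')
      have h1 : ∑ i ∈ allowed j, 3 * s i * D < ∑ j' ∈ done, p j' := by
        rw [← hfull, ← hsum]
        exact Finset.sum_lt_sum_of_nonempty (hne j) fun i hi => hcon i hi
      have h2 : ∑ j' ∈ done, p j' + p j ≤ ∑ j' ∈ univ.filter (fun j' => τ j ≤ τ j'), p j' := by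
        have hsub : insert j done ⊆ univ.filter (fun j' => τ j ≤ τ j') := by
          intro j' hj'
          rcases Finset.mem_insert.1 hj' with rfl | hj'
          · simp
          · simp only [Finset.mem_filter, Finset.mem_univ, true_and]
            exact hτ j' hj' j List.mem_cons_self
        calc ∑ j' ∈ done, p j' + p j = ∑ j' ∈ insert j done, p j' := by
              rw [Finset.sum_insert hjd]; ring
          _ ≤ _ := Finset.sum_le_sum_of_subset_of_nonneg hsub fun j' _ _ => (hp j').le
      have h3 : 0 < ∑ i ∈ allowed j, s i :=
        Finset.sum_pos (fun i _ => hs i) (hne j)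
      have h4 : ∑ i ∈ allowed j, 3 * s i * D = 3 * (∑ i ∈ allowed j, s i) * D := by
        rw [← Finset.sum_mul, ← Finset.mul_sum]
      rw [h4] at h1
      nlinarith [hvol j, hp j, mul_pos h3 hD]
    obtain ⟨i0, hi0, hslack⟩ := hkey
    set σ1 := Function.update σ0 j i0 with hσ1
    have hupd : ∀ j' ∈ done, σ1 j' = σ0 j' := by
      intro j' hj'
      apply Function.update_of_ne
      intro h; rw [h] at hj'; exact hjd hj'
    have hfiltereq : ∀ i, done.filter (fun j' => σ1 j' = i) = done.filter (fun j' => σ0 j' = i) := by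
      intro i; apply Finset.filter_congr; intro j' hj'; simp [hupd j' hj']
    obtain ⟨σ2, hag, hall, hload'⟩ := ih (insert j done) σ1
      (List.pairwise_cons.1 hsort').2 (List.nodup_cons.1 hnd').2
      (by
        intro j' hj'
        simp only [Finset.mem_insert, not_or]
        exact ⟨fun h => (List.nodup_cons.1 hnd').1 (h ▸ hj'),
          hdisj j' (List.mem_cons_of_mem _ hj')⟩)
      (by
        intro j' hj'
        rcases Finset.mem_insert.1 hj' with rfl | hj'
        · simpa [hσ1] using hi0
        · rw [hupd j' hj']; exact hmemd j' hj')
      (by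
        intro j' hj' j'' hj''
        rcases Finset.mem_insert.1 hj' with rfl | hj'
        · exact (List.pairwise_cons.1 hsort').1 j'' hj''
        · exact hτ j' hj' j'' (List.mem_cons_of_mem _ hj''))
      (by
        intro i
        rw [Finset.filter_insert]
        by_cases hcase : σ1 j = i
        · rw [if_pos hcase, Finset.sum_insert (fun hc => hjd (Finset.mem_of_mem_filter _ hc))]
          rw [hfiltereq i]
          have hji : i0 = i := by simpa [hσ1] using hcase
          have hpj : p j ≤ 4 * s i * D := hji ▸ hpiece j i0 hi0
          have := hji ▸ hslack
          nlinarith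
        · rw [if_neg hcase, hfiltereq i]
          exact hload i)
    refine ⟨σ2, ?_, ?_, ?_⟩
    · intro j' hj'
      rw [hag j' (Finset.mem_insert_of_mem hj'), hupd j' hj']
    · intro j' hj'
      rcases hj' with hj' | hj'
      · rcases List.mem_cons.1 hj' with rfl | hj'
        · exact hall j' (Or.inr (Finset.mem_insert_self _ _))
        · exact hall j' (Or.inl hj')
      · exact hall j' (Or.inr (Finset.mem_insert_of_mem hj'))
    · intro i
      have : done ∪ (j :: rest).toFinset = insert j done ∪ rest.toFinset := by
        rw [List.toFinset_cons]
        ext a; simp only [Finset.mem_union, Finset.mem_insert]; tauto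
      rw [this]
      exact hload' i

end packing

section sched
variable {J M : Type} [Fintype J] [Fintype M] [DecidableEq J] [DecidableEq M]
variable (prec : J → J → Prop) [DecidableRel prec]
variable (Mset : J → Finset M) (dur : J → M → ℝ)

/-- completion time -/
def Fc (σ : J → M) (S : J → ℝ) (j : J) : ℝ := S j + dur j (σ j)

/-- ready time: max completion time of predecessors -/
def Rd (σ : J → M) (S : J → ℝ) (j : J) : ℝ :=
  (univ.filter (fun j' => prec j' j)).fold max 0 (Fc dur σ S)

/-- machine release time -/
def rmach (Done : Finset J) (σ : J → M) (S : J → ℝ) (i : M) : ℝ :=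
  (Done.filter (fun j' => σ j' = i)).fold max 0 (Fc dur σ S)

/-- busy set of machine i -/
def busyset (Done : Finset J) (σ : J → M) (S : J → ℝ) (i : M) : Set ℝ :=
  ⋃ j' ∈ Done.filter (fun j'' => σ j'' = i), Set.Ioc (S j') (Fc dur σ S j')

def tlast (Done : Finset J) (S : J → ℝ) : ℝ := Done.fold max 0 S

variable (hMne : ∀ j, (Mset j).Nonempty)

/-- candidate start time of a ready job -/
def cand (Done : Finset J) (σ : J → M) (S : J → ℝ) (j : J) : ℝ :=
  max (Rd prec dur σ S j) ((Mset j).inf' (hMne j) (rmach dur Done σ S))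

structure SchedInv (Done : Finset J) (σ : J → M) (S : J → ℝ) : Prop where
  closed : ∀ j ∈ Done, ∀ j', prec j' j → j' ∈ Done
  mem    : ∀ j ∈ Done, σ j ∈ Mset j
  rd_le  : ∀ j ∈ Done, Rd prec dur σ S j ≤ S j
  disj   : ∀ j ∈ Done, ∀ j' ∈ Done, j ≠ j' → σ j = σ j' →
            Fc dur σ S j ≤ S j' ∨ Fc dur σ S j' ≤ S j
  gap    : ∀ j ∈ Done, ∀ i ∈ Mset j, Set.Ioo (Rd prec dur σ S j) (S j) ⊆
            busyset dur Done σ S i ∪ ↑(Done.image S)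
  inv1   : ∀ j ∉ Done, (∀ j', prec j' j → j' ∈ Done) → ∀ i ∈ Mset j,
            Set.Ioo (Rd prec dur σ S j) (tlast Done S) ⊆
            busyset dur Done σ S i ∪ ↑(Done.image S)
  candge : ∀ j ∉ Done, (∀ j', prec j' j → j' ∈ Done) →
            tlast Done S ≤ cand prec Mset dur hMne Done σ S j

lemma cand_def (Done : Finset J) (σ : J → M) (S : J → ℝ) (j : J) :
    cand prec Mset dur hMne Done σ S j
      = max (Rd prec dur σ S j) ((Mset j).inf' (hMne j) (rmach dur Done σ S)) := rfl

lemma tlast_def (Done : Finset J) (S : J → ℝ) : tlast Done S = Done.fold max 0 S := rfl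

lemma rmach_def (Done : Finset J) (σ : J → M) (S : J → ℝ) (i : M) :
    rmach dur Done σ S i = (Done.filter (fun j' => σ j' = i)).fold max 0 (Fc dur σ S) := rfl

lemma busy_cover {Done : Finset J} {σ : J → M} {S : J → ℝ}
    (hS : ∀ j ∈ Done, S j ≤ tlast Done S) {i : M} {t : ℝ}
    (h1 : tlast Done S < t) (h2 : t ≤ rmach dur Done σ S i) :
    t ∈ busyset dur Done σ S i := by
  have h0 : (0:ℝ) ≤ tlast Done S := fold_max_nonneg _ _
  have hr : rmach dur Done σ S i ≠ 0 := by
    intro h; rw [h] at h2; linarith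
  rcases fold_max_attained (Done.filter (fun j' => σ j' = i)) (Fc dur σ S) with h | ⟨a, ha, he⟩
  · exact absurd h hr
  · have haD : a ∈ Done := Finset.mem_of_mem_filter _ ha
    refine Set.mem_biUnion ha ?_
    refine Set.mem_Ioc.2 ⟨lt_of_le_of_lt (hS a haD) h1, ?_⟩
    rw [rmach_def, he] at h2; exact h2

/-- the main induction -/
lemma sched_step (htrans : Transitive prec) (hirr : Irreflexive prec)
    (hdur : ∀ j i, 0 < dur j i) : ∀ (n : ℕ) (Done : Finset J) (σ : J → M) (S : J → ℝ),
    Done.card + n = Fintype.card J →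
    SchedInv prec Mset dur hMne Done σ S →
    ∃ σ' S', (∀ j ∈ Done, σ' j = σ j ∧ S' j = S j) ∧ SchedInv prec Mset dur hMne univ σ' S' := by
  intro n
  induction n with
  | zero =>
    intro Done σ S hcard hinv
    have : Done = univ := Finset.eq_univ_of_card _ (by omega)
    subst this
    exact ⟨σ, S, fun j _ => ⟨rfl, rfl⟩, hinv⟩
  | succ n ih =>
    intro Done σ S hcard hinv
    -- the set of ready jobs is nonempty
    have hne : (univ.filter (fun j => j ∉ Done ∧ ∀ j', prec j' j → j' ∈ Done)).Nonempty := by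
      have hC : ((univ \ Done : Finset J) : Set J).Nonempty := by
        have : (univ \ Done).Nonempty := by
          rw [Finset.sdiff_nonempty]
          intro hsub
          have := Finset.card_le_card hsub
          simp only [Finset.card_univ] at this
          omega
        exact ⟨this.choose, by exact_mod_cast this.choose_spec⟩
      letI : IsTrans J prec := ⟨htrans⟩
      letI : IsIrrefl J prec := ⟨hirr⟩
      obtain ⟨u, hu, hmin⟩ := (Finite.wellFounded_of_trans_of_irrefl prec).has_min _ hC
      have huD : u ∉ Done := by
        simp only [Finset.coe_sdiff, Set.mem_diff, Finset.coe_univ] at hu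
        exact fun h => hu.2 h
      refine ⟨u, Finset.mem_filter.2 ⟨mem_univ u, huD, fun j' hj' => ?_⟩⟩
      by_contra hj'D
      exact hmin j' (by simp [hj'D]) hj'
    obtain ⟨u, humem, humin⟩ := Finset.exists_min_image _ (cand prec Mset dur hMne Done σ S) hne
    obtain ⟨huD, huready⟩ := (Finset.mem_filter.1 humem).2
    obtain ⟨istar, histar, hinfeq⟩ := Finset.exists_mem_eq_inf' (hMne u) (rmach dur Done σ S)
    set Sstar := cand prec Mset dur hMne Done σ S u with hSstar
    set σ' := Function.update σ u istar with hσ'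
    set S' := Function.update S u Sstar with hS'
    set Done' := insert u Done with hDone'
    -- basic facts
    have hσ'u : σ' u = istar := Function.update_self u istar σ
    have hS'u : S' u = Sstar := Function.update_self u Sstar S
    have hσ'ne : ∀ j ≠ u, σ' j = σ j := fun j hj => Function.update_of_ne hj _ _
    have hS'ne : ∀ j ≠ u, S' j = S j := fun j hj => Function.update_of_ne hj _ _
    have hmemne : ∀ j ∈ Done, j ≠ u := fun j hj h => huD (h ▸ hj)
    have hFc' : ∀ j ≠ u, Fc dur σ' S' j = Fc dur σ S j := by
      intro j hj; unfold Fc; rw [hσ'ne j hj, hS'ne j hj]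
    have hFc'u : Fc dur σ' S' u = Sstar + dur u istar := by unfold Fc; rw [hσ'u, hS'u]
    have hRd' : ∀ j, ¬ prec u j → Rd prec dur σ' S' j = Rd prec dur σ S j := by
      intro j hj
      apply Finset.fold_congr
      intro j' hj'
      have : prec j' j := (Finset.mem_filter.1 hj').2
      exact hFc' j' (fun h => hj (h ▸ this))
    have hRdu : Rd prec dur σ' S' u = Rd prec dur σ S u := hRd' u (fun h => hirr u h)
    have hRd0 : ∀ (σ₀ : J → M) (S₀ : J → ℝ) j, (0:ℝ) ≤ Rd prec dur σ₀ S₀ j :=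
      fun σ₀ S₀ j => fold_max_nonneg _ _
    have hRdleS : Rd prec dur σ S u ≤ Sstar := le_max_left _ _
    have hcdef : Sstar = max (Rd prec dur σ S u) ((Mset u).inf' (hMne u) (rmach dur Done σ S)) := rfl
    have hristar : rmach dur Done σ S istar ≤ Sstar := by
      rw [hcdef, ← hinfeq]; exact le_max_right _ _
    have hrge : ∀ i ∈ Mset u, (Mset u).inf' (hMne u) (rmach dur Done σ S) ≤ rmach dur Done σ S i :=
      fun i hi => Finset.inf'_le _ hi
    have htlastle : tlast Done S ≤ Sstar := hinv.candge u huD huready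
    have htlast0 : (0:ℝ) ≤ tlast Done S := fold_max_nonneg _ _
    have hSletl : ∀ j ∈ Done, S j ≤ tlast Done S := fun j hj => le_fold_max_of_mem _ _ hj
    -- stability of filters
    have hfilt : ∀ i, Done.filter (fun j' => σ' j' = i) = Done.filter (fun j' => σ j' = i) := by
      intro i; apply Finset.filter_congr; intro j' hj'; rw [hσ'ne j' (hmemne j' hj')]
    have hfoldc : ∀ i, (Done.filter (fun j' => σ' j' = i)).fold max 0 (Fc dur σ' S')
        = rmach dur Done σ S i := by
      intro i
      rw [rmach_def, hfilt i]
      exact Finset.fold_congr fun j' hj' => hFc' j' (hmemne j' (Finset.mem_of_mem_filter _ hj'))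
    have hrm : ∀ i, rmach dur Done σ' S' i = rmach dur Done σ S i := by
      intro i; rw [rmach_def]; exact hfoldc i
    have hrmD' : ∀ i, rmach dur Done' σ' S' i
        = if σ' u = i then max (Fc dur σ' S' u) (rmach dur Done σ S i)
          else rmach dur Done σ S i := by
      intro i
      rw [rmach_def, hDone', Finset.filter_insert]
      by_cases hc : σ' u = i
      · rw [if_pos hc, if_pos hc,
          Finset.fold_insert (fun hmem => huD (Finset.mem_of_mem_filter _ hmem)), hfoldc i]
      · rw [if_neg hc, if_neg hc, hfoldc i]
    have hrm' : ∀ i, rmach dur Done σ S i ≤ rmach dur Done' σ' S' i := by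
      intro i
      rw [hrmD' i]
      by_cases hc : σ' u = i
      · rw [if_pos hc]; exact le_max_right _ _
      · rw [if_neg hc]
    have hbusymono : ∀ i, busyset dur Done σ S i ⊆ busyset dur Done' σ' S' i := by
      intro i t ht
      unfold busyset at ht ⊢
      simp only [Set.mem_iUnion] at ht ⊢
      obtain ⟨j', hj', htmem⟩ := ht
      have hj'D : j' ∈ Done := Finset.mem_of_mem_filter _ hj'
      have hj'ne : j' ≠ u := hmemne j' hj'D
      refine ⟨j', ?_, ?_⟩
      · simp only [Finset.mem_filter] at hj' ⊢
        exact ⟨Finset.mem_insert_of_mem hj'.1, by rw [hσ'ne j' hj'ne]; exact hj'.2⟩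
      · rw [hS'ne j' hj'ne, hFc' j' hj'ne]; exact htmem
    have himgmono : (↑(Done.image S) : Set ℝ) ⊆ ↑(Done'.image S') := by
      intro t ht
      simp only [Finset.coe_image, Set.mem_image, Finset.mem_coe] at ht ⊢
      obtain ⟨j', hj', rfl⟩ := ht
      exact ⟨j', Finset.mem_insert_of_mem hj', hS'ne j' (hmemne j' hj')⟩
    have htlast' : tlast Done' S' = Sstar := by
      rw [tlast_def, hDone', Finset.fold_insert huD, hS'u]
      have : Done.fold max 0 S' = Done.fold max 0 S :=
        Finset.fold_congr fun j' hj' => hS'ne j' (hmemne j' hj')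
      rw [this]
      exact max_eq_left htlastle
    -- image attainment
    have himg_attain : ∀ t, 0 < t → t = tlast Done S → (t : ℝ) ∈ (↑(Done.image S) : Set ℝ) := by
      intro t ht htl
      rcases fold_max_attained Done S with h | ⟨a, ha, he⟩
      · rw [tlast_def] at htl; rw [htl, h] at ht; exact absurd ht (lt_irrefl 0)
      · simp only [Finset.coe_image, Set.mem_image, Finset.mem_coe]
        exact ⟨a, ha, by rw [htl, tlast_def, he]⟩
    -- establish the new invariant
    have hinv' : SchedInv prec Mset dur hMne Done' σ' S' := by
      constructor
      · -- closed
        intro j hj j' hj'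
        rcases Finset.mem_insert.1 hj with hje | hj
        · rw [hje] at hj'
          exact Finset.mem_insert_of_mem (huready j' hj')
        · exact Finset.mem_insert_of_mem (hinv.closed j hj j' hj')
      · -- mem
        intro j hj
        rcases Finset.mem_insert.1 hj with hje | hj
        · rw [hje, hσ'u]; exact histar
        · rw [hσ'ne j (hmemne j hj)]; exact hinv.mem j hj
      · -- rd_le
        intro j hj
        rcases Finset.mem_insert.1 hj with hje | hj
        · rw [hje, hRdu, hS'u]; exact hRdleS
        · have hne' : j ≠ u := hmemne j hj
          have : ¬ prec u j := fun h => huD (hinv.closed j hj u h)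
          rw [hRd' j this, hS'ne j hne']
          exact hinv.rd_le j hj
      · -- disj
        intro j hj j' hj' hne' hσeq
        rcases Finset.mem_insert.1 hj with hje | hj
        · rcases Finset.mem_insert.1 hj' with hje' | hj'
          · exact absurd (hje.trans hje'.symm) hne'
          · -- j = u, j' ∈ Done
            right
            have hj'u : j' ≠ u := hmemne j' hj'
            rw [hje, hFc' j' hj'u, hS'u]
            have : σ j' = istar := by rw [← hσ'ne j' hj'u, ← hσeq, hje, hσ'u]
            have hmem' : j' ∈ Done.filter (fun a => σ a = istar) :=
              Finset.mem_filter.2 ⟨hj', this⟩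
            exact le_trans (le_fold_max_of_mem _ _ hmem') hristar
        · rcases Finset.mem_insert.1 hj' with hje' | hj'
          · left
            have hju : j ≠ u := hmemne j hj
            rw [hje', hFc' j hju, hS'u]
            have : σ j = istar := by rw [← hσ'ne j hju, hσeq, hje', hσ'u]
            have hmem' : j ∈ Done.filter (fun a => σ a = istar) :=
              Finset.mem_filter.2 ⟨hj, this⟩
            exact le_trans (le_fold_max_of_mem _ _ hmem') hristar
          · have hju : j ≠ u := hmemne j hj
            have hj'u : j' ≠ u := hmemne j' hj'
            rw [hFc' j hju, hFc' j' hj'u, hS'ne j hju, hS'ne j' hj'u]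
            exact hinv.disj j hj j' hj' hne' (by rw [← hσ'ne j hju, ← hσ'ne j' hj'u]; exact hσeq)
      · -- gap
        intro j hj i hi
        rcases Finset.mem_insert.1 hj with hje | hj
        · -- the new job u
          rw [hje] at hi
          rw [hje, hRdu, hS'u]
          intro t ht
          obtain ⟨ht1, ht2⟩ := ht
          have hSgtRd : Rd prec dur σ S u < Sstar := lt_trans ht1 ht2
          have hSeq : Sstar = rmach dur Done σ S istar := by
            rcases max_choice (Rd prec dur σ S u) ((Mset u).inf' (hMne u) (rmach dur Done σ S)) with
              hm | hm
            · rw [hcdef, hm] at hSgtRd; exact absurd hSgtRd (lt_irrefl _)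
            · rw [hcdef, hm, hinfeq]
          rcases lt_trichotomy t (tlast Done S) with hc | hc | hc
          · have := hinv.inv1 u huD huready i hi (Set.mem_Ioo.2 ⟨ht1, hc⟩)
            rcases this with h | h
            · exact Or.inl (hbusymono i h)
            · exact Or.inr (himgmono h)
          · refine Or.inr (himgmono ?_)
            exact himg_attain t (lt_of_le_of_lt (hRd0 σ S u) ht1) hc
          · -- tlast < t < Sstar ≤ rmach i
            have hri : t ≤ rmach dur Done σ S i := by
              refine le_trans (le_of_lt ht2) ?_
              calc Sstar = rmach dur Done σ S istar := hSeq
                _ = (Mset u).inf' (hMne u) (rmach dur Done σ S) := hinfeq.symm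
                _ ≤ rmach dur Done σ S i := Finset.inf'_le _ hi
            exact Or.inl (hbusymono i (busy_cover dur hSletl hc hri))
        · -- old jobs
          have hju : j ≠ u := hmemne j hj
          have hnpu : ¬ prec u j := fun h => huD (hinv.closed j hj u h)
          rw [hRd' j hnpu, hS'ne j hju]
          intro t ht
          rcases hinv.gap j hj i hi ht with h | h
          · exact Or.inl (hbusymono i h)
          · exact Or.inr (himgmono h)
      · -- inv1
        intro j hjD' hready' i hi
        rw [htlast']
        by_cases hprecu : prec u j
        · have : Fc dur σ' S' u ≤ Rd prec dur σ' S' j := by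
            apply le_fold_max_of_mem
            exact Finset.mem_filter.2 ⟨mem_univ u, hprecu⟩
          rw [Set.Ioo_eq_empty (by rw [hFc'u] at this; push_neg; nlinarith [hdur u istar])]
          exact Set.empty_subset _
        · have hjD : j ∉ Done := fun h => hjD' (Finset.mem_insert_of_mem h)
          have hju : j ≠ u := fun h => hjD' (h ▸ Finset.mem_insert_self u Done)
          have hreadyold : ∀ j', prec j' j → j' ∈ Done := by
            intro j' hj'
            rcases Finset.mem_insert.1 (hready' j' hj') with rfl | h
            · exact absurd hj' hprecu
            · exact h
          rw [hRd' j hprecu]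
          intro t ht
          obtain ⟨ht1, ht2⟩ := ht
          rcases lt_trichotomy t (tlast Done S) with hc | hc | hc
          · rcases hinv.inv1 j hjD hreadyold i hi (Set.mem_Ioo.2 ⟨ht1, hc⟩) with h | h
            · exact Or.inl (hbusymono i h)
            · exact Or.inr (himgmono h)
          · exact Or.inr (himgmono (himg_attain t (lt_of_le_of_lt (hRd0 σ S j) ht1) hc))
          · -- tlast < t < Sstar, use minimality of cand u
            have hjready : j ∈ univ.filter (fun a => a ∉ Done ∧ ∀ j', prec j' a → j' ∈ Done) :=
              Finset.mem_filter.2 ⟨mem_univ j, hjD, hreadyold⟩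
            have hcand : Sstar ≤ cand prec Mset dur hMne Done σ S j := humin j hjready
            have hinfge : Sstar ≤ (Mset j).inf' (hMne j) (rmach dur Done σ S) := by
              rw [cand_def] at hcand
              rcases max_choice (Rd prec dur σ S j) ((Mset j).inf' (hMne j) (rmach dur Done σ S)) with
                h1 | h1
              · rw [h1] at hcand; linarith
              · rw [h1] at hcand; exact hcand
            have hri : t ≤ rmach dur Done σ S i :=
              le_trans (le_of_lt ht2) (le_trans hinfge (Finset.inf'_le _ hi))
            exact Or.inl (hbusymono i (busy_cover dur hSletl hc hri))
      · -- candge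
        intro j hjD' hready'
        rw [htlast']
        by_cases hprecu : prec u j
        · have h1 : Fc dur σ' S' u ≤ Rd prec dur σ' S' j := by
            apply le_fold_max_of_mem
            exact Finset.mem_filter.2 ⟨mem_univ u, hprecu⟩
          rw [cand_def]
          refine le_trans ?_ (le_max_left _ _)
          rw [hFc'u] at h1
          nlinarith [hdur u istar]
        · have hjD : j ∉ Done := fun h => hjD' (Finset.mem_insert_of_mem h)
          have hreadyold : ∀ j', prec j' j → j' ∈ Done := by
            intro j' hj'
            rcases Finset.mem_insert.1 (hready' j' hj') with rfl | h
            · exact absurd hj' hprecu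
            · exact h
          have hjready : j ∈ univ.filter (fun a => a ∉ Done ∧ ∀ j', prec j' a → j' ∈ Done) :=
            Finset.mem_filter.2 ⟨mem_univ j, hjD, hreadyold⟩
          have hcand : Sstar ≤ cand prec Mset dur hMne Done σ S j := humin j hjready
          rw [cand_def] at hcand ⊢
          rw [hRd' j hprecu]
          refine le_trans hcand (max_le_max le_rfl ?_)
          rw [Finset.le_inf'_iff]
          intro i hi
          exact le_trans (Finset.inf'_le _ hi) (hrm' i)
      -- end constructor
    have hcard' : Done'.card + n = Fintype.card J := by
      rw [hDone', Finset.card_insert_of_notMem huD]; omega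
    obtain ⟨σf, Sf, hagree, hfinal⟩ := ih Done' σ' S' hcard' hinv'
    refine ⟨σf, Sf, ?_, hfinal⟩
    intro j hj
    have hj' : j ∈ Done' := Finset.mem_insert_of_mem hj
    obtain ⟨h1, h2⟩ := hagree j hj'
    exact ⟨by rw [h1, hσ'ne j (hmemne j hj)], by rw [h2, hS'ne j (hmemne j hj)]⟩

lemma schedule_exists (hMne : ∀ j, (Mset j).Nonempty)
    (htrans : Transitive prec) (hirr : Irreflexive prec)
    (hdur : ∀ j i, 0 < dur j i) :
    ∃ (σ : J → M) (S : J → ℝ),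
      (∀ j, σ j ∈ Mset j) ∧
      (∀ j, Rd prec dur σ S j ≤ S j) ∧
      (∀ j j', j ≠ j' → σ j = σ j' → Fc dur σ S j ≤ S j' ∨ Fc dur σ S j' ≤ S j) ∧
      (∀ j, ∀ i ∈ Mset j, Set.Ioo (Rd prec dur σ S j) (S j) ⊆
        busyset dur univ σ S i ∪ ↑((univ : Finset J).image S)) := by
  have hinv0 : SchedInv prec Mset dur hMne (∅ : Finset J) (fun j => (hMne j).choose) (fun _ => 0) := by
    constructor
    · intro j hj; exact absurd hj (Finset.notMem_empty j)
    · intro j hj; exact absurd hj (Finset.notMem_empty j)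
    · intro j hj; exact absurd hj (Finset.notMem_empty j)
    · intro j hj; exact absurd hj (Finset.notMem_empty j)
    · intro j hj; exact absurd hj (Finset.notMem_empty j)
    · intro j _ _ i _
      rw [tlast_def, Finset.fold_empty]
      rw [Set.Ioo_eq_empty (by push_neg; exact fold_max_nonneg _ _)]
      exact Set.empty_subset _
    · intro j _ _
      rw [tlast_def, Finset.fold_empty, cand_def]
      exact le_trans (fold_max_nonneg _ _) (le_max_left _ _)
  obtain ⟨σ, S, _, hfinal⟩ := sched_step prec Mset dur hMne htrans hirr hdur
    (Fintype.card J) ∅ (fun j => (hMne j).choose) (fun _ => 0) (by simp) hinv0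
  exact ⟨σ, S, fun j => hfinal.mem j (mem_univ j), fun j => hfinal.rd_le j (mem_univ j),
    fun j j' h1 h2 => hfinal.disj j (mem_univ j) j' (mem_univ j') h1 h2,
    fun j i hi => hfinal.gap j (mem_univ j) i hi⟩

end sched

section gaps

lemma gaps_sum_le {ι κ : Type*} (T : Finset ι) (a b : ι → ℝ) (hab : ∀ k ∈ T, a k ≤ b k)
    (hdisj : ∀ k ∈ T, ∀ k' ∈ T, k ≠ k' → b k ≤ a k' ∨ b k' ≤ a k)
    (U : Finset κ) (c d : κ → ℝ) (hcd : ∀ i ∈ U, c i ≤ d i)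
    (Z : Set ℝ) (hZ : Z.Finite)
    (hsub : ∀ k ∈ T, Set.Ioo (a k) (b k) ⊆ (⋃ i ∈ U, Set.Ioc (c i) (d i)) ∪ Z) :
    ∑ k ∈ T, (b k - a k) ≤ ∑ i ∈ U, (d i - c i) := by
  classical
  set μ := (MeasureTheory.volume : MeasureTheory.Measure ℝ)
  have hdisj' : (↑T : Set ι).PairwiseDisjoint (fun k => Set.Ioo (a k) (b k)) := by
    intro k hk k' hk' hne
    rcases hdisj k hk k' hk' hne with h | h
    · refine Set.disjoint_left.2 fun x hx hx' => ?_
      exact absurd (lt_trans hx.2 (lt_of_le_of_lt h hx'.1)) (lt_irrefl x)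
    · refine Set.disjoint_left.2 fun x hx hx' => ?_
      exact absurd (lt_trans hx'.2 (lt_of_le_of_lt h hx.1)) (lt_irrefl x)
  have hμ1 : μ (⋃ k ∈ T, Set.Ioo (a k) (b k)) = ∑ k ∈ T, ENNReal.ofReal (b k - a k) := by
    rw [MeasureTheory.measure_biUnion_finset hdisj' (fun k _ => measurableSet_Ioo)]
    exact Finset.sum_congr rfl fun k _ => Real.volume_Ioo
  have hsub2 : (⋃ k ∈ T, Set.Ioo (a k) (b k)) ⊆ (⋃ i ∈ U, Set.Ioc (c i) (d i)) ∪ Z :=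
    Set.iUnion₂_subset hsub
  have hμ2 : μ ((⋃ i ∈ U, Set.Ioc (c i) (d i)) ∪ Z) ≤ ∑ i ∈ U, ENNReal.ofReal (d i - c i) := by
    refine le_trans (MeasureTheory.measure_union_le _ _) ?_
    rw [hZ.measure_zero μ, add_zero]
    refine le_trans (MeasureTheory.measure_biUnion_finset_le _ _) ?_
    exact le_of_eq (Finset.sum_congr rfl fun i _ => Real.volume_Ioc)
  have hle : ∑ k ∈ T, ENNReal.ofReal (b k - a k) ≤ ∑ i ∈ U, ENNReal.ofReal (d i - c i) :=
    hμ1 ▸ le_trans (MeasureTheory.measure_mono hsub2) hμ2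
  have h1 : ∑ k ∈ T, ENNReal.ofReal (b k - a k) = ENNReal.ofReal (∑ k ∈ T, (b k - a k)) :=
    (ENNReal.ofReal_sum_of_nonneg (fun k hk => sub_nonneg.2 (hab k hk))).symm
  have h2 : ∑ i ∈ U, ENNReal.ofReal (d i - c i) = ENNReal.ofReal (∑ i ∈ U, (d i - c i)) :=
    (ENNReal.ofReal_sum_of_nonneg (fun i hi => sub_nonneg.2 (hcd i hi))).symm
  rw [h1, h2] at hle
  exact (ENNReal.ofReal_le_ofReal_iff
    (Finset.sum_nonneg fun i hi => sub_nonneg.2 (hcd i hi))).1 hle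

end gaps

section chain
variable {J M : Type} [Fintype J] [Fintype M] [DecidableEq J] [DecidableEq M]
variable (prec : J → J → Prop) [DecidableRel prec]
variable (dur : J → M → ℝ)

lemma chain_exists (htrans : Transitive prec) (hirr : Irreflexive prec)
    (hdur : ∀ j i, 0 < dur j i) (σ : J → M) (S : J → ℝ) (hS0 : ∀ j, 0 ≤ S j) (j0 : J) :
    ∃ (r : ℕ) (w : ℕ → J),
      w r = j0 ∧ (∀ k < r, prec (w k) (w (k+1))) ∧
      (∀ k < r, Rd prec dur σ S (w (k+1)) = Fc dur σ S (w k)) ∧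
      Rd prec dur σ S (w 0) = 0 := by
  letI : IsTrans J prec := ⟨htrans⟩
  letI : IsIrrefl J prec := ⟨hirr⟩
  induction j0 using (Finite.wellFounded_of_trans_of_irrefl prec).induction with
  | _ j0 ih =>
    rcases (univ.filter (fun j' => prec j' j0)).eq_empty_or_nonempty with hemp | hne
    · refine ⟨0, fun _ => j0, rfl, by omega, by omega, ?_⟩
      rw [Rd, hemp, Finset.fold_empty]
    · obtain ⟨j1, hj1mem, hj1max⟩ := Finset.exists_max_image _ (Fc dur σ S) hne
      have hprec : prec j1 j0 := (Finset.mem_filter.1 hj1mem).2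
      obtain ⟨r1, w1, hlast, hchain, hadj, h0⟩ := ih j1 hprec
      refine ⟨r1 + 1, fun k => if k = r1 + 1 then j0 else w1 k, by simp, ?_, ?_, ?_⟩
      · intro k hk
        rcases Nat.lt_or_ge k r1 with h | h
        · simp only [if_neg (by omega : ¬ k = r1+1), if_neg (by omega : ¬ k+1 = r1+1)]
          exact hchain k h
        · have hk1 : k = r1 := by omega
          subst hk1
          simp only [if_neg (by omega : ¬ k = k+1), if_pos rfl]
          rw [hlast]; exact hprec
      · intro k hk
        rcases Nat.lt_or_ge k r1 with h | h
        · simp only [if_neg (by omega : ¬ k = r1+1), if_neg (by omega : ¬ k+1 = r1+1)]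
          exact hadj k h
        · have hk1 : k = r1 := by omega
          subst hk1
          simp only [if_neg (by omega : ¬ k = k+1), if_pos rfl]
          rw [hlast]
          -- Rd j0 = Fc j1 since j1 is the max-F predecessor
          apply le_antisymm
          · apply fold_max_le_of
            · have := hdur j1 (σ j1)
              have := hS0 j1
              unfold Fc; nlinarith
            · exact fun a ha => hj1max a ha
          · exact le_fold_max_of_mem _ _ hj1mem
      · simp only [if_neg (by omega : ¬ 0 = r1+1)]
        exact h0

lemma chain_telescope (σ : J → M) (S : J → ℝ) (r : ℕ) (w : ℕ → J)
    (hadj : ∀ k < r, Rd prec dur σ S (w (k+1)) = Fc dur σ S (w k))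
    (h0 : Rd prec dur σ S (w 0) = 0) :
    ∑ k ∈ Finset.range (r+1), (Fc dur σ S (w k) - Rd prec dur σ S (w k))
      = Fc dur σ S (w r) := by
  induction r with
  | zero => simp [h0]
  | succ r ihr =>
    rw [Finset.sum_range_succ, ihr (fun k hk => hadj k (by omega)), hadj r (by omega)]
    ring

lemma chain_mono (σ : J → M) (S : J → ℝ)
    (hrdle : ∀ j, Rd prec dur σ S j ≤ S j) (hdur : ∀ j i, 0 < dur j i)
    (r : ℕ) (w : ℕ → J)
    (hadj : ∀ k < r, Rd prec dur σ S (w (k+1)) = Fc dur σ S (w k)) :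
    ∀ k k', k < k' → k' ≤ r → Fc dur σ S (w k) ≤ Rd prec dur σ S (w k') := by
  intro k k' hkk' hk'r
  induction k' with
  | zero => omega
  | succ k' ihk =>
    rcases Nat.lt_or_ge k k' with h | h
    · refine le_trans (ihk h (by omega)) ?_
      rw [hadj k' (by omega)]
      refine le_trans (hrdle (w k')) ?_
      have := hdur (w k') (σ (w k'))
      unfold Fc; nlinarith
    · have : k = k' := by omega
      subst this
      rw [hadj k (by omega)]

end chain

lemma log_le_half {t : ℝ} (ht : 0 < t) : Real.log t ≤ t / 2 := by
  have h1 : Real.log (Real.sqrt t) = Real.log t / 2 := Real.log_sqrt ht.le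
  have h2 : Real.log (Real.sqrt t) ≤ Real.sqrt t - 1 :=
    Real.log_le_sub_one_of_pos (Real.sqrt_pos.2 ht)
  nlinarith [Real.sq_sqrt ht.le, Real.sqrt_nonneg t, sq_nonneg (Real.sqrt t - 2)]

lemma Ioc_disjoint_of_le {a b c d : ℝ} (h : b ≤ c) :
    Disjoint (Set.Ioc a b) (Set.Ioc c d) := by
  refine Set.disjoint_left.2 fun t ht ht' => ?_
  exact absurd (lt_of_le_of_lt (le_trans ht.2 h) ht'.1) (lt_irrefl t)

set_option maxHeartbeats 2000000

/-- There is an absolute constant `c > 0` such that for every instance of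
`Q|prec|C_max` with at least 3 machines and every feasible solution `(x, C, D)` to the LP
relaxation, there exists a valid schedule whose makespan is at most
`c · (log m / log log m) · D`. -/
theorem lp_related_prec_makespan_integrality_gap :
    ∃ c : ℝ, 0 < c ∧
      ∀ (M J : Type) [Fintype M] [Fintype J],
      ∀ (s : M → ℝ), (∀ i, 0 < s i) →
      ∀ (p : J → ℝ), (∀ j, 0 < p j) →
      ∀ (prec : J → J → Prop), IsStrictOrder J prec →
      3 ≤ Fintype.card M →
      ∀ (x : M → J → ℝ) (C : J → ℝ) (D : ℝ),
        (∀ i j, 0 ≤ x i j) →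
        (∀ j, 0 ≤ C j) →
        0 ≤ D →
        (∀ j, ∑ i, x i j = 1) →
        (∀ j, p j * ∑ i, x i j / s i ≤ C j) →
        (∀ j j', prec j j' → C j + p j' * ∑ i, x i j' / s i ≤ C j') →
        (∀ i, ∑ j, p j * x i j ≤ s i * D) →
        (∀ j, C j ≤ D) →
        ∃ (σ : J → M) (S : J → ℝ),
          (∀ j, 0 ≤ S j) ∧
          (∀ j j', j ≠ j' → σ j = σ j' →
            Disjoint (Set.Ioc (S j) (S j + p j / s (σ j)))
                     (Set.Ioc (S j') (S j' + p j' / s (σ j')))) ∧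
          (∀ j j', prec j j' → S j + p j / s (σ j) ≤ S j') ∧
          (∀ j, S j + p j / s (σ j)
            ≤ c * (Real.log (Fintype.card M) / Real.log (Real.log (Fintype.card M))) * D) := by
  classical
  refine ⟨25, by norm_num, ?_⟩
  intro M J _ _ s hs p hp prec hstrict hm x C D hx hC hD hsum hlen hprec3 hload hCD
  letI : DecidableRel prec := Classical.decRel prec
  letI : DecidableEq J := Classical.decEq J
  letI : DecidableEq M := Classical.decEq M
  letI := hstrict
  have htrans : Transitive prec := fun _ _ _ h1 h2 => IsTrans.trans _ _ _ h1 h2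
  have hirr : Irreflexive prec := fun a => Std.Irrefl.irrefl a
  rcases isEmpty_or_nonempty J with hJ | hJ
  · exact ⟨fun j => hJ.elim j, fun _ => 0, fun j => (hJ.elim j : _), fun j => (hJ.elim j : _),
      fun j => (hJ.elim j : _), fun j => (hJ.elim j : _)⟩
  -- nonempty J
  have hMne : Nonempty M := Fintype.card_pos_iff.1 (by omega)
  obtain ⟨istar, -, hsmax⟩ :=
    Finset.exists_max_image (univ : Finset M) s ⟨Classical.arbitrary M, mem_univ _⟩
  have hsmax' : ∀ i, s i ≤ s istar := fun i => hsmax i (mem_univ i)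
  set smax := s istar with hsmaxdef
  set m : ℝ := (Fintype.card M : ℝ) with hmdef
  have hm3 : (3:ℝ) ≤ m := by rw [hmdef]; exact_mod_cast hm
  have hsmaxpos : 0 < smax := hs istar
  -- positivity of fractional sums
  have hposaux : ∀ (y : M → ℝ), (∀ i, 0 ≤ y i) → (∑ i, y i) = 1 → 0 < ∑ i, y i / s i := by
    intro y hy hysum
    have hex : ∃ i, 0 < y i := by
      by_contra hcon
      push_neg at hcon
      have h0 : ∑ i, y i ≤ 0 := Finset.sum_nonpos fun i _ => hcon i
      rw [hysum] at h0; linarith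
    obtain ⟨i0, hi0⟩ := hex
    exact Finset.sum_pos' (fun i _ => div_nonneg (hy i) (hs i).le)
      ⟨i0, mem_univ i0, div_pos hi0 (hs i0)⟩
  have hsumpos : ∀ j, 0 < ∑ i, x i j / s i := fun j => hposaux _ (fun i => hx i j) (hsum j)
  obtain ⟨j0⟩ := hJ
  have hD' : 0 < D :=
    lt_of_lt_of_le (lt_of_lt_of_le (mul_pos (hp j0) (hsumpos j0)) (hlen j0)) (hCD j0)
  set ell : J → ℝ := fun j => p j * ∑ i, x i j / s i with helldef
  have hellpos : ∀ j, 0 < ell j := fun j => mul_pos (hp j) (hsumpos j)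
  have hellD : ∀ j, ell j ≤ D := fun j => le_trans (hlen j) (hCD j)
  -- modified fractional solution
  set xt : M → J → ℝ := fun i j =>
    (if smax < m * s i then x i j else 0) +
    (if i = istar then ∑ i' ∈ univ.filter (fun i' => ¬ smax < m * s i'), x i' j else 0)
    with hxtdef
  have hfaststar : smax < m * smax := by nlinarith
  have hxtnn : ∀ i j, 0 ≤ xt i j := by
    intro i j
    refine add_nonneg ?_ ?_ <;> split <;>
      first
        | exact hx i j
        | exact le_rfl
        | exact Finset.sum_nonneg fun i' _ => hx i' j
  have hxtsum : ∀ j, ∑ i, xt i j = 1 := by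
    intro j
    rw [hxtdef]
    simp only
    rw [Finset.sum_add_distrib, Finset.sum_ite_eq' univ istar
      (fun _ => ∑ i' ∈ univ.filter (fun i' => ¬ smax < m * s i'), x i' j),
      if_pos (mem_univ istar), ← Finset.sum_filter]
    rw [Finset.sum_filter_add_sum_filter_not univ (fun i => smax < m * s i) (fun i => x i j)]
    exact hsum j
  have hslowsum : ∑ i' ∈ univ.filter (fun i' => ¬ smax < m * s i'), s i' ≤ smax := by
    have h1 : ∀ i' ∈ univ.filter (fun i' => ¬ smax < m * s i'), s i' ≤ smax / m := by
      intro i' hi'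
      have h2 : m * s i' ≤ smax := not_lt.1 (Finset.mem_filter.1 hi').2
      rw [le_div_iff₀ (by linarith : (0:ℝ) < m)]
      linarith [mul_comm m (s i')]
    calc ∑ i' ∈ univ.filter (fun i' => ¬ smax < m * s i'), s i'
        ≤ (univ.filter (fun i' => ¬ smax < m * s i')).card • (smax / m) :=
          Finset.sum_le_card_nsmul _ _ _ h1
      _ = ((univ.filter (fun i' => ¬ smax < m * s i')).card : ℝ) * (smax / m) := by
          rw [nsmul_eq_mul]
      _ ≤ m * (smax / m) := by
          have hc : ((univ.filter (fun i' => ¬ smax < m * s i')).card : ℝ) ≤ m := by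
            rw [hmdef]
            exact_mod_cast Finset.card_le_card (Finset.subset_univ _)
          have : (0:ℝ) ≤ smax / m := by positivity
          nlinarith
      _ = smax := by field_simp
  have hxtload : ∀ i, ∑ j, p j * xt i j ≤ 2 * s i * D := by
    intro i
    rw [hxtdef]
    simp only
    have hexp : ∀ j, p j * ((if smax < m * s i then x i j else 0) +
        (if i = istar then ∑ i' ∈ univ.filter (fun i' => ¬ smax < m * s i'), x i' j else 0))
        = (if smax < m * s i then p j * x i j else 0) +
          (if i = istar then p j * ∑ i' ∈ univ.filter (fun i' => ¬ smax < m * s i'), x i' j else 0) := by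
      intro j; split <;> split <;> ring
    rw [Finset.sum_congr rfl (fun j _ => hexp j), Finset.sum_add_distrib]
    have hp1 : ∑ j, (if smax < m * s i then p j * x i j else 0) ≤ if smax < m * s i then s i * D else 0 := by
      split
      · exact hload i
      · simp
    have hp2 : ∑ j, (if i = istar then p j * ∑ i' ∈ univ.filter (fun i' => ¬ smax < m * s i'), x i' j else 0)
        ≤ if i = istar then smax * D else 0 := by
      split
      · -- sum over slow machines
        calc ∑ j, p j * ∑ i' ∈ univ.filter (fun i' => ¬ smax < m * s i'), x i' j
            = ∑ i' ∈ univ.filter (fun i' => ¬ smax < m * s i'), ∑ j, p j * x i' j := by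
              rw [Finset.sum_comm]
              exact Finset.sum_congr rfl fun j _ => by rw [Finset.mul_sum]
          _ ≤ ∑ i' ∈ univ.filter (fun i' => ¬ smax < m * s i'), s i' * D :=
              Finset.sum_le_sum fun i' _ => hload i'
          _ = (∑ i' ∈ univ.filter (fun i' => ¬ smax < m * s i'), s i') * D := by
              rw [Finset.sum_mul]
          _ ≤ smax * D := by nlinarith [hslowsum]
      · simp
    have := add_le_add hp1 hp2
    refine le_trans this ?_
    by_cases hci : i = istar
    · subst hci
      rw [if_pos hfaststar, if_pos rfl]
      have : s i = smax := rfl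
      nlinarith
    · rw [if_neg hci]
      split
      · nlinarith [hs i, hD']
      · nlinarith [hs i, hD']
  have hxtlen : ∀ j, ∑ i, xt i j / s i ≤ ∑ i, x i j / s i := by
    intro j
    rw [hxtdef]
    simp only
    have hexp : ∀ i, ((if smax < m * s i then x i j else 0) +
        (if i = istar then ∑ i' ∈ univ.filter (fun i' => ¬ smax < m * s i'), x i' j else 0)) / s i
        = (if smax < m * s i then x i j / s i else 0) +
          (if i = istar then (∑ i' ∈ univ.filter (fun i' => ¬ smax < m * s i'), x i' j) / s i else 0) := by
      intro i; split <;> split <;> ring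
    rw [Finset.sum_congr rfl (fun i _ => hexp i), Finset.sum_add_distrib]
    rw [Finset.sum_ite_eq' univ istar
      (fun i => (∑ i' ∈ univ.filter (fun i' => ¬ smax < m * s i'), x i' j) / s i),
      if_pos (mem_univ istar)]
    have hmov : (∑ i' ∈ univ.filter (fun i' => ¬ smax < m * s i'), x i' j) / s istar
        ≤ ∑ i' ∈ univ.filter (fun i' => ¬ smax < m * s i'), x i' j / s i' := by
      rw [Finset.sum_div]
      refine Finset.sum_le_sum fun i' _ => ?_
      exact div_le_div_of_nonneg_left (hx i' j) (hs i') (hsmax' i')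
    have h1 : ∑ i, (if smax < m * s i then x i j / s i else 0)
        = ∑ i ∈ univ.filter (fun i => smax < m * s i), x i j / s i := by
      rw [Finset.sum_filter]
    rw [h1]
    calc (∑ i ∈ univ.filter (fun i => smax < m * s i), x i j / s i) +
          (∑ i' ∈ univ.filter (fun i' => ¬ smax < m * s i'), x i' j) / s istar
        ≤ (∑ i ∈ univ.filter (fun i => smax < m * s i), x i j / s i) +
          ∑ i' ∈ univ.filter (fun i' => ¬ smax < m * s i'), x i' j / s i' := by linarith [hmov]
      _ = ∑ i, x i j / s i := by
          rw [Finset.sum_filter_add_sum_filter_not univ (fun i => smax < m * s i)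
            (fun i => x i j / s i)]
  set ellt : J → ℝ := fun j => p j * ∑ i, xt i j / s i with helltdef
  have helltle : ∀ j, ellt j ≤ ell j := fun j =>
    mul_le_mul_of_nonneg_left (hxtlen j) (hp j).le
  have helltpos : ∀ j, 0 < ellt j := fun j =>
    mul_pos (hp j) (hposaux _ (fun i => hxtnn i j) (hxtsum j))
  have helltD : ∀ j, ellt j ≤ D := fun j => le_trans (helltle j) (hellD j)
  -- allowed machine sets
  set allowed : J → Finset M :=
    fun j => univ.filter (fun i => smax < m * s i ∧ p j ≤ 4 * ellt j * s i) with hallwdef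
  set τ : J → ℝ := fun j => p j / (4 * ellt j) with hτdef
  have hallw_iff : ∀ j i, i ∈ allowed j ↔ (smax < m * s i ∧ τ j ≤ s i) := by
    intro j i
    rw [hallwdef]
    simp only [Finset.mem_filter, Finset.mem_univ, true_and, hτdef]
    constructor
    · rintro ⟨h1, h2⟩
      refine ⟨h1, ?_⟩
      rw [div_le_iff₀ (by nlinarith [helltpos j] : (0:ℝ) < 4 * ellt j)]
      linarith
    · rintro ⟨h1, h2⟩
      rw [div_le_iff₀ (by nlinarith [helltpos j] : (0:ℝ) < 4 * ellt j)] at h2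
      exact ⟨h1, by linarith⟩
  have helltlb : ∀ j, p j / smax ≤ ellt j := by
    intro j
    have h1 : (1:ℝ)/smax ≤ ∑ i, xt i j / s i := by
      calc (1:ℝ)/smax = (∑ i, xt i j)/smax := by rw [hxtsum j]
        _ = ∑ i, xt i j / smax := by rw [Finset.sum_div]
        _ ≤ ∑ i, xt i j / s i :=
            Finset.sum_le_sum fun i _ => div_le_div_of_nonneg_left (hxtnn i j) (hs i) (hsmax' i)
    calc p j / smax = p j * (1/smax) := by ring
      _ ≤ p j * ∑ i, xt i j / s i := mul_le_mul_of_nonneg_left h1 (hp j).le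
  have hstar_allowed : ∀ j, istar ∈ allowed j := by
    intro j
    rw [hallw_iff]
    refine ⟨hfaststar, ?_⟩
    rw [hτdef]
    simp only
    rw [div_le_iff₀ (by nlinarith [helltpos j] : (0:ℝ) < 4 * ellt j)]
    have := helltlb j
    have h2 : p j ≤ ellt j * smax := by
      rw [div_le_iff₀ hsmaxpos] at this
      linarith
    nlinarith [helltpos j, hsmaxpos, hp j]
  have hne : ∀ j, (allowed j).Nonempty := fun j => ⟨istar, hstar_allowed j⟩
  have hnest : ∀ j j', τ j ≤ τ j' → allowed j' ⊆ allowed j := by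
    intro j j' hττ i hi
    rw [hallw_iff] at hi ⊢
    exact ⟨hi.1, le_trans hττ hi.2⟩
  have hmass : ∀ j, (3:ℝ)/4 ≤ ∑ i ∈ allowed j, xt i j := by
    intro j
    have hsplit := Finset.sum_filter_add_sum_filter_not univ
      (fun i => smax < m * s i ∧ p j ≤ 4 * ellt j * s i) (fun i => xt i j)
    rw [hxtsum j] at hsplit
    have hbad : ∑ i ∈ univ.filter (fun i => ¬ (smax < m * s i ∧ p j ≤ 4 * ellt j * s i)), xt i j
        ≤ 1/4 := by
      set B := univ.filter (fun i => ¬ (smax < m * s i ∧ p j ≤ 4 * ellt j * s i)) with hBdef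
      have hkey : ∀ i ∈ B, xt i j * (4 * ellt j / p j) ≤ xt i j / s i := by
        intro i hi
        have hi' : ¬ (smax < m * s i ∧ p j ≤ 4 * ellt j * s i) := (Finset.mem_filter.1 hi).2
        by_cases hfi : smax < m * s i
        · have h2 : 4 * ellt j * s i < p j :=
            not_le.1 fun hb => hi' ⟨hfi, hb⟩
          have h3 : 4 * ellt j / p j < 1 / s i := by
            rw [div_lt_div_iff₀ (hp j) (hs i)]
            linarith
          calc xt i j * (4 * ellt j / p j) ≤ xt i j * (1 / s i) :=
                mul_le_mul_of_nonneg_left h3.le (hxtnn i j)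
            _ = xt i j / s i := by ring
        · have hzero : xt i j = 0 := by
            rw [hxtdef]
            simp only
            rw [if_neg hfi, if_neg (fun hcon : i = istar => hfi (hcon ▸ hfaststar)), add_zero]
          rw [hzero]
          simp [div_nonneg, (hs i).le]
      have hsum2 : (∑ i ∈ B, xt i j) * (4 * ellt j / p j) ≤ ∑ i, xt i j / s i := by
        calc (∑ i ∈ B, xt i j) * (4 * ellt j / p j) = ∑ i ∈ B, xt i j * (4 * ellt j / p j) := by
              rw [Finset.sum_mul]
          _ ≤ ∑ i ∈ B, xt i j / s i := Finset.sum_le_sum hkey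
          _ ≤ ∑ i, xt i j / s i :=
              Finset.sum_le_sum_of_subset_of_nonneg (Finset.subset_univ _)
                (fun i _ _ => div_nonneg (hxtnn i j) (hs i).le)
      have hsum3 : ellt j / p j = ∑ i, xt i j / s i := by
        rw [helltdef]
        exact mul_div_cancel_left₀ _ (ne_of_gt (hp j))
      rw [← hsum3] at hsum2
      have hBnn : 0 ≤ ∑ i ∈ B, xt i j := Finset.sum_nonneg fun i _ => hxtnn i j
      have ht : 0 < ellt j / p j := div_pos (helltpos j) (hp j)
      have h4 : 4 * ellt j / p j = 4 * (ellt j / p j) := by ring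
      rw [h4] at hsum2
      by_contra hcon
      push_neg at hcon
      nlinarith [ht, hcon, hsum2]
    have hgoal : ∑ i ∈ univ.filter (fun i => smax < m * s i ∧ p j ≤ 4 * ellt j * s i), xt i j
        ≥ 3/4 := by linarith
    rw [hallwdef]
    exact hgoal
  have hvol : ∀ j, ∑ j' ∈ univ.filter (fun j' => τ j ≤ τ j'), p j'
      ≤ (8/3) * D * ∑ i ∈ allowed j, s i := by
    intro j
    have hstep1 : ∀ j' ∈ univ.filter (fun j' => τ j ≤ τ j'),
        p j' ≤ (4/3) * ∑ i ∈ allowed j, p j' * xt i j' := by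
      intro j' hj'
      have hττ : τ j ≤ τ j' := (Finset.mem_filter.1 hj').2
      have hsubs : allowed j' ⊆ allowed j := hnest j j' hττ
      have h1 : (3:ℝ)/4 ≤ ∑ i ∈ allowed j, xt i j' := by
        refine le_trans (hmass j') ?_
        exact Finset.sum_le_sum_of_subset_of_nonneg hsubs (fun i _ _ => hxtnn i j')
      calc p j' = p j' * 1 := by ring
        _ ≤ p j' * ((4/3) * ∑ i ∈ allowed j, xt i j') := by
            refine mul_le_mul_of_nonneg_left ?_ (hp j').le
            linarith
        _ = (4/3) * ∑ i ∈ allowed j, p j' * xt i j' := by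
            rw [Finset.mul_sum, Finset.mul_sum]
            rw [Finset.mul_sum]
            refine Finset.sum_congr rfl fun i _ => by ring
    calc ∑ j' ∈ univ.filter (fun j' => τ j ≤ τ j'), p j'
        ≤ ∑ j' ∈ univ.filter (fun j' => τ j ≤ τ j'), (4/3) * ∑ i ∈ allowed j, p j' * xt i j' :=
          Finset.sum_le_sum hstep1
      _ = (4/3) * ∑ i ∈ allowed j, ∑ j' ∈ univ.filter (fun j' => τ j ≤ τ j'), p j' * xt i j' := by
          rw [← Finset.mul_sum, Finset.sum_comm]
      _ ≤ (4/3) * ∑ i ∈ allowed j, (2 * s i * D) := by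
          refine mul_le_mul_of_nonneg_left (Finset.sum_le_sum fun i _ => ?_) (by norm_num)
          refine le_trans (Finset.sum_le_sum_of_subset_of_nonneg (Finset.subset_univ _)
            (fun j' _ _ => mul_nonneg (hp j').le (hxtnn i j'))) ?_
          exact hxtload i
      _ = (8/3) * D * ∑ i ∈ allowed j, s i := by
          rw [Finset.mul_sum, Finset.mul_sum]
          refine Finset.sum_congr rfl fun i _ => by ring
  have hpiece : ∀ j, ∀ i ∈ allowed j, p j ≤ 4 * s i * D := by
    intro j i hi
    rw [hallwdef] at hi
    simp only [Finset.mem_filter] at hi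
    calc p j ≤ 4 * ellt j * s i := hi.2.2
      _ ≤ 4 * s i * D := by nlinarith [helltD j, hs i, helltpos j]
  obtain ⟨σ0, hσ0mem, hσ0load⟩ :=
    greedy_packing p hp τ s hs D hD' allowed hne hnest hvol hpiece
  -- logarithmic quantities
  set L : ℝ := Real.log m with hLdef
  set LL : ℝ := Real.log L with hLLdef
  have hL1 : 1 < L := by
    rw [hLdef]
    have h3 : Real.exp 1 < 3 := lt_of_lt_of_le Real.exp_one_lt_d9 (by norm_num)
    have hlog3 : 1 < Real.log 3 := (Real.lt_log_iff_exp_lt (by norm_num)).2 h3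
    have hmono : Real.log 3 ≤ Real.log m := Real.log_le_log (by norm_num) hm3
    linarith
  have hLL0 : 0 < LL := by rw [hLLdef]; exact Real.log_pos hL1
  set Q : ℝ := L / LL with hQdef
  have hQ1 : 1 < Q := by
    rw [hQdef, lt_div_iff₀ hLL0, one_mul, hLLdef]
    have := Real.log_le_sub_one_of_pos (by linarith : (0:ℝ) < L)
    linarith
  have hQ0 : 0 < Q := by linarith
  have hlogQ : LL / 2 ≤ Real.log Q := by
    rw [hQdef, Real.log_div (by linarith) (by linarith)]
    have := log_le_half hLL0
    rw [← hLLdef]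
    linarith
  have hlogQ0 : 0 < Real.log Q := lt_of_lt_of_le (by linarith) hlogQ
  -- speed classes
  set cls : M → ℕ := fun i => ⌊Real.logb Q (smax / s i)⌋₊ with hclsdef
  set Khat : ℕ := ⌊Real.logb Q m⌋₊ with hKhatdef
  have hcls_le : ∀ i, smax < m * s i → cls i ≤ Khat := by
    intro i hfi
    rw [hclsdef, hKhatdef]
    apply Nat.floor_le_floor
    have h1 : smax / s i < m := (div_lt_iff₀ (hs i)).2 (by linarith [mul_comm m (s i)])
    exact ((Real.logb_le_logb hQ1 (div_pos hsmaxpos (hs i)) (by linarith)).2 h1.le)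
  -- machine groups and durations
  set Mset : J → Finset M :=
    fun j => univ.filter (fun i => smax < m * s i ∧ cls i = cls (σ0 j)) with hMsetdef
  set dur : J → M → ℝ := fun j i => p j / s i with hdurdef
  have hdurpos : ∀ (j : J) (i : M), 0 < dur j i := fun j i => div_pos (hp j) (hs i)
  have hfastσ0 : ∀ j, smax < m * s (σ0 j) := fun j => ((hallw_iff j (σ0 j)).1 (hσ0mem j)).1
  have hMset_mem : ∀ j, σ0 j ∈ Mset j := by
    intro j
    rw [hMsetdef]
    exact Finset.mem_filter.2 ⟨mem_univ _, hfastσ0 j, rfl⟩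
  have hMsetne : ∀ j, (Mset j).Nonempty := fun j => ⟨σ0 j, hMset_mem j⟩
  -- duration bound within a class
  have hdur_le : ∀ j, ∀ i ∈ Mset j, dur j i ≤ 4 * Q * ellt j := by
    intro j i hi
    rw [hMsetdef] at hi
    simp only [Finset.mem_filter, Finset.mem_univ, true_and] at hi
    obtain ⟨hfi, hclseq⟩ := hi
    have hA0 : (0:ℝ) < Q ^ ((cls (σ0 j) : ℝ)) := Real.rpow_pos_of_pos hQ0 _
    have hsmaxs0 : (1:ℝ) ≤ smax / s (σ0 j) :=
      (le_div_iff₀ (hs (σ0 j))).2 (by linarith [hsmax' (σ0 j)])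
    have hc : (⌊Real.logb Q (smax / s i)⌋₊ : ℕ) = cls (σ0 j) := hclseq
    have h1 : Real.logb Q (smax / s i) < (cls (σ0 j) : ℝ) + 1 := by
      rw [← hc]
      exact Nat.lt_floor_add_one _
    have h2 : smax / s i < Q ^ ((cls (σ0 j) : ℝ) + 1) :=
      (Real.logb_lt_iff_lt_rpow hQ1 (div_pos hsmaxpos (hs i))).1 h1
    have hQv1 : Q ^ ((cls (σ0 j) : ℝ) + 1) = Q ^ ((cls (σ0 j) : ℝ)) * Q := by
      rw [Real.rpow_add hQ0, Real.rpow_one]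
    have h3 : (cls (σ0 j) : ℝ) ≤ Real.logb Q (smax / s (σ0 j)) := by
      have hnn : 0 ≤ Real.logb Q (smax / s (σ0 j)) := Real.logb_nonneg hQ1 hsmaxs0
      have hc2 : (⌊Real.logb Q (smax / s (σ0 j))⌋₊ : ℕ) = cls (σ0 j) := rfl
      rw [← hc2]
      exact Nat.floor_le hnn
    have h4 : Q ^ ((cls (σ0 j) : ℝ)) ≤ smax / s (σ0 j) :=
      (Real.le_logb_iff_rpow_le hQ1 (div_pos hsmaxpos (hs (σ0 j)))).1 h3
    -- translate into products
    have h5 : smax < Q ^ ((cls (σ0 j) : ℝ)) * Q * s i := by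
      have := (div_lt_iff₀ (hs i)).1 h2
      rw [hQv1] at this
      linarith [mul_comm (Q ^ ((cls (σ0 j) : ℝ)) * Q) (s i)]
    have h6 : Q ^ ((cls (σ0 j) : ℝ)) * s (σ0 j) ≤ smax := (le_div_iff₀ (hs (σ0 j))).1 h4
    have h7 : p j ≤ 4 * ellt j * s (σ0 j) := by
      have hh := hσ0mem j
      rw [hallwdef] at hh
      simp only [Finset.mem_filter] at hh
      exact hh.2.2
    have h8 : p j * Q ^ ((cls (σ0 j) : ℝ)) ≤ 4 * ellt j * smax := by
      calc p j * Q ^ ((cls (σ0 j) : ℝ)) ≤ (4 * ellt j * s (σ0 j)) * Q ^ ((cls (σ0 j) : ℝ)) :=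
            mul_le_mul_of_nonneg_right h7 hA0.le
        _ = 4 * ellt j * (Q ^ ((cls (σ0 j) : ℝ)) * s (σ0 j)) := by ring
        _ ≤ 4 * ellt j * smax := by nlinarith [helltpos j]
    have h9 : 4 * ellt j * smax ≤ 4 * ellt j * (Q ^ ((cls (σ0 j) : ℝ)) * Q * s i) := by
      nlinarith [helltpos j]
    have h11 : p j ≤ 4 * Q * ellt j * s i := by
      have h10 : p j * Q ^ ((cls (σ0 j) : ℝ)) ≤ (4 * Q * ellt j * s i) * Q ^ ((cls (σ0 j) : ℝ)) := by
        nlinarith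
      exact le_of_mul_le_mul_right h10 hA0
    rw [hdurdef]
    simp only
    rw [div_le_iff₀ (hs i)]
    linarith [mul_comm (4 * Q * ellt j) (s i)]
  -- run the scheduling algorithm
  obtain ⟨σ, S, hmem, hrdle, hdisj, hgap⟩ :=
    schedule_exists prec Mset dur hMsetne htrans hirr hdurpos
  have hFceq : ∀ j, Fc dur σ S j = S j + p j / s (σ j) := by
    intro j; unfold Fc; rw [hdurdef]
  have hS0 : ∀ j, 0 ≤ S j := fun j => le_trans (fold_max_nonneg _ _) (hrdle j)
  refine ⟨σ, S, hS0, ?_, ?_, ?_⟩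
  · -- machine disjointness
    intro j j' hne' hσeq
    rcases hdisj j j' hne' hσeq with h | h
    · rw [hFceq] at h
      exact Ioc_disjoint_of_le h
    · rw [hFceq] at h
      exact (Ioc_disjoint_of_le h).symm
  · -- precedence
    intro j j' hpr
    have h1 : Fc dur σ S j ≤ Rd prec dur σ S j' :=
      le_fold_max_of_mem _ _ (Finset.mem_filter.2 ⟨mem_univ j, hpr⟩)
    rw [hFceq] at h1
    exact le_trans h1 (hrdle j')
  · -- makespan bound
    intro j
    obtain ⟨r, w, hwr, hwchain, hadj, h0⟩ :=
      chain_exists prec dur htrans hirr hdurpos σ S hS0 j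
    have htele := chain_telescope prec dur σ S r w hadj h0
    set V : Finset ℕ := (Finset.range (r+1)).image (fun k => cls (σ0 (w k))) with hVdef
    have hgapv : ∀ v ∈ V,
        ∑ k ∈ (Finset.range (r+1)).filter (fun k => cls (σ0 (w k)) = v),
          (S (w k) - Rd prec dur σ S (w k)) ≤ 7 * D := by
      intro v hv
      obtain ⟨k0, hk0mem, hk0⟩ := Finset.mem_image.1 hv
      set cf : Finset M := univ.filter (fun i => smax < m * s i ∧ cls i = v) with hcfdef
      have hMseteq : ∀ k ∈ (Finset.range (r+1)).filter (fun k => cls (σ0 (w k)) = v),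
          Mset (w k) = cf := by
        intro k hk
        have hkv : cls (σ0 (w k)) = v := (Finset.mem_filter.1 hk).2
        rw [hMsetdef, hcfdef]
        simp only [hkv]
      have hk0T : k0 ∈ (Finset.range (r+1)).filter (fun k => cls (σ0 (w k)) = v) :=
        Finset.mem_filter.2 ⟨hk0mem, hk0⟩
      have hσ0cf : σ0 (w k0) ∈ cf := by
        have h := hMset_mem (w k0)
        rw [hMseteq k0 hk0T] at h
        exact h
      have hcfS : 0 < ∑ i ∈ cf, s i :=
        Finset.sum_pos' (fun i _ => (hs i).le) ⟨σ0 (w k0), hσ0cf, hs _⟩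
      have hper : ∀ i ∈ cf,
          ∑ k ∈ (Finset.range (r+1)).filter (fun k => cls (σ0 (w k)) = v),
            (S (w k) - Rd prec dur σ S (w k))
          ≤ ∑ j' ∈ univ.filter (fun j' => σ j' = i), (Fc dur σ S j' - S j') := by
        intro i hi
        refine gaps_sum_le _ (fun k => Rd prec dur σ S (w k)) (fun k => S (w k))
          (fun k _ => hrdle (w k)) ?_ (univ.filter (fun j' => σ j' = i)) S (Fc dur σ S)
          (fun j' _ => by unfold Fc; linarith [(hdurpos j' (σ j')).le])
          (↑(univ.image S)) (Finset.finite_toSet _) ?_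
        · intro k hk k' hk' hkk'
          have hkr : k ≤ r := by
            have h := (Finset.mem_filter.1 hk).1
            rw [Finset.mem_range] at h; omega
          have hk'r : k' ≤ r := by
            have h := (Finset.mem_filter.1 hk').1
            rw [Finset.mem_range] at h; omega
          have hSF : ∀ kk, S (w kk) ≤ Fc dur σ S (w kk) := by
            intro kk; unfold Fc; linarith [(hdurpos (w kk) (σ (w kk))).le]
          rcases Nat.lt_or_ge k k' with h | h
          · exact Or.inl (le_trans (hSF k)
              (chain_mono prec dur σ S hrdle hdurpos r w hadj k k' h hk'r))
          · have h' : k' < k := by omega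
            exact Or.inr (le_trans (hSF k')
              (chain_mono prec dur σ S hrdle hdurpos r w hadj k' k h' hkr))
        · intro k hk
          have hik : i ∈ Mset (w k) := by rw [hMseteq k hk]; exact hi
          have h := hgap (w k) i hik
          unfold busyset at h
          exact h
      set GS : ℝ := ∑ k ∈ (Finset.range (r+1)).filter (fun k => cls (σ0 (w k)) = v),
          (S (w k) - Rd prec dur σ S (w k)) with hGSdef
      have hweight : (∑ i ∈ cf, s i) * GS ≤ 7 * D * ∑ i ∈ cf, s i := by
        calc (∑ i ∈ cf, s i) * GS = ∑ i ∈ cf, s i * GS := by rw [Finset.sum_mul]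
          _ ≤ ∑ i ∈ cf, s i * (∑ j' ∈ univ.filter (fun j' => σ j' = i), (Fc dur σ S j' - S j')) :=
              Finset.sum_le_sum fun i hi => mul_le_mul_of_nonneg_left (hper i hi) (hs i).le
          _ = ∑ i ∈ cf, ∑ j' ∈ univ.filter (fun j' => σ j' = i), p j' := by
              refine Finset.sum_congr rfl fun i hi => ?_
              rw [Finset.mul_sum]
              refine Finset.sum_congr rfl fun j' hj' => ?_
              have hσj' : σ j' = i := (Finset.mem_filter.1 hj').2
              unfold Fc
              rw [hdurdef]
              simp only
              rw [hσj']
              have : S j' + p j' / s i - S j' = p j' / s i := by ring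
              rw [this]
              have hne0 := (hs i).ne'
              field_simp
          _ = ∑ j' ∈ univ.filter (fun j' => σ j' ∈ cf), p j' :=
              Finset.sum_fiberwise_eq_sum_filter univ cf σ p
          _ = ∑ j' ∈ univ.filter (fun j' => σ0 j' ∈ cf), p j' := by
              refine Finset.sum_congr (Finset.filter_congr fun j' _ => ?_) fun _ _ => rfl
              have hm1 : σ j' ∈ Mset j' := hmem j'
              rw [hMsetdef] at hm1
              simp only [Finset.mem_filter, Finset.mem_univ, true_and] at hm1
              rw [hcfdef]
              simp only [Finset.mem_filter, Finset.mem_univ, true_and]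
              constructor
              · rintro ⟨h1, h2⟩
                exact ⟨hfastσ0 j', by rw [← hm1.2, h2]⟩
              · rintro ⟨h1, h2⟩
                exact ⟨hm1.1, by rw [hm1.2, h2]⟩
          _ = ∑ i ∈ cf, ∑ j' ∈ univ.filter (fun j' => σ0 j' = i), p j' :=
              (Finset.sum_fiberwise_eq_sum_filter univ cf σ0 p).symm
          _ ≤ ∑ i ∈ cf, 7 * s i * D :=
              Finset.sum_le_sum fun i _ => hσ0load i
          _ = 7 * D * ∑ i ∈ cf, s i := by
              rw [Finset.mul_sum]
              exact Finset.sum_congr rfl fun i _ => by ring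
      have hX : (∑ i ∈ cf, s i) * GS ≤ (∑ i ∈ cf, s i) * (7 * D) := by
        calc (∑ i ∈ cf, s i) * GS ≤ 7 * D * ∑ i ∈ cf, s i := hweight
          _ = (∑ i ∈ cf, s i) * (7 * D) := by ring
      exact le_of_mul_le_mul_left hX hcfS
    -- total gap bound
    have hVsub : V ⊆ Finset.range (Khat + 1) := by
      intro v hv
      obtain ⟨k, _, hk⟩ := Finset.mem_image.1 hv
      rw [Finset.mem_range, ← hk]
      exact Nat.lt_succ_of_le (hcls_le (σ0 (w k)) (hfastσ0 (w k)))
    have hVcard : (V.card : ℝ) ≤ (Khat : ℝ) + 1 := by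
      have h := Finset.card_le_card hVsub
      rw [Finset.card_range] at h
      exact_mod_cast h
    have hgapsum : ∑ k ∈ Finset.range (r+1), (S (w k) - Rd prec dur σ S (w k))
        ≤ ((Khat : ℝ) + 1) * (7 * D) := by
      have hfib : ∑ k ∈ Finset.range (r+1), (S (w k) - Rd prec dur σ S (w k))
          = ∑ v ∈ V, ∑ k ∈ (Finset.range (r+1)).filter (fun k => cls (σ0 (w k)) = v),
              (S (w k) - Rd prec dur σ S (w k)) := by
        rw [Finset.sum_fiberwise_eq_sum_filter (Finset.range (r+1)) V
          (fun k => cls (σ0 (w k))) (fun k => S (w k) - Rd prec dur σ S (w k))]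
        rw [Finset.filter_true_of_mem fun k hk => Finset.mem_image_of_mem _ hk]
      rw [hfib]
      calc ∑ v ∈ V, ∑ k ∈ (Finset.range (r+1)).filter (fun k => cls (σ0 (w k)) = v),
              (S (w k) - Rd prec dur σ S (w k))
          ≤ V.card • (7 * D) := Finset.sum_le_card_nsmul _ _ _ hgapv
        _ = (V.card : ℝ) * (7 * D) := nsmul_eq_mul _ _
        _ ≤ ((Khat : ℝ) + 1) * (7 * D) := by nlinarith [hD', hVcard]
    -- duration sum
    have hCchain : ∑ k ∈ Finset.range (r+1), ell (w k) ≤ C (w r) := by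
      have haux : ∀ rr, (∀ k < rr, prec (w k) (w (k+1))) →
          ∑ k ∈ Finset.range (rr+1), ell (w k) ≤ C (w rr) := by
        intro rr
        induction rr with
        | zero =>
          intro _
          rw [Finset.sum_range_one]
          exact hlen (w 0)
        | succ n ihn =>
          intro hch
          rw [Finset.sum_range_succ]
          have h1 := ihn (fun k hk => hch k (by omega))
          have h2 : C (w n) + ell (w (n+1)) ≤ C (w (n+1)) :=
            hprec3 (w n) (w (n+1)) (hch n (by omega))
          linarith
      exact haux r hwchain
    have hdsum : ∑ k ∈ Finset.range (r+1), dur (w k) (σ (w k)) ≤ 4 * Q * D := by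
      have h1 : ∀ k ∈ Finset.range (r+1), dur (w k) (σ (w k)) ≤ 4 * Q * ell (w k) := by
        intro k _
        refine le_trans (hdur_le (w k) (σ (w k)) (hmem (w k))) ?_
        nlinarith [helltle (w k), hQ0]
      have h2 : ∀ k ∈ Finset.range (r+1), (0:ℝ) ≤ ell (w k) := fun k _ => (hellpos (w k)).le
      calc ∑ k ∈ Finset.range (r+1), dur (w k) (σ (w k))
          ≤ ∑ k ∈ Finset.range (r+1), 4 * Q * ell (w k) := Finset.sum_le_sum h1
        _ = 4 * Q * ∑ k ∈ Finset.range (r+1), ell (w k) := by rw [Finset.mul_sum]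
        _ ≤ 4 * Q * D := by nlinarith [hCchain, hCD (w r), hQ0]
    -- combine
    have hcomb : Fc dur σ S j
        = (∑ k ∈ Finset.range (r+1), (S (w k) - Rd prec dur σ S (w k)))
          + ∑ k ∈ Finset.range (r+1), dur (w k) (σ (w k)) := by
      rw [← Finset.sum_add_distrib]
      rw [← hwr, ← htele]
      refine Finset.sum_congr rfl fun k _ => ?_
      unfold Fc; ring
    have hKQ : (Khat : ℝ) + 1 ≤ 3 * Q := by
      have h1 : (Khat : ℝ) ≤ Real.logb Q m :=
        Nat.floor_le (Real.logb_nonneg hQ1 (by linarith))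
      have h2 : Real.logb Q m = L / Real.log Q := by
        rw [Real.logb, hLdef]
      have h3 : L / Real.log Q ≤ L / (LL/2) :=
        div_le_div_of_nonneg_left (by linarith) (by linarith) hlogQ
      have h4 : L / (LL/2) = 2 * Q := by
        rw [hQdef]
        field_simp
      have hQge1 : 1 ≤ Q := hQ1.le
      nlinarith [h1, h2 ▸ h1, h3, h4]
    have hFle : Fc dur σ S j ≤ 25 * Q * D := by
      rw [hcomb]
      nlinarith [hgapsum, hdsum, hKQ, hD', hQ0]
    have hgoal : S j + p j / s (σ j) = Fc dur σ S j := (hFceq j).symm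
    rw [hgoal, hQdef] at *
    exact hFle
end

section
/- (Dependent rounding with strong negative correlation, Bansal–Srinivasan–Svensson.) Let ζ = 1/108. Let M (machines) and J (jobs) be finite sets, and let y : M × J → [0,1] satisfy Σ_{i ∈ M} y(i,j) = 1 for every j ∈ J. For each machine i ∈ M, let G_i^1, …, G_i^{κ_i} be pairwise disjoint subsets of J such that Σ_{j ∈ G_i^ℓ} y(i,j) ≤ 1 for each ℓ ∈ {1,…,κ_i}. Then there exists a probability distribution μ over functions f : J → M such that: (b) for every i ∈ M and j ∈ J, the probability that f(j) = i equals y(i,j); and (c) for every i ∈ M and every pair of distinct jobs j ≠ j', the probability that f(j) = i and f(j') = i is at most (1 − ζ)·y(i,j)·y(i,j') if there exists ℓ with j, j' ∈ G_i^ℓ, and at most y(i,j)·y(i,j') otherwise. -/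
open Finset

namespace DRSNC

noncomputable section
open scoped Classical
set_option linter.unusedSectionVars false

variable {M J : Type} [Fintype M] [Fintype J] [DecidableEq M] [DecidableEq J]

variable (y : M → J → ℝ) (κ : M → ℕ) (G : M → ℕ → Finset J)

/-- index of the group of machine `i` containing job `j`, if any. -/
def grp (i : M) (j : J) : Option (Fin (κ i)) :=
  if h : ∃ ℓ : Fin (κ i), j ∈ G i (ℓ : ℕ) then some h.choose else none

lemma grp_mem {i : M} {j : J} {ℓ : Fin (κ i)} (h : grp κ G i j = some ℓ) :
    j ∈ G i (ℓ : ℕ) := by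
  unfold grp at h
  by_cases hex : ∃ ℓ' : Fin (κ i), j ∈ G i (ℓ' : ℕ)
  · rw [dif_pos hex] at h
    have h2 : hex.choose = ℓ := by simpa using h
    rw [← h2]
    exact hex.choose_spec
  · rw [dif_neg hex] at h
    exact absurd h (by simp)

lemma grp_eq_some {i : M} {j : J} {ℓ : Fin (κ i)} (hj : j ∈ G i (ℓ : ℕ))
    (hdisj : ∀ ℓ₁ ∈ range (κ i), ∀ ℓ₂ ∈ range (κ i), ℓ₁ ≠ ℓ₂ → Disjoint (G i ℓ₁) (G i ℓ₂)) :
    grp κ G i j = some ℓ := by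
  unfold grp
  have hex : ∃ ℓ' : Fin (κ i), j ∈ G i (ℓ' : ℕ) := ⟨ℓ, hj⟩
  rw [dif_pos hex]
  congr 1
  by_contra hne
  have h1 : ((hex.choose : ℕ)) ≠ (ℓ : ℕ) := fun h => hne (Fin.ext h)
  have := hdisj _ (mem_range.mpr hex.choose.isLt) _ (mem_range.mpr ℓ.isLt) h1
  exact (Finset.disjoint_left.mp this hex.choose_spec) hj

/-- weights of the "segment" variable of group `(i, ℓ)`. -/
def wseg (i : M) (ℓ : ℕ) : Option J → ℝ
  | none => 1 - ∑ j ∈ G i ℓ, y i j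
  | some j => if j ∈ G i ℓ then y i j else 0

/-- weight of a whole machine seg-vector. -/
def Wm (i : M) (v : Fin (κ i) → Option J) : ℝ :=
  ∏ ℓ : Fin (κ i), wseg y G i (ℓ : ℕ) (v ℓ)

abbrev Seg (κ : M → ℕ) : Type := ∀ i : M, Fin (κ i) → Option J

/-- weight of a global seg configuration. -/
def Wgt (s : Seg (M := M) (J := J) κ) : ℝ := ∏ i, Wm y κ G i (s i)

lemma wseg_nonneg (hy01 : ∀ i j, y i j ∈ Set.Icc (0:ℝ) 1)
    (hG_wt : ∀ i, ∀ ℓ ∈ range (κ i), ∑ j ∈ G i ℓ, y i j ≤ 1)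
    {i : M} (ℓ : Fin (κ i)) (o : Option J) :
    0 ≤ wseg y G i (ℓ : ℕ) o := by
  cases o with
  | none =>
      simp only [wseg]
      have := hG_wt i (ℓ : ℕ) (mem_range.mpr ℓ.isLt)
      linarith
  | some j =>
      simp only [wseg]
      split_ifs
      · exact (hy01 i j).1
      · exact le_refl 0

lemma wseg_sum {i : M} (ℓ : Fin (κ i)) :
    ∑ o : Option J, wseg y G i (ℓ : ℕ) o = 1 := by
  rw [Fintype.sum_option]
  simp only [wseg]
  have : ∑ j : J, (if j ∈ G i (ℓ:ℕ) then y i j else 0) = ∑ j ∈ G i (ℓ:ℕ), y i j := by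
    rw [Finset.sum_ite_mem]
    congr 1
    exact univ_inter _
  rw [this]
  ring

lemma wseg_some (i : M) {ℓ : ℕ} {j : J} (hj : j ∈ G i ℓ) :
    wseg y G i ℓ (some j) = y i j := by simp [wseg, hj]

lemma Wm_nonneg (hy01 : ∀ i j, y i j ∈ Set.Icc (0:ℝ) 1)
    (hG_wt : ∀ i, ∀ ℓ ∈ range (κ i), ∑ j ∈ G i ℓ, y i j ≤ 1)
    (i : M) (v : Fin (κ i) → Option J) : 0 ≤ Wm y κ G i v :=
  Finset.prod_nonneg fun ℓ _ => wseg_nonneg y κ G hy01 hG_wt ℓ (v ℓ)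

lemma Wgt_nonneg (hy01 : ∀ i j, y i j ∈ Set.Icc (0:ℝ) 1)
    (hG_wt : ∀ i, ∀ ℓ ∈ range (κ i), ∑ j ∈ G i ℓ, y i j ≤ 1)
    (s : Seg (M := M) (J := J) κ) : 0 ≤ Wgt y κ G s :=
  Finset.prod_nonneg fun i _ => Wm_nonneg y κ G hy01 hG_wt i (s i)

/-- generic within-machine factorization -/
lemma EMgen {i : M} (F : Fin (κ i) → Option J → ℝ) :
    ∑ v : Fin (κ i) → Option J, ∏ ℓ : Fin (κ i), F ℓ (v ℓ)
      = ∏ ℓ : Fin (κ i), ∑ o : Option J, F ℓ o := by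
  rw [Finset.prod_univ_sum (fun _ : Fin (κ i) => (univ : Finset (Option J))) F,
    Fintype.piFinset_univ]

lemma Wm_sum {i : M} : ∑ v : Fin (κ i) → Option J, Wm y κ G i v = 1 := by
  rw [show (fun v : Fin (κ i) → Option J => Wm y κ G i v)
      = fun v => ∏ ℓ : Fin (κ i), wseg y G i (ℓ:ℕ) (v ℓ) from rfl]
  rw [EMgen]
  exact Finset.prod_eq_one fun ℓ _ => wseg_sum y κ G ℓ

/-- single-coordinate expectation within one machine -/
lemma EM1 {i : M} (ℓ : Fin (κ i)) (A : Option J → ℝ) :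
    ∑ v : Fin (κ i) → Option J, Wm y κ G i v * A (v ℓ)
      = ∑ o : Option J, wseg y G i (ℓ:ℕ) o * A o := by
  have key : ∀ v : Fin (κ i) → Option J,
      Wm y κ G i v * A (v ℓ)
        = ∏ ℓ' : Fin (κ i), (wseg y G i (ℓ':ℕ) (v ℓ') * (if ℓ' = ℓ then A (v ℓ') else 1)) := by
    intro v
    rw [Finset.prod_mul_distrib]
    simp [Wm, Finset.prod_ite_eq']
  simp_rw [key]
  rw [EMgen (κ := κ) (i := i) (fun ℓ' o => wseg y G i (ℓ':ℕ) o * (if ℓ' = ℓ then A o else 1))]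
  rw [Finset.prod_eq_single ℓ]
  · simp
  · intro ℓ' _ hne
    simp only [if_neg hne, mul_one]
    exact wseg_sum y κ G ℓ'
  · intro h; exact absurd (mem_univ ℓ) h

/-- two-coordinate expectation within one machine -/
lemma EM2 {i : M} {ℓ₁ ℓ₂ : Fin (κ i)} (hne : ℓ₁ ≠ ℓ₂) (A B : Option J → ℝ) :
    ∑ v : Fin (κ i) → Option J, Wm y κ G i v * (A (v ℓ₁) * B (v ℓ₂))
      = (∑ o : Option J, wseg y G i (ℓ₁:ℕ) o * A o)
        * (∑ o : Option J, wseg y G i (ℓ₂:ℕ) o * B o) := by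
  have key : ∀ v : Fin (κ i) → Option J,
      Wm y κ G i v * (A (v ℓ₁) * B (v ℓ₂))
        = ∏ ℓ' : Fin (κ i), (wseg y G i (ℓ':ℕ) (v ℓ')
            * ((if ℓ' = ℓ₁ then A (v ℓ') else 1) * (if ℓ' = ℓ₂ then B (v ℓ') else 1))) := by
    intro v
    rw [Finset.prod_mul_distrib, Finset.prod_mul_distrib]
    simp [Wm, Finset.prod_ite_eq']
  simp_rw [key]
  rw [EMgen (κ := κ) (i := i) (fun ℓ' o => wseg y G i (ℓ':ℕ) o
    * ((if ℓ' = ℓ₁ then A o else 1) * (if ℓ' = ℓ₂ then B o else 1)))]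
  rw [← Finset.mul_prod_erase univ _ (mem_univ ℓ₁),
      ← Finset.mul_prod_erase (univ.erase ℓ₁) _
        (Finset.mem_erase.mpr ⟨Ne.symm hne, mem_univ ℓ₂⟩)]
  have h1 : ∑ o : Option J, wseg y G i (ℓ₁:ℕ) o * ((if ℓ₁ = ℓ₁ then A o else 1)
      * (if ℓ₁ = ℓ₂ then B o else 1)) = ∑ o : Option J, wseg y G i (ℓ₁:ℕ) o * A o := by
    simp [if_neg hne]
  have h2 : ∑ o : Option J, wseg y G i (ℓ₂:ℕ) o * ((if ℓ₂ = ℓ₁ then A o else 1)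
      * (if ℓ₂ = ℓ₂ then B o else 1)) = ∑ o : Option J, wseg y G i (ℓ₂:ℕ) o * B o := by
    simp [if_neg (Ne.symm hne)]
  rw [h1, h2]
  have h3 : ∏ ℓ' ∈ (univ.erase ℓ₁).erase ℓ₂,
      (∑ o : Option J, wseg y G i (ℓ':ℕ) o * ((if ℓ' = ℓ₁ then A o else 1)
        * (if ℓ' = ℓ₂ then B o else 1))) = 1 := by
    apply Finset.prod_eq_one
    intro ℓ' hℓ'
    obtain ⟨hne2, hmem⟩ := Finset.mem_erase.mp hℓ'
    obtain ⟨hne1, _⟩ := Finset.mem_erase.mp hmem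
    simp only [if_neg hne1, if_neg hne2, mul_one]
    exact wseg_sum y κ G ℓ'
  rw [h3]
  ring

/-! ### walk orders and stick-breaking probabilities -/

def eb (β : Bool) : M ≃ Fin (Fintype.card M) :=
  if β then (Fintype.equivFin M).trans Fin.revPerm else Fintype.equivFin M

def pos (β : Bool) (i : M) : ℕ := ((eb (M := M) β) i : ℕ)

lemma pos_lt (β : Bool) (i : M) : pos (M := M) β i < Fintype.card M := ((eb β) i).isLt

lemma pos_inj {β : Bool} {i i' : M} (h : pos (M := M) β i = pos β i') : i = i' :=
  (eb β).injective (Fin.ext h)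

lemma filter_pos_eq {β : Bool} {t : ℕ} (ht : t < Fintype.card M) :
    univ.filter (fun i : M => pos β i = t) = {(eb (M := M) β).symm ⟨t, ht⟩} := by
  ext i
  simp only [mem_filter, mem_univ, true_and, mem_singleton]
  constructor
  · intro h
    have : (eb (M := M) β) i = ⟨t, ht⟩ := Fin.ext h
    rw [← this, Equiv.symm_apply_apply]
  · intro h
    rw [h]
    simp [pos]

lemma eb_false : eb (M := M) false = Fintype.equivFin M := rfl

lemma eb_true : eb (M := M) true = (Fintype.equivFin M).trans Fin.revPerm := rfl

lemma pos_true_add (i : M) : pos true i + (pos false i + 1) = Fintype.card M := by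
  have h1 : pos (M := M) true i = Fintype.card M - (((Fintype.equivFin M) i : ℕ) + 1) := by
    simp only [pos, eb_true, Equiv.trans_apply, Fin.revPerm_apply, Fin.val_rev]
  have h2 : pos (M := M) false i = ((Fintype.equivFin M) i : ℕ) := by
    simp only [pos, eb_false]
  have h3 : ((Fintype.equivFin M) i : ℕ) < Fintype.card M := ((Fintype.equivFin M) i).isLt
  omega

def R (j : J) (β : Bool) (t : ℕ) : ℝ :=
  ∑ i ∈ univ.filter (fun i : M => t ≤ pos β i), y i j

def pW (j : J) (β : Bool) (i : M) : ℝ := y i j / R y j β (pos β i)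

def pT (j : J) (β : Bool) (i : M) : ℝ :=
  if y i j = 1 then 0 else (pW y j β i - y i j) / (1 - y i j)

section probs

variable (hy01 : ∀ i j, y i j ∈ Set.Icc (0:ℝ) 1) (hy_sum : ∀ j, ∑ i, y i j = 1)

include hy01 hy_sum

lemma R_nonneg (j : J) (β : Bool) (t : ℕ) : 0 ≤ R y j β t :=
  Finset.sum_nonneg fun i _ => (hy01 i j).1

lemma R_le_one (j : J) (β : Bool) (t : ℕ) : R y j β t ≤ 1 := by
  rw [← hy_sum j]
  exact Finset.sum_le_sum_of_subset_of_nonneg (Finset.filter_subset _ _)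
    (fun i _ _ => (hy01 i j).1)

lemma le_R (j : J) (β : Bool) (i : M) : y i j ≤ R y j β (pos β i) := by
  refine Finset.single_le_sum (f := fun i' => y i' j)
    (fun i' _ => (hy01 i' j).1) ?_
  simp

lemma R_zero (j : J) (β : Bool) {t : ℕ} (ht : Fintype.card M ≤ t) : R y j β t = 0 := by
  rw [R, Finset.filter_false_of_mem, Finset.sum_empty]
  intro i _
  have := pos_lt (M := M) β i
  omega

lemma R_succ (j : J) (β : Bool) {t : ℕ} (ht : t < Fintype.card M) :
    R y j β t = y ((eb (M := M) β).symm ⟨t, ht⟩) j + R y j β (t + 1) := by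
  rw [R, R]
  have hsplit : univ.filter (fun i : M => t ≤ pos β i)
      = univ.filter (fun i : M => pos β i = t) ∪ univ.filter (fun i : M => t + 1 ≤ pos β i) := by
    ext i
    simp only [mem_filter, mem_univ, true_and, mem_union]
    omega
  have hdisj : Disjoint (univ.filter (fun i : M => pos β i = t))
      (univ.filter (fun i : M => t + 1 ≤ pos β i)) := by
    rw [Finset.disjoint_left]
    intro i hi hi'
    simp only [mem_filter, mem_univ, true_and] at hi hi'
    omega
  rw [hsplit, Finset.sum_union hdisj, filter_pos_eq ht, Finset.sum_singleton]

lemma pW_nonneg (j : J) (β : Bool) (i : M) : 0 ≤ pW y j β i :=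
  div_nonneg (hy01 i j).1 (R_nonneg y hy01 hy_sum j β _)

lemma pW_le_one (j : J) (β : Bool) (i : M) : pW y j β i ≤ 1 := by
  rw [pW]
  rcases eq_or_lt_of_le (R_nonneg y hy01 hy_sum j β (pos β i)) with h | h
  · rw [← h, div_zero]; norm_num
  · rw [div_le_one h]; exact le_R y hy01 hy_sum j β i

lemma y_le_pW (j : J) (β : Bool) (i : M) : y i j ≤ pW y j β i := by
  rw [pW]
  rcases eq_or_lt_of_le (R_nonneg y hy01 hy_sum j β (pos β i)) with h | h
  · have h2 := le_R y hy01 hy_sum j β i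
    rw [← h] at h2
    have : y i j = 0 := le_antisymm h2 (hy01 i j).1
    simp [this]
  · rw [le_div_iff₀ h]
    calc y i j * R y j β (pos β i) ≤ y i j * 1 := by
          exact mul_le_mul_of_nonneg_left (R_le_one y hy01 hy_sum j β _) (hy01 i j).1
      _ = y i j := mul_one _
 
lemma pW_eq_one (j : J) (β : Bool) (i : M) (h1 : y i j = 1) : pW y j β i = 1 := by
  have hR1 : R y j β (pos β i) = 1 := by
    have := le_R y hy01 hy_sum j β i
    have := R_le_one y hy01 hy_sum j β (pos β i)
    linarith [h1 ▸ le_R y hy01 hy_sum j β i]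
  rw [pW, h1, hR1, div_one]

lemma pT_nonneg (j : J) (β : Bool) (i : M) : 0 ≤ pT y j β i := by
  rw [pT]
  split_ifs with h
  · exact le_refl 0
  · apply div_nonneg
    · linarith [y_le_pW y hy01 hy_sum j β i]
    · have := (hy01 i j).2
      rcases lt_or_eq_of_le this with h2 | h2
      · linarith
      · exact absurd h2 h

lemma pT_le_one (j : J) (β : Bool) (i : M) : pT y j β i ≤ 1 := by
  rw [pT]
  split_ifs with h
  · norm_num
  · have hy1 : y i j < 1 := lt_of_le_of_ne (hy01 i j).2 h
    rw [div_le_one (by linarith)]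
    linarith [pW_le_one y hy01 hy_sum j β i]

lemma pident (j : J) (β : Bool) (i : M) :
    y i j + (1 - y i j) * pT y j β i = pW y j β i := by
  rw [pT]
  split_ifs with h
  · rw [h, pW_eq_one y hy01 hy_sum j β i h]; ring
  · have hy1 : y i j < 1 := lt_of_le_of_ne (hy01 i j).2 h
    have hne : (1:ℝ) - y i j ≠ 0 := by linarith
    rw [← mul_div_assoc, mul_div_cancel_left₀ _ hne]
    ring

lemma pident2 (j : J) (β : Bool) (i : M) :
    (1 - y i j) * (1 - pT y j β i) = 1 - pW y j β i := by
  have := pident y hy01 hy_sum j β i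
  ring_nf
  ring_nf at this
  linarith

/-- telescoping product of miss-probabilities -/
lemma T1 (j : J) (β : Bool) :
    ∀ t, t ≤ Fintype.card M →
      ∏ i ∈ univ.filter (fun i : M => pos β i < t), (1 - pW y j β i) = R y j β t := by
  intro t
  induction t with
  | zero =>
      intro _
      have h1 : univ.filter (fun i : M => pos β i < 0) = ∅ :=
        Finset.filter_false_of_mem (fun i _ => by omega)
      have h2 : univ.filter (fun i : M => 0 ≤ pos β i) = univ :=
        Finset.filter_true_of_mem (fun i _ => by omega)
      rw [h1, Finset.prod_empty, R, h2, hy_sum j]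
  | succ t ih =>
      intro ht
      have ht' : t < Fintype.card M := ht
      set it := (eb (M := M) β).symm ⟨t, ht'⟩ with hit
      have hpos : pos β it = t := by simp [pos, hit]
      have hsplit : univ.filter (fun i : M => pos β i < t + 1)
          = insert it (univ.filter (fun i : M => pos β i < t)) := by
        ext i
        simp only [mem_filter, mem_univ, true_and, mem_insert]
        constructor
        · intro h
          rcases Nat.lt_succ_iff_lt_or_eq.mp h with h2 | h2
          · exact Or.inr h2
          · left
            have : i = it := pos_inj (β := β) (by rw [hpos]; exact h2)
            exact this
        · intro h
          rcases h with h | h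
          · rw [h, hpos]; omega
          · omega
      have hnotmem : it ∉ univ.filter (fun i : M => pos β i < t) := by
        simp [hpos]
      rw [hsplit, Finset.prod_insert hnotmem, ih (le_of_lt ht')]
      have hRs : y it j + R y j β (t+1) = R y j β t := (R_succ y hy01 hy_sum j β ht').symm
      have hpw : pW y j β it = y it j / R y j β t := by rw [pW, hpos]
      rcases eq_or_lt_of_le (R_nonneg y hy01 hy_sum j β t) with h0 | h0
      · have h0' : R y j β t = 0 := h0.symm
        have hy0 : y it j = 0 := by
          have h2 := le_R y hy01 hy_sum j β it
          rw [hpos, h0'] at h2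
          exact le_antisymm h2 (hy01 it j).1
        have hR1 : R y j β (t+1) = 0 := by
          have := R_nonneg y hy01 hy_sum j β (t+1)
          linarith
        rw [h0', hR1, mul_zero]
      · have hne : R y j β t ≠ 0 := ne_of_gt h0
        rw [hpw]
        have : (1 - y it j / R y j β t) * R y j β t = R y j β t - y it j := by
          field_simp
        rw [this]
        linarith

/-- sum over the two orders of the remaining mass at `m` -/
lemma RSUM (j : J) (m : M) :
    R y j false (pos false m) + R y j true (pos true m) = 1 + y m j := by
  have hcond : ∀ i : M, (pos true m ≤ pos true i ↔ pos false i ≤ pos false m) := by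
    intro i
    have h1 := pos_true_add (M := M) i
    have h2 := pos_true_add (M := M) m
    omega
  have hR2 : R y j true (pos true m) = ∑ i ∈ univ.filter (fun i : M => pos false i ≤ pos false m), y i j := by
    rw [R]
    apply Finset.sum_congr _ (fun _ _ => rfl)
    ext i
    simp only [mem_filter, mem_univ, true_and]
    exact hcond i
  rw [hR2, R]
  have := Finset.sum_union_inter (s₁ := univ.filter (fun i : M => pos false m ≤ pos false i))
    (s₂ := univ.filter (fun i : M => pos false i ≤ pos false m)) (f := fun i => y i j)
  have hu : (univ.filter (fun i : M => pos false m ≤ pos false i))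
      ∪ (univ.filter (fun i : M => pos false i ≤ pos false m)) = univ := by
    ext i
    simp only [mem_union, mem_filter, mem_univ, true_and]
    simpa using le_total (pos (M := M) false m) (pos false i)
  have hi : (univ.filter (fun i : M => pos false m ≤ pos false i))
      ∩ (univ.filter (fun i : M => pos false i ≤ pos false m)) = {m} := by
    ext i
    simp only [mem_inter, mem_filter, mem_univ, true_and, mem_singleton]
    constructor
    · rintro ⟨h1, h2⟩
      exact pos_inj (β := false) (le_antisymm h2 h1)
    · rintro rfl; exact ⟨le_rfl, le_rfl⟩
  rw [hu, hi, Finset.sum_singleton, hy_sum j] at this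
  linarith

end probs

/-! ### the conditional hit probabilities and walk factors -/

def hval (j : J) (β : Bool) (i : M) (v : Fin (κ i) → Option J) : ℝ :=
  (grp κ G i j).elim (pW y j β i) (fun ℓ => if v ℓ = some j then 1 else pT y j β i)

def PhiS (j : J) (β : Bool) (m : M) (i : M) (v : Fin (κ i) → Option J) : ℝ :=
  if pos β i < pos β m then 1 - hval y κ G j β i v
  else if i = m then hval y κ G j β i v else 1

def WalkS (j : J) (β : Bool) (m : M) (s : Seg (M := M) (J := J) κ) : ℝ :=
  ∏ i, PhiS y κ G j β m i (s i)

def PJ (j : J) (m : M) (s : Seg (M := M) (J := J) κ) : ℝ :=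
  (WalkS y κ G j false m s + WalkS y κ G j true m s) / 2

def mu (f : J → M) : ℝ :=
  ∑ s : Seg (M := M) (J := J) κ, Wgt y κ G s * ∏ j, PJ y κ G j (f j) s

def qW (j : J) (β : Bool) (m : M) (i : M) : ℝ :=
  if pos β i < pos β m then 1 - pW y j β i else if i = m then pW y j β i else 1

section walkfacts

variable (hy01 : ∀ i j, y i j ∈ Set.Icc (0:ℝ) 1) (hy_sum : ∀ j, ∑ i, y i j = 1)

include hy01 hy_sum

lemma hval_nonneg (j : J) (β : Bool) (i : M) (v : Fin (κ i) → Option J) :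
    0 ≤ hval y κ G j β i v := by
  rw [hval]
  cases grp κ G i j with
  | none => exact pW_nonneg y hy01 hy_sum j β i
  | some ℓ =>
      simp only [Option.elim]
      split_ifs
      · norm_num
      · exact pT_nonneg y hy01 hy_sum j β i

lemma hval_le_one (j : J) (β : Bool) (i : M) (v : Fin (κ i) → Option J) :
    hval y κ G j β i v ≤ 1 := by
  rw [hval]
  cases grp κ G i j with
  | none => exact pW_le_one y hy01 hy_sum j β i
  | some ℓ =>
      simp only [Option.elim]
      split_ifs
      · norm_num
      · exact pT_le_one y hy01 hy_sum j β i

lemma PhiS_nonneg (j : J) (β : Bool) (m i : M) (v : Fin (κ i) → Option J) :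
    0 ≤ PhiS y κ G j β m i v := by
  rw [PhiS]
  split_ifs
  · linarith [hval_le_one y κ G hy01 hy_sum j β i v]
  · exact hval_nonneg y κ G hy01 hy_sum j β i v
  · norm_num

lemma WalkS_nonneg (j : J) (β : Bool) (m : M) (s : Seg (M := M) (J := J) κ) :
    0 ≤ WalkS y κ G j β m s :=
  Finset.prod_nonneg fun i _ => PhiS_nonneg y κ G hy01 hy_sum j β m i (s i)

lemma PJ_nonneg (j : J) (m : M) (s : Seg (M := M) (J := J) κ) :
    0 ≤ PJ y κ G j m s := by
  have h1 := WalkS_nonneg y κ G hy01 hy_sum j false m s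
  have h2 := WalkS_nonneg y κ G hy01 hy_sum j true m s
  rw [PJ]
  linarith

end walkfacts

/-- role-splitting of a universe product -/
lemma SPL (β : Bool) (m : M) (F H : M → ℝ) :
    ∏ i, (if pos β i < pos β m then F i else if i = m then H i else 1)
      = (∏ i ∈ univ.filter (fun i : M => pos β i < pos β m), F i) * H m := by
  rw [← Finset.prod_filter_mul_prod_filter_not univ (fun i : M => pos β i < pos β m)]
  congr 1
  · exact Finset.prod_congr rfl fun i hi => if_pos (Finset.mem_filter.mp hi).2
  · rw [Finset.prod_eq_single m]
    · rw [if_neg (by omega), if_pos rfl]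
    · intro i hi hne
      obtain ⟨_, hnlt⟩ := Finset.mem_filter.mp hi
      rw [if_neg hnlt, if_neg hne]
    · intro hm
      exfalso
      exact hm (Finset.mem_filter.mpr ⟨mem_univ m, by omega⟩)

lemma SPLerase (β : Bool) (m : M) (F H : M → ℝ) :
    ∏ i ∈ univ.erase m, (if pos β i < pos β m then F i else if i = m then H i else 1)
      = ∏ i ∈ univ.filter (fun i : M => pos β i < pos β m), F i := by
  rw [← Finset.prod_filter_mul_prod_filter_not (univ.erase m)
    (fun i : M => pos β i < pos β m)]
  have h1 : (univ.erase m).filter (fun i : M => pos β i < pos β m)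
      = univ.filter (fun i : M => pos β i < pos β m) := by
    ext i
    simp only [mem_filter, mem_erase, mem_univ, true_and, and_true]
    constructor
    · rintro ⟨_, h⟩; exact h
    · intro h
      refine ⟨fun he => ?_, h⟩
      rw [he] at h; omega
  have h2 : ∏ i ∈ (univ.erase m).filter (fun i : M => ¬ pos β i < pos β m),
      (if pos β i < pos β m then F i else if i = m then H i else 1) = 1 := by
    apply Finset.prod_eq_one
    intro i hi
    obtain ⟨hie, hnlt⟩ := Finset.mem_filter.mp hi
    rw [if_neg hnlt, if_neg (Finset.mem_erase.mp hie).1]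
  have h3 : ∏ i ∈ (univ.erase m).filter (fun i : M => pos β i < pos β m),
      (if pos β i < pos β m then F i else if i = m then H i else 1)
      = ∏ i ∈ (univ.erase m).filter (fun i : M => pos β i < pos β m), F i := by
    exact Finset.prod_congr rfl fun i hi => if_pos (Finset.mem_filter.mp hi).2
  rw [h3, h2, mul_one, h1]

section qwfacts

variable (hy01 : ∀ i j, y i j ∈ Set.Icc (0:ℝ) 1) (hy_sum : ∀ j, ∑ i, y i j = 1)
include hy01 hy_sum

lemma prod_qW (j : J) (β : Bool) (m : M) :
    ∏ i, qW y j β m i = y m j := by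
  rw [show (fun i => qW y j β m i) = fun i =>
    (if pos β i < pos β m then 1 - pW y j β i else if i = m then pW y j β i else 1) from rfl]
  rw [SPL β m (fun i => 1 - pW y j β i) (fun i => pW y j β i)]
  rw [T1 y hy01 hy_sum j β (pos β m) (le_of_lt (pos_lt β m))]
  rw [pW]
  rcases eq_or_lt_of_le (R_nonneg y hy01 hy_sum j β (pos β m)) with h0 | h0
  · have h2 := le_R y hy01 hy_sum j β m
    rw [← h0] at h2 ⊢
    have : y m j = 0 := le_antisymm h2 (hy01 m j).1
    rw [this, zero_div, mul_zero]
  · field_simp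

lemma prod_qW_erase (j : J) (β : Bool) (m : M) :
    ∏ i ∈ univ.erase m, qW y j β m i = R y j β (pos β m) := by
  rw [show (fun i => qW y j β m i) = fun i =>
    (if pos β i < pos β m then 1 - pW y j β i else if i = m then pW y j β i else 1) from rfl]
  rw [SPLerase β m (fun i => 1 - pW y j β i) (fun i => pW y j β i)]
  exact T1 y hy01 hy_sum j β (pos β m) (le_of_lt (pos_lt β m))

lemma qW_nonneg (j : J) (β : Bool) (m i : M) : 0 ≤ qW y j β m i := by
  rw [qW]
  split_ifs
  · linarith [pW_le_one y hy01 hy_sum j β i]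
  · exact pW_nonneg y hy01 hy_sum j β i
  · norm_num

end qwfacts

/-- key sum-splitting for the segment weights against a two-valued function -/
lemma wseg_exp {i : M} {ℓ : Fin (κ i)} {j : J} (hj : j ∈ G i (ℓ:ℕ)) (a b : ℝ) :
    ∑ o : Option J, wseg y G i (ℓ:ℕ) o * (if o = some j then a else b)
      = y i j * a + (1 - y i j) * b := by
  rw [← Finset.sum_filter_add_sum_filter_not univ (fun o : Option J => o = some j)]
  have h1 : univ.filter (fun o : Option J => o = some j) = {some j} := by
    ext o; simp
  have h2 : ∑ o ∈ univ.filter (fun o : Option J => ¬ o = some j),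
      wseg y G i (ℓ:ℕ) o * (if o = some j then a else b)
      = (1 - y i j) * b := by
    have hsum : ∑ o ∈ univ.filter (fun o : Option J => ¬ o = some j), wseg y G i (ℓ:ℕ) o
        = 1 - y i j := by
      have := Finset.sum_filter_add_sum_filter_not univ (fun o : Option J => o = some j)
        (wseg y G i (ℓ:ℕ))
      rw [h1, Finset.sum_singleton, wseg_some y G i hj] at this
      have htot := wseg_sum y κ G (i := i) ℓ
      linarith
    rw [← hsum, Finset.sum_mul]
    apply Finset.sum_congr rfl
    intro o ho
    rw [if_neg (Finset.mem_filter.mp ho).2]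
  rw [h1, Finset.sum_singleton, if_pos rfl, wseg_some y G i hj, h2]

/-- global factorization over machines -/
lemma F1 (Φ : ∀ i : M, (Fin (κ i) → Option J) → ℝ) :
    ∑ s : Seg (M := M) (J := J) κ, Wgt y κ G s * ∏ i, Φ i (s i)
      = ∏ i, ∑ v : Fin (κ i) → Option J, Wm y κ G i v * Φ i v := by
  have key : ∀ s : Seg (M := M) (J := J) κ,
      Wgt y κ G s * ∏ i, Φ i (s i) = ∏ i, (Wm y κ G i (s i) * Φ i (s i)) := by
    intro s
    rw [Wgt, ← Finset.prod_mul_distrib]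
  simp_rw [key]
  have := (Finset.prod_univ_sum
    (fun i : M => (univ : Finset (Fin (κ i) → Option J)))
    (fun i v => Wm y κ G i v * Φ i v))
  rw [Fintype.piFinset_univ] at this
  exact this.symm

lemma Wgt_sum : ∑ s : Seg (M := M) (J := J) κ, Wgt y κ G s = 1 := by
  have := F1 y κ G (fun _ _ => (1:ℝ))
  simp only [mul_one, Finset.prod_const_one] at this
  rw [this]
  exact Finset.prod_eq_one fun i _ => Wm_sum y κ G

section mesingle

variable (hy01 : ∀ i j, y i j ∈ Set.Icc (0:ℝ) 1) (hy_sum : ∀ j, ∑ i, y i j = 1)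
include hy01 hy_sum

/-- per-machine averaged factor -/
lemma ME_single (j : J) (β : Bool) (m i : M) :
    ∑ v : Fin (κ i) → Option J, Wm y κ G i v * PhiS y κ G j β m i v
      = qW y j β m i := by
  have hmiss : ∑ v : Fin (κ i) → Option J, Wm y κ G i v * (1 - hval y κ G j β i v)
      = 1 - pW y j β i := by
    unfold hval
    cases hg : grp κ G i j with
    | none =>
        simp only [Option.elim]
        rw [← Finset.sum_mul, Wm_sum y κ G, one_mul]
    | some ℓ =>
        simp only [Option.elim]
        have hmem := grp_mem κ G hg
        have key : ∀ v : Fin (κ i) → Option J,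
            Wm y κ G i v * (1 - if v ℓ = some j then 1 else pT y j β i)
            = Wm y κ G i v * (if v ℓ = some j then 0 else 1 - pT y j β i) := by
          intro v; split_ifs <;> ring
        simp_rw [key]
        rw [EM1 y κ G ℓ (fun o => if o = some j then 0 else 1 - pT y j β i)]
        rw [wseg_exp y κ G hmem 0 (1 - pT y j β i)]
        rw [pident2 y hy01 hy_sum j β i]
        ring
  have hhit : ∑ v : Fin (κ i) → Option J, Wm y κ G i v * hval y κ G j β i v
      = pW y j β i := by
    unfold hval
    cases hg : grp κ G i j with
    | none =>
        simp only [Option.elim]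
        rw [← Finset.sum_mul, Wm_sum y κ G, one_mul]
    | some ℓ =>
        simp only [Option.elim]
        have hmem := grp_mem κ G hg
        rw [EM1 y κ G ℓ (fun o => if o = some j then 1 else pT y j β i)]
        rw [wseg_exp y κ G hmem 1 (pT y j β i)]
        rw [mul_one]
        exact pident y hy01 hy_sum j β i
  unfold PhiS qW
  by_cases hlt : pos β i < pos β m
  · simp only [if_pos hlt]
    exact hmiss
  · by_cases him : i = m
    · simp only [if_neg hlt, if_pos him]
      exact hhit
    · simp only [if_neg hlt, if_neg him]
      rw [← Finset.sum_mul, Wm_sum y κ G, one_mul]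

/-- marginal of one job's walk -/
lemma walk_marginal (j : J) (β : Bool) (m : M) :
    ∑ s : Seg (M := M) (J := J) κ, Wgt y κ G s * WalkS y κ G j β m s = y m j := by
  unfold WalkS
  rw [F1 y κ G (fun i v => PhiS y κ G j β m i v)]
  rw [Finset.prod_congr rfl (fun i (_ : i ∈ univ) => ME_single y κ G hy01 hy_sum j β m i)]
  exact prod_qW y hy01 hy_sum j β m

end mesingle

/-! ### normalization -/

lemma SP' (a : ℕ → ℝ) (T : ℕ) :
    ∑ t ∈ range T, (∏ t' ∈ range t, (1 - a t')) * a t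
      = 1 - ∏ t ∈ range T, (1 - a t) := by
  induction T with
  | zero => simp
  | succ T ih =>
      rw [Finset.sum_range_succ, ih, Finset.prod_range_succ]
      ring

/-- reindexing a prefix product along the order -/
lemma HB (β : Bool) (f : M → ℝ) {T : ℕ} (hT : T ≤ Fintype.card M) :
    ∏ i ∈ univ.filter (fun i : M => pos β i < T), f i
      = ∏ t ∈ range T,
          (if h : t < Fintype.card M then f ((eb (M := M) β).symm ⟨t, h⟩) else 1) := by
  refine Finset.prod_bij' (fun i _ => pos β i)
    (fun t ht => (eb (M := M) β).symm ⟨t, lt_of_lt_of_le (mem_range.mp ht) hT⟩)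
    ?_ ?_ ?_ ?_ ?_
  · intro i hi
    exact mem_range.mpr (Finset.mem_filter.mp hi).2
  · intro t ht
    refine Finset.mem_filter.mpr ⟨mem_univ _, ?_⟩
    have : pos β ((eb (M := M) β).symm ⟨t, lt_of_lt_of_le (mem_range.mp ht) hT⟩)
        = t := by simp [pos]
    rw [this]
    exact mem_range.mp ht
  · intro i hi
    apply (eb (M := M) β).injective
    simp [pos]
  · intro t ht
    simp [pos]
  · intro i hi
    rw [dif_pos (pos_lt β i)]
    congr 1
    apply (eb (M := M) β).injective
    simp [pos]

section normal

variable (hy01 : ∀ i j, y i j ∈ Set.Icc (0:ℝ) 1) (hy_sum : ∀ j, ∑ i, y i j = 1)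
  (hG_wt : ∀ i, ∀ ℓ ∈ range (κ i), ∑ j ∈ G i ℓ, y i j ≤ 1)

include hy01 hy_sum hG_wt

/-- exhaustion: on every configuration of nonzero weight, some hit probability is 1 -/
lemma EXH (j : J) (β : Bool) (s : Seg (M := M) (J := J) κ)
    (hW : Wgt y κ G s ≠ 0) :
    ∃ i : M, hval y κ G j β i (s i) = 1 := by
  have hPn : R y j β (Fintype.card M) = 0 := R_zero y hy01 hy_sum j β le_rfl
  have hex : ∃ t, R y j β t = 0 := ⟨_, hPn⟩
  classical
  set t0 := Nat.find hex with ht0def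
  have ht0 : R y j β t0 = 0 := Nat.find_spec hex
  have ht0pos : 0 < t0 := by
    rcases Nat.eq_zero_or_pos t0 with h | h
    · exfalso
      have : R y j β 0 = 0 := by rw [← h]; exact ht0
      have h2 : R y j β 0 = 1 := by
        rw [R, Finset.filter_true_of_mem (fun i _ => by omega), hy_sum j]
      rw [h2] at this
      norm_num at this
    · exact h
  have ht0le : t0 ≤ Fintype.card M := Nat.find_le hPn
  set t1 := t0 - 1 with ht1def
  have ht1lt : t1 < t0 := by omega
  have hR1 : R y j β t1 ≠ 0 := Nat.find_min hex ht1lt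
  have ht1n : t1 < Fintype.card M := by omega
  set i1 := (eb (M := M) β).symm ⟨t1, ht1n⟩ with hi1def
  have hpos1 : pos β i1 = t1 := by simp [pos, hi1def]
  have hsucc : t1 + 1 = t0 := by omega
  have hRy : R y j β t1 = y i1 j := by
    have := R_succ y hy01 hy_sum j β ht1n
    rw [hsucc, ht0] at this
    rw [this, hi1def]
    ring
  have hy1pos : 0 < y i1 j := by
    rcases eq_or_lt_of_le (hy01 i1 j).1 with h | h
    · exfalso; apply hR1; rw [hRy, ← h]
    · exact h
  have hpW1 : pW y j β i1 = 1 := by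
    rw [pW, hpos1, hRy, div_self (ne_of_gt hy1pos)]
  refine ⟨i1, ?_⟩
  rw [hval]
  cases hg : grp κ G i1 j with
  | none => exact hpW1
  | some ℓ =>
      simp only [Option.elim]
      by_cases hsj : s i1 ℓ = some j
      · rw [if_pos hsj]
      · rw [if_neg hsj]
        by_cases hy1 : y i1 j = 1
        · exfalso
          apply hW
          have hmem := grp_mem κ G hg
          have hwz : wseg y G i1 (ℓ:ℕ) (s i1 ℓ) = 0 := by
            have hsum_le := hG_wt i1 (ℓ:ℕ) (mem_range.mpr ℓ.isLt)
            have hsum_ge : (1:ℝ) ≤ ∑ j' ∈ G i1 (ℓ:ℕ), y i1 j' := by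
              rw [← hy1]
              exact Finset.single_le_sum (fun j' _ => (hy01 i1 j').1) hmem
            cases ho : s i1 ℓ with
            | none =>
                simp only [wseg]
                linarith
            | some j' =>
                have hjj' : j' ≠ j := by
                  intro h; apply hsj; rw [ho, h]
                simp only [wseg]
                split_ifs with hj'mem
                · have hpair : y i1 j + y i1 j' ≤ ∑ j'' ∈ G i1 (ℓ:ℕ), y i1 j'' := by
                    have : ({j, j'} : Finset J) ⊆ G i1 (ℓ:ℕ) := by
                      intro x hx
                      rcases Finset.mem_insert.mp hx with h | h
                      · rw [h]; exact hmem
                      · rw [Finset.mem_singleton.mp h]; exact hj'mem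
                    calc y i1 j + y i1 j' = ∑ j'' ∈ ({j, j'} : Finset J), y i1 j'' := by
                          rw [Finset.sum_pair (Ne.symm hjj')]
                      _ ≤ _ := Finset.sum_le_sum_of_subset_of_nonneg this
                          (fun j'' _ _ => (hy01 i1 j'').1)
                  have := (hy01 i1 j').1
                  have : y i1 j' = 0 := by linarith
                  exact this
                · rfl
          rw [Wgt]
          apply Finset.prod_eq_zero (mem_univ i1)
          rw [Wm]
          exact Finset.prod_eq_zero (mem_univ ℓ) hwz
        · have : pT y j β i1 = 1 := by
            rw [pT, if_neg hy1, hpW1]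
            have hlt : y i1 j < 1 := lt_of_le_of_ne (hy01 i1 j).2 hy1
            exact div_self (by linarith)
          rw [this]

/-- walk distribution sums to 1 on configurations of positive weight -/
lemma sum_walk (j : J) (β : Bool) (s : Seg (M := M) (J := J) κ)
    (hW : Wgt y κ G s ≠ 0) :
    ∑ m, WalkS y κ G j β m s = 1 := by
  have hsplit : ∀ m : M, WalkS y κ G j β m s
      = (∏ i ∈ univ.filter (fun i : M => pos β i < pos β m),
          (1 - hval y κ G j β i (s i))) * hval y κ G j β m (s m) := by
    intro m
    unfold WalkS PhiS
    exact SPL β m (fun i => 1 - hval y κ G j β i (s i)) (fun i => hval y κ G j β i (s i))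
  simp_rw [hsplit]
  set a : ℕ → ℝ := fun t =>
    if h : t < Fintype.card M then hval y κ G j β ((eb (M := M) β).symm ⟨t, h⟩)
      (s ((eb (M := M) β).symm ⟨t, h⟩)) else 0 with hadef
  have hterm : ∀ m : M,
      (∏ i ∈ univ.filter (fun i : M => pos β i < pos β m),
        (1 - hval y κ G j β i (s i))) * hval y κ G j β m (s m)
      = (∏ t ∈ range (pos β m), (1 - a t)) * a (pos β m) := by
    intro m
    have h1 : ∏ i ∈ univ.filter (fun i : M => pos β i < pos β m),
        (1 - hval y κ G j β i (s i))
        = ∏ t ∈ range (pos β m),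
            (if h : t < Fintype.card M then
              1 - hval y κ G j β ((eb (M := M) β).symm ⟨t, h⟩) (s ((eb (M := M) β).symm ⟨t, h⟩))
            else 1) := HB β _ (le_of_lt (pos_lt β m))
    have h2 : ∏ t ∈ range (pos β m), (1 - a t)
        = ∏ t ∈ range (pos β m),
            (if h : t < Fintype.card M then
              1 - hval y κ G j β ((eb (M := M) β).symm ⟨t, h⟩) (s ((eb (M := M) β).symm ⟨t, h⟩))
            else 1) := by
      apply Finset.prod_congr rfl
      intro t ht
      have htn : t < Fintype.card M := lt_of_lt_of_le (mem_range.mp ht) (le_of_lt (pos_lt β m))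
      rw [hadef]
      simp only [dif_pos htn]
    have hfin : (⟨pos β m, pos_lt β m⟩ : Fin (Fintype.card M)) = (eb (M := M) β) m :=
      Fin.ext rfl
    have h3 : a (pos β m) = hval y κ G j β m (s m) := by
      rw [hadef]
      simp only [dif_pos (pos_lt β m)]
      rw [hfin, Equiv.symm_apply_apply]
    rw [h1, ← h2, h3]
  simp_rw [hterm]
  have hre : ∑ m : M, (∏ t ∈ range (pos β m), (1 - a t)) * a (pos β m)
      = ∑ t ∈ range (Fintype.card M), (∏ t' ∈ range t, (1 - a t')) * a t := by
    rw [← Fin.sum_univ_eq_sum_range (fun t => (∏ t' ∈ range t, (1 - a t')) * a t)]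
    exact Equiv.sum_comp (eb (M := M) β)
      (fun τ : Fin (Fintype.card M) => (∏ t' ∈ range (τ:ℕ), (1 - a t')) * a (τ:ℕ))
  rw [hre, SP' a (Fintype.card M)]
  obtain ⟨i1, hi1⟩ := EXH y κ G hy01 hy_sum hG_wt j β s hW
  have hzero : ∏ t ∈ range (Fintype.card M), (1 - a t) = 0 := by
    apply Finset.prod_eq_zero (mem_range.mpr (pos_lt β i1))
    have hfin : (⟨pos β i1, pos_lt β i1⟩ : Fin (Fintype.card M)) = (eb (M := M) β) i1 :=
      Fin.ext rfl
    have : a (pos β i1) = hval y κ G j β i1 (s i1) := by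
      rw [hadef]
      simp only [dif_pos (pos_lt β i1)]
      rw [hfin, Equiv.symm_apply_apply]
    rw [this, hi1]
    ring
  rw [hzero]
  ring

lemma sum_PJ (j : J) (s : Seg (M := M) (J := J) κ) (hW : Wgt y κ G s ≠ 0) :
    ∑ m, PJ y κ G j m s = 1 := by
  unfold PJ
  rw [← Finset.sum_div, Finset.sum_add_distrib,
    sum_walk y κ G hy01 hy_sum hG_wt j false s hW,
    sum_walk y κ G hy01 hy_sum hG_wt j true s hW]
  norm_num

end normal

/-! ### pinned-coordinate sums over assignment functions -/

lemma PIN1 (g : J → M → ℝ) (j0 : J) (m : M) :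
    ∑ f ∈ univ.filter (fun f : J → M => f j0 = m), ∏ j, g j (f j)
      = g j0 m * ∏ j ∈ univ.erase j0, (∑ m', g j m') := by
  classical
  rw [Finset.sum_filter]
  have key : ∀ f : J → M, (if f j0 = m then ∏ j, g j (f j) else 0)
      = ∏ j, (if j = j0 then (if f j = m then g j (f j) else 0) else g j (f j)) := by
    intro f
    by_cases hf : f j0 = m
    · rw [if_pos hf]
      apply Finset.prod_congr rfl
      intro j _
      by_cases hj : j = j0
      · rw [if_pos hj, hj, if_pos hf]
      · rw [if_neg hj]
    · rw [if_neg hf]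
      symm
      apply Finset.prod_eq_zero (mem_univ j0)
      rw [if_pos rfl, if_neg hf]
  simp_rw [key]
  have hfac := Finset.prod_univ_sum (fun _ : J => (univ : Finset M))
    (fun j x => if j = j0 then (if x = m then g j x else 0) else g j x)
  rw [Fintype.piFinset_univ] at hfac
  rw [← hfac]
  rw [← Finset.mul_prod_erase univ _ (mem_univ j0)]
  congr 1
  · simp
  · apply Finset.prod_congr rfl
    intro j hj
    apply Finset.sum_congr rfl
    intro x _
    rw [if_neg (Finset.mem_erase.mp hj).1]

lemma PIN2 (g : J → M → ℝ) {j k : J} (hjk : j ≠ k) (m : M) :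
    ∑ f ∈ univ.filter (fun f : J → M => f j = m ∧ f k = m), ∏ j', g j' (f j')
      = g j m * (g k m * ∏ j' ∈ (univ.erase j).erase k, (∑ m', g j' m')) := by
  classical
  rw [Finset.sum_filter]
  have key : ∀ f : J → M, (if f j = m ∧ f k = m then ∏ j', g j' (f j') else 0)
      = ∏ j', (if j' = j ∨ j' = k then (if f j' = m then g j' (f j') else 0) else g j' (f j')) := by
    intro f
    by_cases hf : f j = m ∧ f k = m
    · rw [if_pos hf]
      apply Finset.prod_congr rfl
      intro j' _
      by_cases hj' : j' = j ∨ j' = k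
      · rw [if_pos hj']
        rcases hj' with h | h
        · rw [h, if_pos hf.1]
        · rw [h, if_pos hf.2]
      · rw [if_neg hj']
    · rw [if_neg hf]
      symm
      rcases not_and_or.mp hf with h | h
      · apply Finset.prod_eq_zero (mem_univ j)
        rw [if_pos (Or.inl rfl), if_neg h]
      · apply Finset.prod_eq_zero (mem_univ k)
        rw [if_pos (Or.inr rfl), if_neg h]
  simp_rw [key]
  have hfac := Finset.prod_univ_sum (fun _ : J => (univ : Finset M))
    (fun j' x => if j' = j ∨ j' = k then (if x = m then g j' x else 0) else g j' x)
  rw [Fintype.piFinset_univ] at hfac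
  rw [← hfac]
  rw [← Finset.mul_prod_erase univ _ (mem_univ j),
      ← Finset.mul_prod_erase (univ.erase j) _
        (Finset.mem_erase.mpr ⟨Ne.symm hjk, mem_univ k⟩)]
  congr 1
  · simp
  congr 1
  · simp
  · apply Finset.prod_congr rfl
    intro j' hj'
    obtain ⟨hj'k, hj'mem⟩ := Finset.mem_erase.mp hj'
    obtain ⟨hj'j, _⟩ := Finset.mem_erase.mp hj'mem
    apply Finset.sum_congr rfl
    intro x _
    rw [if_neg (by tauto)]

/-! ### properties of μ -/

section mufacts

variable (hy01 : ∀ i j, y i j ∈ Set.Icc (0:ℝ) 1) (hy_sum : ∀ j, ∑ i, y i j = 1)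
  (hG_wt : ∀ i, ∀ ℓ ∈ range (κ i), ∑ j ∈ G i ℓ, y i j ≤ 1)

include hy01 hy_sum hG_wt

lemma mu_nonneg (f : J → M) : 0 ≤ mu y κ G f := by
  apply Finset.sum_nonneg
  intro s _
  apply mul_nonneg (Wgt_nonneg y κ G hy01 hG_wt s)
  exact Finset.prod_nonneg fun j _ => PJ_nonneg y κ G hy01 hy_sum j (f j) s

lemma mu_total : ∑ f : J → M, mu y κ G f = 1 := by
  unfold mu
  rw [Finset.sum_comm]
  have key : ∀ s : Seg (M := M) (J := J) κ,
      ∑ f : J → M, Wgt y κ G s * ∏ j, PJ y κ G j (f j) s = Wgt y κ G s := by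
    intro s
    rw [← Finset.mul_sum]
    have hfac := Finset.prod_univ_sum (fun _ : J => (univ : Finset M))
      (fun j m => PJ y κ G j m s)
    rw [Fintype.piFinset_univ] at hfac
    rw [← hfac]
    by_cases hW : Wgt y κ G s = 0
    · simp [hW]
    · rw [Finset.prod_eq_one fun j _ => sum_PJ y κ G hy01 hy_sum hG_wt j s hW, mul_one]
  rw [Finset.sum_congr rfl fun s _ => key s]
  exact Wgt_sum y κ G

lemma mu_marginal (j0 : J) (m : M) :
    ∑ f ∈ univ.filter (fun f : J → M => f j0 = m), mu y κ G f = y m j0 := by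
  unfold mu
  rw [Finset.sum_comm]
  have key : ∀ s : Seg (M := M) (J := J) κ,
      ∑ f ∈ univ.filter (fun f : J → M => f j0 = m), Wgt y κ G s * ∏ j, PJ y κ G j (f j) s
        = Wgt y κ G s * PJ y κ G j0 m s := by
    intro s
    rw [← Finset.mul_sum, PIN1 (fun j m' => PJ y κ G j m' s) j0 m]
    by_cases hW : Wgt y κ G s = 0
    · simp [hW]
    · rw [Finset.prod_eq_one fun j' _ => sum_PJ y κ G hy01 hy_sum hG_wt j' s hW, mul_one]
  rw [Finset.sum_congr rfl fun s _ => key s]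
  have hexp : ∀ s : Seg (M := M) (J := J) κ, Wgt y κ G s * PJ y κ G j0 m s
      = (Wgt y κ G s * WalkS y κ G j0 false m s
          + Wgt y κ G s * WalkS y κ G j0 true m s) / 2 := by
    intro s; rw [PJ]; ring
  rw [Finset.sum_congr rfl fun s _ => hexp s, ← Finset.sum_div, Finset.sum_add_distrib,
    walk_marginal y κ G hy01 hy_sum j0 false m, walk_marginal y κ G hy01 hy_sum j0 true m]
  norm_num

end mufacts

/-! ### pair analysis -/

lemma wseg_exp2 {i : M} {ℓ : Fin (κ i)} {j k : J} (hj : j ∈ G i (ℓ:ℕ)) (hk : k ∈ G i (ℓ:ℕ))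
    (hjk : j ≠ k) (a b c : ℝ) :
    ∑ o : Option J, wseg y G i (ℓ:ℕ) o * (if o = some j then a else if o = some k then b else c)
      = y i j * a + y i k * b + (1 - y i j - y i k) * c := by
  have hne : (some j : Option J) ≠ some k := by simpa using hjk
  have hmemk : (some k : Option J) ∈ univ.erase (some j) :=
    Finset.mem_erase.mpr ⟨Ne.symm hne, mem_univ _⟩
  have e1 : ∀ (F : Option J → ℝ), ∑ o : Option J, F o
      = F (some j) + (F (some k) + ∑ o ∈ (univ.erase (some j)).erase (some k), F o) := by
    intro F
    rw [Finset.add_sum_erase _ F hmemk, Finset.add_sum_erase _ F (mem_univ (some j))]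
  rw [e1]
  have hrest_w : ∑ o ∈ (univ.erase (some j)).erase (some k), wseg y G i (ℓ:ℕ) o
      = 1 - y i j - y i k := by
    have := e1 (wseg y G i (ℓ:ℕ))
    rw [wseg_sum y κ G ℓ, wseg_some y G i hj, wseg_some y G i hk] at this
    linarith
  have hrest : ∑ o ∈ (univ.erase (some j)).erase (some k),
      wseg y G i (ℓ:ℕ) o * (if o = some j then a else if o = some k then b else c)
      = (1 - y i j - y i k) * c := by
    rw [← hrest_w, Finset.sum_mul]
    apply Finset.sum_congr rfl
    intro o ho
    obtain ⟨hok, ho2⟩ := Finset.mem_erase.mp ho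
    obtain ⟨hoj, _⟩ := Finset.mem_erase.mp ho2
    rw [if_neg hoj, if_neg hok]
  rw [hrest]
  have h1 : (if (some j : Option J) = some j then a
      else if (some j : Option J) = some k then b else c) = a := if_pos rfl
  have h2 : (if (some k : Option J) = some j then a
      else if (some k : Option J) = some k then b else c) = b := by
    rw [if_neg (Ne.symm hne), if_pos rfl]
  rw [h1, h2, wseg_some y G i hj, wseg_some y G i hk]
  ring

/-- constants pull out of machine expectations -/
lemma sum_Wm_const_mul {i : M} (c : ℝ) (X : (Fin (κ i) → Option J) → ℝ) :
    ∑ v : Fin (κ i) → Option J, Wm y κ G i v * (c * X v)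
      = c * ∑ v : Fin (κ i) → Option J, Wm y κ G i v * X v := by
  rw [Finset.mul_sum]
  apply Finset.sum_congr rfl
  intro v _
  ring

lemma sum_Wm_mul_const {i : M} (c : ℝ) (X : (Fin (κ i) → Option J) → ℝ) :
    ∑ v : Fin (κ i) → Option J, Wm y κ G i v * (X v * c)
      = (∑ v : Fin (κ i) → Option J, Wm y κ G i v * X v) * c := by
  rw [Finset.sum_mul]
  apply Finset.sum_congr rfl
  intro v _
  ring

lemma hval_of_none {j : J} {β : Bool} {i : M} (hg : grp κ G i j = none)
    (v : Fin (κ i) → Option J) : hval y κ G j β i v = pW y j β i := by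
  unfold hval
  rw [hg]
  rfl

lemma hval_of_some {j : J} {β : Bool} {i : M} {ℓ : Fin (κ i)} (hg : grp κ G i j = some ℓ)
    (v : Fin (κ i) → Option J) :
    hval y κ G j β i v = if v ℓ = some j then 1 else pT y j β i := by
  unfold hval
  rw [hg]
  rfl

section pairsec

variable (hy01 : ∀ i j, y i j ∈ Set.Icc (0:ℝ) 1) (hy_sum : ∀ j, ∑ i, y i j = 1)
include hy01 hy_sum

lemma Emiss (j : J) (β : Bool) (i : M) :
    ∑ v : Fin (κ i) → Option J, Wm y κ G i v * (1 - hval y κ G j β i v)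
      = 1 - pW y j β i := by
  cases hg : grp κ G i j with
  | none =>
      simp_rw [hval_of_none y κ G hg]
      rw [← Finset.sum_mul, Wm_sum y κ G, one_mul]
  | some ℓ =>
      simp_rw [hval_of_some y κ G hg]
      have hmem := grp_mem κ G hg
      have key : ∀ v : Fin (κ i) → Option J,
          Wm y κ G i v * (1 - if v ℓ = some j then 1 else pT y j β i)
          = Wm y κ G i v * (if v ℓ = some j then 0 else 1 - pT y j β i) := by
        intro v; split_ifs <;> ring
      simp_rw [key]
      rw [EM1 y κ G ℓ (fun o => if o = some j then 0 else 1 - pT y j β i)]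
      rw [wseg_exp y κ G hmem 0 (1 - pT y j β i)]
      rw [pident2 y hy01 hy_sum j β i]
      ring

lemma Ehit (j : J) (β : Bool) (i : M) :
    ∑ v : Fin (κ i) → Option J, Wm y κ G i v * hval y κ G j β i v
      = pW y j β i := by
  cases hg : grp κ G i j with
  | none =>
      simp_rw [hval_of_none y κ G hg]
      rw [← Finset.sum_mul, Wm_sum y κ G, one_mul]
  | some ℓ =>
      simp_rw [hval_of_some y κ G hg]
      have hmem := grp_mem κ G hg
      rw [EM1 y κ G ℓ (fun o => if o = some j then 1 else pT y j β i)]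
      rw [wseg_exp y κ G hmem 1 (pT y j β i), mul_one]
      exact pident y hy01 hy_sum j β i

lemma Ehithit_le {j k : J} (hjk : j ≠ k) (β β' : Bool) (i : M) :
    ∑ v : Fin (κ i) → Option J,
        Wm y κ G i v * (hval y κ G j β i v * hval y κ G k β' i v)
      ≤ pW y j β i * pW y k β' i := by
  cases hgj : grp κ G i j with
  | none =>
      simp_rw [hval_of_none y κ G hgj]
      rw [sum_Wm_const_mul y κ G (pW y j β i) (fun v => hval y κ G k β' i v)]
      rw [Ehit y κ G hy01 hy_sum k β' i]
  | some ℓj =>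
      cases hgk : grp κ G i k with
      | none =>
          simp_rw [hval_of_none y κ G hgk, hval_of_some y κ G hgj]
          rw [sum_Wm_mul_const y κ G (pW y k β' i)
            (fun v => if v ℓj = some j then 1 else pT y j β i)]
          have := Ehit y κ G hy01 hy_sum j β i
          simp_rw [hval_of_some y κ G hgj] at this
          rw [this]
      | some ℓk =>
          simp_rw [hval_of_some y κ G hgj, hval_of_some y κ G hgk]
          by_cases hll : ℓj = ℓk
          · subst hll
            have hmj := grp_mem κ G hgj
            have hmk := grp_mem κ G hgk
            have hconv : ∀ o : Option J,
                (if o = some j then (1:ℝ) else pT y j β i)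
                  * (if o = some k then 1 else pT y k β' i)
                = (if o = some j then pT y k β' i
                    else if o = some k then pT y j β i
                    else pT y j β i * pT y k β' i) := by
              intro o
              by_cases hoj : o = some j
              · have hok : o ≠ some k := by
                  rw [hoj]; simpa using hjk
                simp [hoj, hok, hjk, Ne.symm hjk]
              · by_cases hok : o = some k
                · simp [hoj, hok, hjk, Ne.symm hjk]
                · simp [hoj, hok, hjk, Ne.symm hjk]
            simp_rw [hconv]
            rw [EM1 y κ G ℓj (fun o => if o = some j then pT y k β' i
                    else if o = some k then pT y j β i
                    else pT y j β i * pT y k β' i)]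
            rw [wseg_exp2 y κ G hmj hmk hjk]
            have e1 := pident y hy01 hy_sum j β i
            have e2 := pident y hy01 hy_sum k β' i
            have h1 := (hy01 i j).1
            have h2 := (hy01 i k).1
            have h3 := pT_le_one y hy01 hy_sum j β i
            have h4 := pT_le_one y hy01 hy_sum k β' i
            have key : pW y j β i * pW y k β' i
                - (y i j * pT y k β' i + y i k * pT y j β i
                    + (1 - y i j - y i k) * (pT y j β i * pT y k β' i))
                = (y i j * y i k) * ((1 - pT y j β i) * (1 - pT y k β' i)) := by
              rw [← e1, ← e2]; ring
            have hnn : 0 ≤ (y i j * y i k) * ((1 - pT y j β i) * (1 - pT y k β' i)) :=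
              mul_nonneg (mul_nonneg h1 h2)
                (mul_nonneg (by linarith) (by linarith))
            linarith
          · rw [EM2 y κ G hll (fun o => if o = some j then 1 else pT y j β i)
                (fun o => if o = some k then 1 else pT y k β' i)]
            rw [wseg_exp y κ G (grp_mem κ G hgj) 1 (pT y j β i),
              wseg_exp y κ G (grp_mem κ G hgk) 1 (pT y k β' i)]
            rw [mul_one, mul_one, pident y hy01 hy_sum j β i, pident y hy01 hy_sum k β' i]

lemma Emissmiss_le {j k : J} (hjk : j ≠ k) (β β' : Bool) (i : M) :
    ∑ v : Fin (κ i) → Option J,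
        Wm y κ G i v * ((1 - hval y κ G j β i v) * (1 - hval y κ G k β' i v))
      ≤ (1 - pW y j β i) * (1 - pW y k β' i) := by
  cases hgj : grp κ G i j with
  | none =>
      simp_rw [hval_of_none y κ G hgj]
      rw [sum_Wm_const_mul y κ G (1 - pW y j β i) (fun v => 1 - hval y κ G k β' i v)]
      rw [Emiss y κ G hy01 hy_sum k β' i]
  | some ℓj =>
      cases hgk : grp κ G i k with
      | none =>
          simp_rw [hval_of_none y κ G hgk, hval_of_some y κ G hgj]
          rw [sum_Wm_mul_const y κ G (1 - pW y k β' i)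
            (fun v => 1 - (if v ℓj = some j then 1 else pT y j β i))]
          have := Emiss y κ G hy01 hy_sum j β i
          simp_rw [hval_of_some y κ G hgj] at this
          rw [this]
      | some ℓk =>
          simp_rw [hval_of_some y κ G hgj, hval_of_some y κ G hgk]
          by_cases hll : ℓj = ℓk
          · subst hll
            have hmj := grp_mem κ G hgj
            have hmk := grp_mem κ G hgk
            have hconv : ∀ o : Option J,
                (1 - if o = some j then (1:ℝ) else pT y j β i)
                  * (1 - if o = some k then 1 else pT y k β' i)
                = (if o = some j then 0
                    else if o = some k then 0
                    else (1 - pT y j β i) * (1 - pT y k β' i)) := by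
              intro o
              by_cases hoj : o = some j
              · have hok : o ≠ some k := by
                  rw [hoj]; simpa using hjk
                simp [hoj, hok, hjk, Ne.symm hjk]
              · by_cases hok : o = some k
                · simp [hoj, hok, hjk, Ne.symm hjk]
                · simp [hoj, hok, hjk, Ne.symm hjk]
            simp_rw [hconv]
            rw [EM1 y κ G ℓj (fun o => if o = some j then 0
                    else if o = some k then 0
                    else (1 - pT y j β i) * (1 - pT y k β' i))]
            rw [wseg_exp2 y κ G hmj hmk hjk]
            have e1 := pident2 y hy01 hy_sum j β i
            have e2 := pident2 y hy01 hy_sum k β' i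
            have h1 := (hy01 i j).1
            have h2 := (hy01 i k).1
            have h3 := pT_le_one y hy01 hy_sum j β i
            have h4 := pT_le_one y hy01 hy_sum k β' i
            have key : (1 - pW y j β i) * (1 - pW y k β' i)
                - (y i j * 0 + y i k * 0
                    + (1 - y i j - y i k) * ((1 - pT y j β i) * (1 - pT y k β' i)))
                = (y i j * y i k) * ((1 - pT y j β i) * (1 - pT y k β' i)) := by
              rw [← e1, ← e2]; ring
            have hnn : 0 ≤ (y i j * y i k) * ((1 - pT y j β i) * (1 - pT y k β' i)) :=
              mul_nonneg (mul_nonneg h1 h2)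
                (mul_nonneg (by linarith) (by linarith))
            linarith
          · rw [EM2 y κ G hll (fun o => 1 - (if o = some j then 1 else pT y j β i))
                (fun o => 1 - (if o = some k then 1 else pT y k β' i))]
            have hj' : ∀ o : Option J, (1:ℝ) - (if o = some j then 1 else pT y j β i)
                = (if o = some j then 0 else 1 - pT y j β i) := by
              intro o; split_ifs <;> ring
            have hk' : ∀ o : Option J, (1:ℝ) - (if o = some k then 1 else pT y k β' i)
                = (if o = some k then 0 else 1 - pT y k β' i) := by
              intro o; split_ifs <;> ring
            simp_rw [hj', hk']
            rw [wseg_exp y κ G (grp_mem κ G hgj) 0 (1 - pT y j β i),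
              wseg_exp y κ G (grp_mem κ G hgk) 0 (1 - pT y k β' i)]
            rw [pident2 y hy01 hy_sum j β i, pident2 y hy01 hy_sum k β' i]
            simp

/-- the deficit identity at the target machine for a same-group pair -/
lemma Ehithit_eq {m : M} {j k : J} (hjk : j ≠ k) {ℓ : Fin (κ m)}
    (hgj : grp κ G m j = some ℓ) (hgk : grp κ G m k = some ℓ) (β β' : Bool) :
    ∑ v : Fin (κ m) → Option J,
        Wm y κ G m v * (hval y κ G j β m v * hval y κ G k β' m v)
      = pW y j β m * pW y k β' m
        - y m j * y m k * ((1 - pT y j β m) * (1 - pT y k β' m)) := by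
  simp_rw [hval_of_some y κ G hgj, hval_of_some y κ G hgk]
  have hmj := grp_mem κ G hgj
  have hmk := grp_mem κ G hgk
  have hconv : ∀ o : Option J,
      (if o = some j then (1:ℝ) else pT y j β m)
        * (if o = some k then 1 else pT y k β' m)
      = (if o = some j then pT y k β' m
          else if o = some k then pT y j β m
          else pT y j β m * pT y k β' m) := by
    intro o
    by_cases hoj : o = some j
    · have hok : o ≠ some k := by
        rw [hoj]; simpa using hjk
      simp [hoj, hok, hjk, Ne.symm hjk]
    · by_cases hok : o = some k
      · simp [hoj, hok, hjk, Ne.symm hjk]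
      · simp [hoj, hok, hjk, Ne.symm hjk]
  simp_rw [hconv]
  rw [EM1 y κ G ℓ (fun o => if o = some j then pT y k β' m
          else if o = some k then pT y j β m
          else pT y j β m * pT y k β' m)]
  rw [wseg_exp2 y κ G hmj hmk hjk]
  have e1 := pident y hy01 hy_sum j β m
  have e2 := pident y hy01 hy_sum k β' m
  rw [← e1, ← e2]
  ring

end pairsec

/-! ### assembling the pair bounds -/

def Qp (j k : J) (β β' : Bool) (m i : M) : ℝ :=
  ∑ v : Fin (κ i) → Option J, Wm y κ G i v * (PhiS y κ G j β m i v * PhiS y κ G k β' m i v)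

section pairassemble

variable (hy01 : ∀ i j, y i j ∈ Set.Icc (0:ℝ) 1) (hy_sum : ∀ j, ∑ i, y i j = 1)
  (hG_wt : ∀ i, ∀ ℓ ∈ range (κ i), ∑ j ∈ G i ℓ, y i j ≤ 1)
include hy01 hy_sum hG_wt

lemma Qp_nonneg (j k : J) (β β' : Bool) (m i : M) : 0 ≤ Qp y κ G j k β β' m i := by
  apply Finset.sum_nonneg
  intro v _
  apply mul_nonneg (Wm_nonneg y κ G hy01 hG_wt i v)
  exact mul_nonneg (PhiS_nonneg y κ G hy01 hy_sum j β m i v)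
    (PhiS_nonneg y κ G hy01 hy_sum k β' m i v)

lemma Qp_le {j k : J} (hjk : j ≠ k) (β β' : Bool) (m i : M) :
    Qp y κ G j k β β' m i ≤ qW y j β m i * qW y k β' m i := by
  unfold Qp
  by_cases him : i = m
  · subst him
    have hΦj : ∀ v : Fin (κ i) → Option J, PhiS y κ G j β i i v = hval y κ G j β i v := by
      intro v; unfold PhiS; rw [if_neg (lt_irrefl _), if_pos rfl]
    have hΦk : ∀ v : Fin (κ i) → Option J, PhiS y κ G k β' i i v = hval y κ G k β' i v := by
      intro v; unfold PhiS; rw [if_neg (lt_irrefl _), if_pos rfl]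
    simp_rw [hΦj, hΦk]
    have hq : qW y j β i i * qW y k β' i i = pW y j β i * pW y k β' i := by
      unfold qW; rw [if_neg (lt_irrefl _), if_pos rfl, if_neg (lt_irrefl _), if_pos rfl]
    rw [hq]
    exact Ehithit_le y κ G hy01 hy_sum hjk β β' i
  · by_cases h1 : pos β i < pos β m <;> by_cases h2 : pos β' i < pos β' m
    · -- both prefix
      have hΦj : ∀ v : Fin (κ i) → Option J,
          PhiS y κ G j β m i v = 1 - hval y κ G j β i v := by
        intro v; unfold PhiS; rw [if_pos h1]
      have hΦk : ∀ v : Fin (κ i) → Option J,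
          PhiS y κ G k β' m i v = 1 - hval y κ G k β' i v := by
        intro v; unfold PhiS; rw [if_pos h2]
      simp_rw [hΦj, hΦk]
      have hq : qW y j β m i * qW y k β' m i = (1 - pW y j β i) * (1 - pW y k β' i) := by
        unfold qW; rw [if_pos h1, if_pos h2]
      rw [hq]
      exact Emissmiss_le y κ G hy01 hy_sum hjk β β' i
    · have hΦj : ∀ v : Fin (κ i) → Option J,
          PhiS y κ G j β m i v = 1 - hval y κ G j β i v := by
        intro v; unfold PhiS; rw [if_pos h1]
      have hΦk : ∀ v : Fin (κ i) → Option J, PhiS y κ G k β' m i v = 1 := by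
        intro v; unfold PhiS; rw [if_neg h2, if_neg him]
      simp_rw [hΦj, hΦk, mul_one]
      have hq : qW y j β m i * qW y k β' m i = (1 - pW y j β i) * 1 := by
        unfold qW; rw [if_pos h1, if_neg h2, if_neg him]
      rw [hq, mul_one, Emiss y κ G hy01 hy_sum j β i]
    · have hΦj : ∀ v : Fin (κ i) → Option J, PhiS y κ G j β m i v = 1 := by
        intro v; unfold PhiS; rw [if_neg h1, if_neg him]
      have hΦk : ∀ v : Fin (κ i) → Option J,
          PhiS y κ G k β' m i v = 1 - hval y κ G k β' i v := by
        intro v; unfold PhiS; rw [if_pos h2]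
      simp_rw [hΦj, hΦk, one_mul]
      have hq : qW y j β m i * qW y k β' m i = 1 * (1 - pW y k β' i) := by
        unfold qW; rw [if_pos h2, if_neg h1, if_neg him]
      rw [hq, one_mul, Emiss y κ G hy01 hy_sum k β' i]
    · have hΦj : ∀ v : Fin (κ i) → Option J, PhiS y κ G j β m i v = 1 := by
        intro v; unfold PhiS; rw [if_neg h1, if_neg him]
      have hΦk : ∀ v : Fin (κ i) → Option J, PhiS y κ G k β' m i v = 1 := by
        intro v; unfold PhiS; rw [if_neg h2, if_neg him]
      simp_rw [hΦj, hΦk, mul_one]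
      have hq : qW y j β m i * qW y k β' m i = 1 := by
        unfold qW; rw [if_neg h1, if_neg h2, if_neg him, if_neg him]; ring
      rw [hq, Wm_sum y κ G]

lemma Qp_at_m {j k : J} (hjk : j ≠ k) {m : M} {ℓ : Fin (κ m)}
    (hgj : grp κ G m j = some ℓ) (hgk : grp κ G m k = some ℓ) (β β' : Bool) :
    Qp y κ G j k β β' m m
      = pW y j β m * pW y k β' m
        - y m j * y m k * ((1 - pT y j β m) * (1 - pT y k β' m)) := by
  unfold Qp
  have hΦj : ∀ v : Fin (κ m) → Option J, PhiS y κ G j β m m v = hval y κ G j β m v := by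
    intro v; unfold PhiS; rw [if_neg (lt_irrefl _), if_pos rfl]
  have hΦk : ∀ v : Fin (κ m) → Option J, PhiS y κ G k β' m m v = hval y κ G k β' m v := by
    intro v; unfold PhiS; rw [if_neg (lt_irrefl _), if_pos rfl]
  simp_rw [hΦj, hΦk]
  exact Ehithit_eq y κ G hy01 hy_sum hjk hgj hgk β β'

lemma pair_term (j k : J) (β β' : Bool) (m : M) :
    ∑ s : Seg (M := M) (J := J) κ,
        Wgt y κ G s * (WalkS y κ G j β m s * WalkS y κ G k β' m s)
      = ∏ i, Qp y κ G j k β β' m i := by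
  have key : ∀ s : Seg (M := M) (J := J) κ,
      WalkS y κ G j β m s * WalkS y κ G k β' m s
      = ∏ i, (PhiS y κ G j β m i (s i) * PhiS y κ G k β' m i (s i)) := by
    intro s
    unfold WalkS
    rw [Finset.prod_mul_distrib]
  simp_rw [key]
  exact F1 y κ G (fun i v => PhiS y κ G j β m i v * PhiS y κ G k β' m i v)

lemma pair_term_le {j k : J} (hjk : j ≠ k) (β β' : Bool) (m : M) :
    ∏ i, Qp y κ G j k β β' m i ≤ y m j * y m k := by
  calc ∏ i, Qp y κ G j k β β' m i
      ≤ ∏ i, (qW y j β m i * qW y k β' m i) := by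
        apply Finset.prod_le_prod
        · intro i _; exact Qp_nonneg y κ G hy01 hy_sum hG_wt j k β β' m i
        · intro i _; exact Qp_le y κ G hy01 hy_sum hG_wt hjk β β' m i
    _ = (∏ i, qW y j β m i) * (∏ i, qW y k β' m i) := Finset.prod_mul_distrib
    _ = y m j * y m k := by
        rw [prod_qW y hy01 hy_sum j β m, prod_qW y hy01 hy_sum k β' m]

lemma pair_term_strong {j k : J} (hjk : j ≠ k) {m : M} {ℓ : Fin (κ m)}
    (hgj : grp κ G m j = some ℓ) (hgk : grp κ G m k = some ℓ) (β β' : Bool) :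
    ∏ i, Qp y κ G j k β β' m i
      ≤ R y j β (pos β m) * R y k β' (pos β' m)
        * (pW y j β m * pW y k β' m
            - y m j * y m k * ((1 - pT y j β m) * (1 - pT y k β' m))) := by
  rw [← Finset.mul_prod_erase univ _ (mem_univ m)]
  have herase : ∏ i ∈ univ.erase m, Qp y κ G j k β β' m i
      ≤ R y j β (pos β m) * R y k β' (pos β' m) := by
    calc ∏ i ∈ univ.erase m, Qp y κ G j k β β' m i
        ≤ ∏ i ∈ univ.erase m, (qW y j β m i * qW y k β' m i) := by
          apply Finset.prod_le_prod
          · intro i _; exact Qp_nonneg y κ G hy01 hy_sum hG_wt j k β β' m i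
          · intro i _; exact Qp_le y κ G hy01 hy_sum hG_wt hjk β β' m i
      _ = (∏ i ∈ univ.erase m, qW y j β m i) * (∏ i ∈ univ.erase m, qW y k β' m i) :=
          Finset.prod_mul_distrib
      _ = R y j β (pos β m) * R y k β' (pos β' m) := by
          rw [prod_qW_erase y hy01 hy_sum j β m, prod_qW_erase y hy01 hy_sum k β' m]
  rw [Qp_at_m y κ G hy01 hy_sum hG_wt hjk hgj hgk β β']
  have hQm : 0 ≤ pW y j β m * pW y k β' m
      - y m j * y m k * ((1 - pT y j β m) * (1 - pT y k β' m)) := by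
    rw [← Qp_at_m y κ G hy01 hy_sum hG_wt hjk hgj hgk β β']
    exact Qp_nonneg y κ G hy01 hy_sum hG_wt j k β β' m m
  calc (pW y j β m * pW y k β' m
          - y m j * y m k * ((1 - pT y j β m) * (1 - pT y k β' m)))
        * ∏ i ∈ univ.erase m, Qp y κ G j k β β' m i
      ≤ (pW y j β m * pW y k β' m
          - y m j * y m k * ((1 - pT y j β m) * (1 - pT y k β' m)))
        * (R y j β (pos β m) * R y k β' (pos β' m)) :=
        mul_le_mul_of_nonneg_left herase hQm
    _ = R y j β (pos β m) * R y k β' (pos β' m)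
        * (pW y j β m * pW y k β' m
            - y m j * y m k * ((1 - pT y j β m) * (1 - pT y k β' m))) := by ring

/-- the distribution of the pair under μ -/
lemma mu_pair {j k : J} (hjk : j ≠ k) (m : M) :
    ∑ f ∈ univ.filter (fun f : J → M => f j = m ∧ f k = m), mu y κ G f
      = ∑ s : Seg (M := M) (J := J) κ, Wgt y κ G s * (PJ y κ G j m s * PJ y κ G k m s) := by
  unfold mu
  rw [Finset.sum_comm]
  apply Finset.sum_congr rfl
  intro s _
  rw [← Finset.mul_sum, PIN2 (fun j' m' => PJ y κ G j' m' s) hjk m]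
  by_cases hW : Wgt y κ G s = 0
  · simp [hW]
  · rw [Finset.prod_eq_one fun j' _ => sum_PJ y κ G hy01 hy_sum hG_wt j' s hW, mul_one]

lemma mu_pair_le {j k : J} (hjk : j ≠ k) (m : M) :
    ∑ f ∈ univ.filter (fun f : J → M => f j = m ∧ f k = m), mu y κ G f
      ≤ y m j * y m k := by
  rw [mu_pair y κ G hy01 hy_sum hG_wt hjk m]
  have hexp : ∀ s : Seg (M := M) (J := J) κ,
      Wgt y κ G s * (PJ y κ G j m s * PJ y κ G k m s)
      = (Wgt y κ G s * (WalkS y κ G j false m s * WalkS y κ G k false m s)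
        + Wgt y κ G s * (WalkS y κ G j false m s * WalkS y κ G k true m s)
        + Wgt y κ G s * (WalkS y κ G j true m s * WalkS y κ G k false m s)
        + Wgt y κ G s * (WalkS y κ G j true m s * WalkS y κ G k true m s)) / 4 := by
    intro s
    unfold PJ
    ring
  rw [Finset.sum_congr rfl fun s _ => hexp s, ← Finset.sum_div]
  rw [Finset.sum_add_distrib, Finset.sum_add_distrib, Finset.sum_add_distrib]
  rw [pair_term y κ G hy01 hy_sum hG_wt j k false false m,
      pair_term y κ G hy01 hy_sum hG_wt j k false true m,
      pair_term y κ G hy01 hy_sum hG_wt j k true false m,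
      pair_term y κ G hy01 hy_sum hG_wt j k true true m]
  have b1 := pair_term_le y κ G hy01 hy_sum hG_wt hjk false false m
  have b2 := pair_term_le y κ G hy01 hy_sum hG_wt hjk false true m
  have b3 := pair_term_le y κ G hy01 hy_sum hG_wt hjk true false m
  have b4 := pair_term_le y κ G hy01 hy_sum hG_wt hjk true true m
  linarith

end pairassemble

section strongsec

variable (hy01 : ∀ i j, y i j ∈ Set.Icc (0:ℝ) 1) (hy_sum : ∀ j, ∑ i, y i j = 1)
  (hG_wt : ∀ i, ∀ ℓ ∈ range (κ i), ∑ j ∈ G i ℓ, y i j ≤ 1)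
include hy01 hy_sum hG_wt

lemma mu_pair_strong {j k : J} (hjk : j ≠ k) {m : M} {ℓ : Fin (κ m)}
    (hgj : grp κ G m j = some ℓ) (hgk : grp κ G m k = some ℓ)
    (hyj : 0 < y m j) (hyk : 0 < y m k) :
    ∑ f ∈ univ.filter (fun f : J → M => f j = m ∧ f k = m), mu y κ G f
      ≤ (3/4) * (y m j * y m k) := by
  have hmj := grp_mem κ G hgj
  have hmk := grp_mem κ G hgk
  have hpair : y m j + y m k ≤ 1 := by
    have hsub : ({j, k} : Finset J) ⊆ G m (ℓ:ℕ) := by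
      intro x hx
      rcases Finset.mem_insert.mp hx with h | h
      · rw [h]; exact hmj
      · rw [Finset.mem_singleton.mp h]; exact hmk
    calc y m j + y m k = ∑ x ∈ ({j,k} : Finset J), y m x := (Finset.sum_pair hjk).symm
      _ ≤ ∑ x ∈ G m (ℓ:ℕ), y m x :=
          Finset.sum_le_sum_of_subset_of_nonneg hsub (fun x _ _ => (hy01 m x).1)
      _ ≤ 1 := hG_wt m (ℓ:ℕ) (mem_range.mpr ℓ.isLt)
  have hjlt : y m j < 1 := by linarith
  have hklt : y m k < 1 := by linarith
  have hRpW : ∀ (j' : J) (β : Bool), 0 < y m j' →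
      R y j' β (pos β m) * pW y j' β m = y m j' := by
    intro j' β h
    have hR : 0 < R y j' β (pos β m) := lt_of_lt_of_le h (le_R y hy01 hy_sum j' β m)
    rw [pW, mul_comm, div_mul_cancel₀ _ (ne_of_gt hR)]
  have hu : ∀ (j' : J), 0 < y m j' → y m j' < 1 →
      R y j' false (pos false m) * (1 - pT y j' false m)
      + R y j' true (pos true m) * (1 - pT y j' true m) = 1 := by
    intro j' h hlt
    have hform : ∀ β : Bool, R y j' β (pos β m) * (1 - pT y j' β m)
        = (R y j' β (pos β m) - y m j') / (1 - y m j') := by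
      intro β
      have hR : 0 < R y j' β (pos β m) := lt_of_lt_of_le h (le_R y hy01 hy_sum j' β m)
      rw [pT, if_neg (ne_of_lt hlt), pW]
      have hne1 : (1:ℝ) - y m j' ≠ 0 := by linarith
      field_simp
      ring
    rw [hform false, hform true, ← add_div]
    have hR2 := RSUM y hy01 hy_sum j' m
    rw [div_eq_one_iff_eq (by linarith : (1:ℝ) - y m j' ≠ 0)]
    linarith
  have hterm : ∀ β β' : Bool,
      ∏ i, Qp y κ G j k β β' m i
        ≤ y m j * y m k
          - y m j * y m k * ((R y j β (pos β m) * (1 - pT y j β m))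
              * (R y k β' (pos β' m) * (1 - pT y k β' m))) := by
    intro β β'
    refine le_trans (pair_term_strong y κ G hy01 hy_sum hG_wt hjk hgj hgk β β') ?_
    have e1 := hRpW j β hyj
    have e2 := hRpW k β' hyk
    have : R y j β (pos β m) * R y k β' (pos β' m)
        * (pW y j β m * pW y k β' m
            - y m j * y m k * ((1 - pT y j β m) * (1 - pT y k β' m)))
        = y m j * y m k
          - y m j * y m k * ((R y j β (pos β m) * (1 - pT y j β m))
              * (R y k β' (pos β' m) * (1 - pT y k β' m))) := by
      linear_combination (R y k β' (pos β' m) * pW y k β' m) * e1 + y m j * e2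
    rw [this]
  -- expand the pair sum
  rw [mu_pair y κ G hy01 hy_sum hG_wt hjk m]
  have hexp : ∀ s : Seg (M := M) (J := J) κ,
      Wgt y κ G s * (PJ y κ G j m s * PJ y κ G k m s)
      = (Wgt y κ G s * (WalkS y κ G j false m s * WalkS y κ G k false m s)
        + Wgt y κ G s * (WalkS y κ G j false m s * WalkS y κ G k true m s)
        + Wgt y κ G s * (WalkS y κ G j true m s * WalkS y κ G k false m s)
        + Wgt y κ G s * (WalkS y κ G j true m s * WalkS y κ G k true m s)) / 4 := by
    intro s
    unfold PJ
    ring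
  rw [Finset.sum_congr rfl fun s _ => hexp s, ← Finset.sum_div]
  rw [Finset.sum_add_distrib, Finset.sum_add_distrib, Finset.sum_add_distrib]
  rw [pair_term y κ G hy01 hy_sum hG_wt j k false false m,
      pair_term y κ G hy01 hy_sum hG_wt j k false true m,
      pair_term y κ G hy01 hy_sum hG_wt j k true false m,
      pair_term y κ G hy01 hy_sum hG_wt j k true true m]
  have t1 := hterm false false
  have t2 := hterm false true
  have t3 := hterm true false
  have t4 := hterm true true
  have husumj := hu j hyj hjlt
  have husumk := hu k hyk hklt
  set ujf := R y j false (pos false m) * (1 - pT y j false m) with hujf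
  set ujt := R y j true (pos true m) * (1 - pT y j true m) with hujt
  set ukf := R y k false (pos false m) * (1 - pT y k false m) with hukf
  set ukt := R y k true (pos true m) * (1 - pT y k true m) with hukt
  have hcross : ujf * ukf + ujf * ukt + ujt * ukf + ujt * ukt = 1 := by
    linear_combination (ukf + ukt) * husumj + husumk
  have hc2 : y m j * y m k * (ujf * ukf) + y m j * y m k * (ujf * ukt)
      + y m j * y m k * (ujt * ukf) + y m j * y m k * (ujt * ukt)
      = y m j * y m k := by
    linear_combination (y m j * y m k) * hcross
  linarith

end strongsec

end

end DRSNC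

/-- (Dependent rounding with strong negative correlation,
Bansal–Srinivasan–Svensson.) Let `ζ = 1/108`. Given a fractional assignment
`y : M × J → [0,1]` with `Σ_i y(i,j) = 1` for every job `j`, and for each machine `i` a
family of pairwise disjoint groups `G i 0, …, G i (κ i − 1)` of jobs, each of total
`y`-weight on `i` at most 1, there exists a probability distribution `μ` over assignments
`f : J → M` preserving the marginals and with strong negative correlation within groups. -/
theorem dependent_rounding_strong_negative_correlation
    (M J : Type) [Fintype M] [Fintype J] [DecidableEq M] [DecidableEq J]
    (y : M → J → ℝ)
    (hy01 : ∀ i j, y i j ∈ Set.Icc (0 : ℝ) 1)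
    (hy_sum : ∀ j, ∑ i, y i j = 1)
    (κ : M → ℕ) (G : M → ℕ → Finset J)
    (hG_disj : ∀ i, ∀ ℓ ∈ range (κ i), ∀ ℓ' ∈ range (κ i), ℓ ≠ ℓ' →
      Disjoint (G i ℓ) (G i ℓ'))
    (hG_wt : ∀ i, ∀ ℓ ∈ range (κ i), ∑ j ∈ G i ℓ, y i j ≤ 1) :
    ∃ μ : (J → M) → ℝ,
      (∀ f, 0 ≤ μ f) ∧
      (∑ f, μ f = 1) ∧
      (∀ i j, ∑ f ∈ univ.filter (fun f => f j = i), μ f = y i j) ∧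
      (∀ i j j', j ≠ j' →
        (∑ f ∈ univ.filter (fun f => f j = i ∧ f j' = i), μ f ≤ y i j * y i j') ∧
        ((∃ ℓ ∈ range (κ i), j ∈ G i ℓ ∧ j' ∈ G i ℓ) →
          ∑ f ∈ univ.filter (fun f => f j = i ∧ f j' = i), μ f
            ≤ (1 - 1/108) * (y i j * y i j'))) := by
  classical
  by_cases hJ : IsEmpty J
  · refine ⟨fun _ => 1, fun _ => zero_le_one, ?_, ?_, ?_⟩
    · haveI := hJ
      have hcard : Fintype.card (J → M) = 1 := by
        rw [Fintype.card_fun, Fintype.card_eq_zero (α := J), pow_zero]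
      rw [Finset.sum_const, Finset.card_univ, hcard, one_smul]
    · intro i j
      exact (hJ.false j).elim
    · intro i j j' _
      exact (hJ.false j).elim
  · have hJne : Nonempty J := not_isEmpty_iff.mp hJ
    have hMne : Nonempty M := by
      by_contra hM
      haveI hME : IsEmpty M := not_nonempty_iff.mp hM
      obtain ⟨j0⟩ := hJne
      have h := hy_sum j0
      rw [Finset.univ_eq_empty, Finset.sum_empty] at h
      norm_num at h
    refine ⟨DRSNC.mu y κ G,
      DRSNC.mu_nonneg y κ G hy01 hy_sum hG_wt,
      DRSNC.mu_total y κ G hy01 hy_sum hG_wt, ?_, ?_⟩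
    · intro i j
      exact DRSNC.mu_marginal y κ G hy01 hy_sum hG_wt j i
    · intro i j j' hne
      constructor
      · exact DRSNC.mu_pair_le y κ G hy01 hy_sum hG_wt hne i
      · rintro ⟨ℓ0, hℓ0, hjmem, hj'mem⟩
        have hyy : 0 ≤ y i j * y i j' :=
          mul_nonneg (hy01 i j).1 (hy01 i j').1
        by_cases hy0 : y i j = 0
        · have hsub : univ.filter (fun f : J → M => f j = i ∧ f j' = i)
              ⊆ univ.filter (fun f : J → M => f j = i) := by
            intro f hf
            obtain ⟨_, h1, _⟩ := Finset.mem_filter.mp hf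
            exact Finset.mem_filter.mpr ⟨mem_univ f, h1⟩
          have hle : ∑ f ∈ univ.filter (fun f : J → M => f j = i ∧ f j' = i),
              DRSNC.mu y κ G f ≤ y i j := by
            rw [← DRSNC.mu_marginal y κ G hy01 hy_sum hG_wt j i]
            exact Finset.sum_le_sum_of_subset_of_nonneg hsub
              (fun f _ _ => DRSNC.mu_nonneg y κ G hy01 hy_sum hG_wt f)
          rw [hy0] at hle ⊢
          rw [zero_mul, mul_zero]
          exact hle
        · by_cases hy0' : y i j' = 0
          · have hsub : univ.filter (fun f : J → M => f j = i ∧ f j' = i)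
                ⊆ univ.filter (fun f : J → M => f j' = i) := by
              intro f hf
              obtain ⟨_, _, h2⟩ := Finset.mem_filter.mp hf
              exact Finset.mem_filter.mpr ⟨mem_univ f, h2⟩
            have hle : ∑ f ∈ univ.filter (fun f : J → M => f j = i ∧ f j' = i),
                DRSNC.mu y κ G f ≤ y i j' := by
              rw [← DRSNC.mu_marginal y κ G hy01 hy_sum hG_wt j' i]
              exact Finset.sum_le_sum_of_subset_of_nonneg hsub
                (fun f _ _ => DRSNC.mu_nonneg y κ G hy01 hy_sum hG_wt f)
            rw [hy0'] at hle ⊢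
            rw [mul_zero, mul_zero]
            exact hle
          · have hyj : 0 < y i j := lt_of_le_of_ne (hy01 i j).1 (Ne.symm hy0)
            have hyj' : 0 < y i j' := lt_of_le_of_ne (hy01 i j').1 (Ne.symm hy0')
            set L : Fin (κ i) := ⟨ℓ0, Finset.mem_range.mp hℓ0⟩ with hL
            have hgj : DRSNC.grp κ G i j = some L :=
              DRSNC.grp_eq_some κ G (by exact hjmem) (hG_disj i)
            have hgj' : DRSNC.grp κ G i j' = some L :=
              DRSNC.grp_eq_some κ G (by exact hj'mem) (hG_disj i)
            have hstrong := DRSNC.mu_pair_strong y κ G hy01 hy_sum hG_wt hne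
              hgj hgj' hyj hyj'
            have h34 : (3/4 : ℝ) * (y i j * y i j') ≤ (1 - 1/108) * (y i j * y i j') := by
              apply mul_le_mul_of_nonneg_right _ hyy
              norm_num
            linarith
end

section
/- Let p, p' be positive integers, T a positive integer, and let x, x' : {1,…,T} → ℝ≥0 satisfy: Σ_{t=1}^T x_t = 1, Σ_{t=1}^T x'_t = 1, x'_t = 0 for all t < p', and for every t' ∈ {1,…,T}: Σ_{t < t'+p'} x'_t ≤ Σ_{t < t'} x_t. Then Σ_{t=1}^T t·x_t + p' ≤ Σ_{t=1}^T t·x'_t. (In the LP relaxation for P|prec|Σ w_j C_j this says: for jobs j ≺ j' with fractional completion times C_j = Σ_t t·x_{j,t} and C_{j'} = Σ_t t·x_{j',t}, one has C_j + p_{j'} ≤ C_{j'}.) -/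
open Finset

lemma tail_key (T : ℕ) (f : ℕ → ℝ) :
    ∑ t ∈ Icc 1 T, (t : ℝ) * f t
      = ∑ s ∈ Icc 1 T, ∑ t ∈ (Icc 1 T).filter (fun t => s ≤ t), f t := by
  have h1 : ∀ s, ∑ t ∈ (Icc 1 T).filter (fun t => s ≤ t), f t
      = ∑ t ∈ Icc 1 T, if s ≤ t then f t else 0 := by
    intro s; rw [Finset.sum_filter]
  simp_rw [h1]
  rw [Finset.sum_comm]
  refine Finset.sum_congr rfl fun t ht => ?_
  rw [← Finset.sum_filter]
  have hfil : (Icc 1 T).filter (fun s => s ≤ t) = Icc 1 t := by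
    ext s
    simp only [mem_filter, mem_Icc]
    constructor
    · rintro ⟨⟨h1, _⟩, h3⟩; exact ⟨h1, h3⟩
    · rintro ⟨h1, h2⟩
      exact ⟨⟨h1, h2.trans (mem_Icc.mp ht).2⟩, h2⟩
  rw [hfil, Finset.sum_const, Nat.card_Icc]
  simp [nsmul_eq_mul]

/-- For jobs `j ≺ j'` in the time-indexed LP for `P|prec|Σ w_j C_j`, with
fractional distributions `x` (for `j`) and `x'` (for `j'`, of length `p'`) over completion
times `{1,…,T}` satisfying the LP precedence constraint, the fractional completion times
satisfy `C_j + p_{j'} ≤ C_{j'}`. -/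
theorem fractional_completion_precedence_gap
    (p p' T : ℕ) (hp : 0 < p) (hp' : 0 < p') (hT : 0 < T)
    (x x' : ℕ → ℝ)
    (hx_nonneg : ∀ t ∈ Icc 1 T, 0 ≤ x t)
    (hx'_nonneg : ∀ t ∈ Icc 1 T, 0 ≤ x' t)
    (hx_sum : ∑ t ∈ Icc 1 T, x t = 1)
    (hx'_sum : ∑ t ∈ Icc 1 T, x' t = 1)
    (hx'_len : ∀ t, t < p' → x' t = 0)
    (hprec : ∀ t' ∈ Icc 1 T,
      ∑ t ∈ (Icc 1 T).filter (fun t => t < t' + p'), x' t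
        ≤ ∑ t ∈ (Icc 1 T).filter (fun t => t < t'), x t) :
    (∑ t ∈ Icc 1 T, (t : ℝ) * x t) + (p' : ℝ) ≤ ∑ t ∈ Icc 1 T, (t : ℝ) * x' t := by
  -- head/tail split
  have hsplit : ∀ (f : ℕ → ℝ) (s : ℕ),
      (∑ t ∈ (Icc 1 T).filter (fun t => t < s), f t)
        + (∑ t ∈ (Icc 1 T).filter (fun t => s ≤ t), f t) = ∑ t ∈ Icc 1 T, f t := by
    intro f s
    rw [← Finset.sum_filter_add_sum_filter_not (Icc 1 T) (fun t => t < s)]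
    congr 1
    apply Finset.sum_congr _ fun _ _ => rfl
    apply Finset.filter_congr
    intro t _; simp [not_lt]
  set tl : (ℕ → ℝ) → ℕ → ℝ := fun f s => ∑ t ∈ (Icc 1 T).filter (fun t => s ≤ t), f t
    with htl
  -- p' < T, else contradiction from hprec at 1
  have hp'T : p' < T := by
    by_contra h
    push_neg at h
    have h1 := hprec 1 (mem_Icc.mpr ⟨le_refl 1, hT⟩)
    have hall : (Icc 1 T).filter (fun t => t < 1 + p') = Icc 1 T := by
      apply Finset.filter_true_of_mem
      intro t ht
      have := (mem_Icc.mp ht).2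
      omega
    have hnone : (Icc 1 T).filter (fun t => t < 1) = ∅ := by
      apply Finset.filter_false_of_mem
      intro t ht
      have := (mem_Icc.mp ht).1
      omega
    rw [hall, hnone, hx'_sum, Finset.sum_empty] at h1
    linarith
  -- tail x' s = 1 for s ≤ p'
  have htail1 : ∀ s, s ≤ p' → tl x' s = 1 := by
    intro s hs
    have hhead : (∑ t ∈ (Icc 1 T).filter (fun t => t < s), x' t) = 0 := by
      apply Finset.sum_eq_zero
      intro t ht
      exact hx'_len t (by have := (mem_filter.mp ht).2; omega)
    have := hsplit x' s
    rw [hhead, hx'_sum] at this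
    linarith
  -- tail x' s ≥ tail x (s - p') for p' < s ≤ T
  have htail2 : ∀ s ∈ Icc 1 T, p' < s → tl x (s - p') ≤ tl x' s := by
    intro s hs hps
    have hmem : s - p' ∈ Icc 1 T := by
      rw [mem_Icc] at hs ⊢; omega
    have h1 := hprec (s - p') hmem
    have hsp : s - p' + p' = s := by omega
    rw [hsp] at h1
    have h2 := hsplit x' s
    have h3 := hsplit x (s - p')
    rw [hx'_sum] at h2
    rw [hx_sum] at h3
    simp only [htl]
    linarith
  -- tail x s = 0 for s > T - p'
  have htail0 : ∀ s ∈ Icc 1 T, T - p' < s → tl x s = 0 := by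
    intro s hs hsp
    have h1 := hprec s hs
    have hall : (Icc 1 T).filter (fun t => t < s + p') = Icc 1 T := by
      apply Finset.filter_true_of_mem
      intro t ht
      have := (mem_Icc.mp ht).2
      omega
    rw [hall, hx'_sum] at h1
    have h3 := hsplit x s
    rw [hx_sum] at h3
    have hnn : 0 ≤ tl x s :=
      Finset.sum_nonneg fun t ht => hx_nonneg t (mem_filter.mp ht).1
    simp only [htl] at *
    linarith
  rw [tail_key, tail_key]
  have hEq : ∀ a b : ℕ, Icc a b = Ico a (b + 1) := fun a b => (Finset.Ico_add_one_right_eq_Icc a b).symm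
  have hL : ∑ s ∈ Icc 1 T, tl x s = ∑ s ∈ Icc 1 (T - p'), tl x s := by
    rw [hEq 1 T, hEq 1 (T - p'),
      ← Finset.sum_Ico_consecutive (tl x) (by omega : 1 ≤ T - p' + 1) (by omega : T - p' + 1 ≤ T + 1)]
    have hz : ∑ s ∈ Ico (T - p' + 1) (T + 1), tl x s = 0 := by
      apply Finset.sum_eq_zero
      intro s hs
      rw [mem_Ico] at hs
      exact htail0 s (mem_Icc.mpr ⟨by omega, by omega⟩) (by omega)
    rw [hz, add_zero]
  have hR1 : ∑ s ∈ Ico 1 (p' + 1), tl x' s = (p' : ℝ) := by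
    rw [Finset.sum_congr rfl fun s hs => htail1 s (by rw [mem_Ico] at hs; omega),
      Finset.sum_const, Nat.card_Ico]
    simp
  have hR2 : ∑ s ∈ Icc 1 (T - p'), tl x s ≤ ∑ s ∈ Ico (p' + 1) (T + 1), tl x' s := by
    have hstep : ∑ s ∈ Ico (p' + 1) (T + 1), tl x (s - p')
        ≤ ∑ s ∈ Ico (p' + 1) (T + 1), tl x' s := by
      apply Finset.sum_le_sum
      intro s hs
      rw [mem_Ico] at hs
      exact htail2 s (mem_Icc.mpr ⟨by omega, by omega⟩) (by omega)
    refine le_trans (le_of_eq ?_) hstep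
    rw [hEq 1 (T - p'), Finset.sum_Ico_eq_sum_range, Finset.sum_Ico_eq_sum_range]
    have hc : T - p' + 1 - 1 = T + 1 - (p' + 1) := by omega
    rw [hc]
    apply Finset.sum_congr rfl
    intro i _
    congr 1
    omega
  calc (∑ s ∈ Icc 1 T, tl x s) + (p' : ℝ)
      = (∑ s ∈ Icc 1 (T - p'), tl x s) + (p' : ℝ) := by rw [hL]
    _ ≤ (∑ s ∈ Ico (p' + 1) (T + 1), tl x' s) + (p' : ℝ) := by linarith
    _ = ∑ s ∈ Icc 1 T, tl x' s := by
        rw [hEq 1 T, ← Finset.sum_Ico_consecutive (tl x') (by omega : 1 ≤ p' + 1)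
          (by omega : p' + 1 ≤ T + 1), hR1]
        ring
end

section
/- Let J be a finite set of jobs with positive integer lengths p_j, let m and T be positive integers, and let x : J × {1,…,T} → ℝ≥0 satisfy: Σ_{t=1}^T x_{j,t} = 1 for every j; x_{j,t} = 0 whenever t < p_j; and Σ_j Σ_{t ∈ [t', t'+p_j)} x_{j,t} ≤ m for every t' ∈ {1,…,T}. Set C_j = Σ_t t·x_{j,t} and fix a job j* ∈ J. Then Σ_{j ∈ J} min( p_j/2, max(0, C_{j*} − C_j + p_j) ) ≤ m·C_{j*}. (Equivalently, writing M^θ_j = C_j − (1−θ)p_j, J_θ = {j : M^θ_j ≤ C_{j*}} and p(J') = Σ_{j ∈ J'} p_j, this states ∫_{θ=0}^{1/2} p(J_θ) dθ ≤ m·C_{j*}.) -/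
open Finset

noncomputable def rf (τ s : ℝ) : ℝ := max (2*τ - s) 0

noncomputable def Gf (τ s : ℝ) : ℝ := (rf τ s)^2

lemma Gf_nonneg (τ s : ℝ) : 0 ≤ Gf τ s := by unfold Gf; positivity

lemma Gf_mono (τ : ℝ) {a b : ℝ} (h : a ≤ b) : Gf τ b ≤ Gf τ a := by
  unfold Gf rf
  have h1 : max (2*τ - b) 0 ≤ max (2*τ - a) 0 := max_le_max (by linarith) le_rfl
  have h0 : 0 ≤ max (2*τ - b) 0 := le_max_right _ _
  exact pow_le_pow_left₀ h0 h1 2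

lemma stepAB (A B : ℝ) :
    (max B 0)^2 - (max (B-1) 0)^2 - 2*(max B 0 - max (B-1) 0)*(B - A)
      ≤ (max A 0)^2 - (max (A-1) 0)^2 := by
  rcases le_total A 0 with hA | hA <;>
  rcases le_total (A-1) 0 with hA1 | hA1 <;>
  rcases le_total B 0 with hB | hB <;>
  rcases le_total (B-1) 0 with hB1 | hB1 <;>
  simp only [max_eq_left, max_eq_right, hA, hA1, hB, hB1] <;>
  nlinarith [sq_nonneg (A-B), sq_nonneg (A-1), sq_nonneg (B-1), sq_nonneg A, sq_nonneg B]

lemma step' (τ u w δ : ℝ) (hδ : u - w = δ) :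
    (Gf τ w - Gf τ (w+1)) - 2*(rf τ w - rf τ (w+1))*δ ≤ Gf τ u - Gf τ (u+1) := by
  subst hδ
  have h := stepAB (2*τ - u) (2*τ - w)
  unfold Gf rf
  have e1 : 2*τ - (u+1) = 2*τ - u - 1 := by ring
  have e2 : 2*τ - (w+1) = 2*τ - w - 1 := by ring
  rw [e1, e2]
  have e3 : (2*τ - w) - (2*τ - u) = u - w := by ring
  rw [e3] at h
  exact h

lemma tangent (τ C t : ℝ) (p : ℕ) :
    (Gf τ (C - p) - Gf τ C) - 2*(rf τ (C - p) - rf τ C)*(t - C)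
      ≤ Gf τ (t - p) - Gf τ t := by
  induction p with
  | zero => simp
  | succ p IH =>
    have hs := step' τ (t - ((p:ℝ)+1)) (C - ((p:ℝ)+1)) (t - C) (by ring)
    have a1 : C - ((p:ℝ)+1) + 1 = C - (p:ℝ) := by ring
    have a2 : t - ((p:ℝ)+1) + 1 = t - (p:ℝ) := by ring
    rw [a1, a2] at hs
    push_cast
    linarith [IH, hs]

lemma pointwise1b (τ C : ℝ) (p : ℕ) (hp : 1 ≤ p) (hpC : (p:ℝ) ≤ C) (hτ : 0 < τ) :
    4*τ*(min ((p:ℝ)/2) (max 0 (τ - C + (p:ℝ)))) ≤ Gf τ (C - (p:ℝ)) - Gf τ C := by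
  have hP : (1:ℝ) ≤ (p:ℝ) := by exact_mod_cast hp
  rcases le_total (τ - C + (p:ℝ)) 0 with h | h
  · rw [max_eq_left h, min_eq_right (by positivity : (0:ℝ) ≤ (p:ℝ)/2)]
    have := Gf_mono τ (show C - (p:ℝ) ≤ C by linarith)
    linarith
  · rw [max_eq_right h]
    unfold Gf rf
    rcases le_total C (2*τ) with h1 | h1
    · rw [max_eq_left (by linarith : (0:ℝ) ≤ 2*τ - C),
        max_eq_left (show (0:ℝ) ≤ 2*τ - (C - (p:ℝ)) by linarith)]
      rcases le_total ((p:ℝ)/2) (τ - C + (p:ℝ)) with h2 | h2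
      · rw [min_eq_left h2]
        nlinarith [mul_nonneg (by linarith : (0:ℝ) ≤ (p:ℝ)) (by linarith : (0:ℝ) ≤ 2*τ + (p:ℝ) - 2*C)]
      · rw [min_eq_right h2]
        nlinarith [mul_nonneg (by linarith : (0:ℝ) ≤ 2*τ - (p:ℝ)) (by linarith : (0:ℝ) ≤ 2*C - 2*τ - (p:ℝ))]
    · rw [max_eq_right (by linarith : 2*τ - C ≤ 0),
        max_eq_left (show (0:ℝ) ≤ 2*τ - (C - (p:ℝ)) by linarith)]
      rcases le_total ((p:ℝ)/2) (τ - C + (p:ℝ)) with h2 | h2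
      · rw [min_eq_left h2]
        have hX : τ + (p:ℝ)/2 ≤ 2*τ - C + (p:ℝ) := by linarith
        have hY : (0:ℝ) ≤ τ + (p:ℝ)/2 := by linarith
        nlinarith [mul_self_le_mul_self hY hX, sq_nonneg (τ - (p:ℝ)/2)]
      · rw [min_eq_right h2]
        nlinarith [sq_nonneg ((p:ℝ) - C)]

/-- For a feasible fractional solution `x` of the time-indexed LP for `m`
identical machines, fractional completion times `C_j = Σ_t t·x_{j,t}`, and any fixed job
`j*`, one has `Σ_j min(p_j/2, max(0, C_{j*} − C_j + p_j)) ≤ m·C_{j*}`; equivalently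
`∫_0^{1/2} p(J_θ) dθ ≤ m·C_{j*}` where `J_θ = {j : C_j − (1−θ)p_j ≤ C_{j*}}`. -/
theorem busy_time_rectangle_bound
    (J : Type) [Fintype J]
    (p : J → ℕ) (hp : ∀ j, 0 < p j)
    (m T : ℕ) (hm : 0 < m) (hT : 0 < T)
    (x : J → ℕ → ℝ)
    (hx_nonneg : ∀ j t, 0 ≤ x j t)
    (hx_sum : ∀ j, ∑ t ∈ Icc 1 T, x j t = 1)
    (hx_len : ∀ j t, t < p j → x j t = 0)
    (hx_cong : ∀ t' ∈ Icc 1 T,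
      ∑ j, ∑ t ∈ (Icc 1 T).filter (fun t => t' ≤ t ∧ t < t' + p j), x j t ≤ (m : ℝ))
    (C : J → ℝ) (hC : ∀ j, C j = ∑ t ∈ Icc 1 T, (t : ℝ) * x j t)
    (jstar : J) :
    ∑ j, min ((p j : ℝ) / 2) (max 0 (C jstar - C j + (p j : ℝ))) ≤ (m : ℝ) * C jstar := by
  -- τ := C jstar; basic positivity facts
  have hτ1 : (1:ℝ) ≤ C jstar := by
    rw [hC jstar]
    calc (1:ℝ) = ∑ t ∈ Icc 1 T, x jstar t := (hx_sum jstar).symm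
    _ ≤ ∑ t ∈ Icc 1 T, (t:ℝ) * x jstar t := by
        apply Finset.sum_le_sum
        intro t ht
        have h1t : 1 ≤ t := (Finset.mem_Icc.mp ht).1
        have h1t' : (1:ℝ) ≤ (t:ℝ) := by exact_mod_cast h1t
        nlinarith [hx_nonneg jstar t]
  have hτ0 : 0 < C jstar := by linarith
  -- every fractional completion time is at least the length
  have hCge : ∀ j, (p j : ℝ) ≤ C j := by
    intro j
    have h1 : ∀ t ∈ Icc 1 T, (p j:ℝ) * x j t ≤ (t:ℝ) * x j t := by
      intro t ht
      by_cases hx0 : x j t = 0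
      · simp [hx0]
      · have hpt : p j ≤ t := by
          by_contra hcon
          exact hx0 (hx_len j t (not_le.mp hcon))
        have : (p j:ℝ) ≤ (t:ℝ) := by exact_mod_cast hpt
        exact mul_le_mul_of_nonneg_right this (hx_nonneg j t)
    calc (p j:ℝ) = (p j:ℝ) * ∑ t ∈ Icc 1 T, x j t := by rw [hx_sum j]; ring
    _ = ∑ t ∈ Icc 1 T, (p j:ℝ) * x j t := Finset.mul_sum _ _ _
    _ ≤ ∑ t ∈ Icc 1 T, (t:ℝ) * x j t := Finset.sum_le_sum h1
    _ = C j := (hC j).symm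
  -- STEP 1 : per-job lower bound on the weighted mass
  have key1 : ∀ j, 4*(C jstar) * min ((p j:ℝ)/2) (max 0 (C jstar - C j + (p j:ℝ)))
      ≤ ∑ t ∈ Icc 1 T, x j t * (Gf (C jstar) ((t:ℝ) - (p j:ℝ)) - Gf (C jstar) (t:ℝ)) := by
    intro j
    have hA := pointwise1b (C jstar) (C j) (p j) (hp j) (hCge j) hτ0
    have htan : ∀ t : ℕ,
        (Gf (C jstar) (C j - (p j:ℝ)) - Gf (C jstar) (C j))
          - (2*(rf (C jstar) (C j - (p j:ℝ)) - rf (C jstar) (C j)))*((t:ℝ) - C j)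
        ≤ Gf (C jstar) ((t:ℝ) - (p j:ℝ)) - Gf (C jstar) (t:ℝ) := by
      intro t
      have h := tangent (C jstar) (C j) (t:ℝ) (p j)
      linarith [h]
    have hsum : ∑ t ∈ Icc 1 T, x j t *
        ((Gf (C jstar) (C j - (p j:ℝ)) - Gf (C jstar) (C j))
          - (2*(rf (C jstar) (C j - (p j:ℝ)) - rf (C jstar) (C j)))*((t:ℝ) - C j))
        = Gf (C jstar) (C j - (p j:ℝ)) - Gf (C jstar) (C j) := by
      have e : ∀ t ∈ Icc 1 T, x j t *
          ((Gf (C jstar) (C j - (p j:ℝ)) - Gf (C jstar) (C j))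
            - (2*(rf (C jstar) (C j - (p j:ℝ)) - rf (C jstar) (C j)))*((t:ℝ) - C j))
          = (Gf (C jstar) (C j - (p j:ℝ)) - Gf (C jstar) (C j)) * x j t
            - (2*(rf (C jstar) (C j - (p j:ℝ)) - rf (C jstar) (C j))) * ((t:ℝ) * x j t)
            + ((2*(rf (C jstar) (C j - (p j:ℝ)) - rf (C jstar) (C j))) * C j) * x j t := by
        intro t _; ring
      rw [Finset.sum_congr rfl e, Finset.sum_add_distrib, Finset.sum_sub_distrib,
        ← Finset.mul_sum, ← Finset.mul_sum, ← Finset.mul_sum, hx_sum j, ← hC j]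
      ring
    calc 4*(C jstar) * min ((p j:ℝ)/2) (max 0 (C jstar - C j + (p j:ℝ)))
        ≤ Gf (C jstar) (C j - (p j:ℝ)) - Gf (C jstar) (C j) := hA
    _ = ∑ t ∈ Icc 1 T, x j t *
        ((Gf (C jstar) (C j - (p j:ℝ)) - Gf (C jstar) (C j))
          - (2*(rf (C jstar) (C j - (p j:ℝ)) - rf (C jstar) (C j)))*((t:ℝ) - C j)) := hsum.symm
    _ ≤ ∑ t ∈ Icc 1 T, x j t * (Gf (C jstar) ((t:ℝ) - (p j:ℝ)) - Gf (C jstar) (t:ℝ)) :=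
        Finset.sum_le_sum (fun t _ => mul_le_mul_of_nonneg_left (htan t) (hx_nonneg j t))
  -- STEP 2 : rewrite each job's weighted mass via unit slots
  have swap : ∀ j, ∑ k ∈ Icc 1 T, (Gf (C jstar) ((k:ℝ) - 1) - Gf (C jstar) (k:ℝ)) *
        (∑ t ∈ (Icc 1 T).filter (fun t => k ≤ t ∧ t < k + p j), x j t)
      = ∑ t ∈ Icc 1 T, x j t * (Gf (C jstar) ((t:ℝ) - (p j:ℝ)) - Gf (C jstar) (t:ℝ)) := by
    intro j
    calc ∑ k ∈ Icc 1 T, (Gf (C jstar) ((k:ℝ) - 1) - Gf (C jstar) (k:ℝ)) *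
          (∑ t ∈ (Icc 1 T).filter (fun t => k ≤ t ∧ t < k + p j), x j t)
        = ∑ k ∈ Icc 1 T, ∑ t ∈ Icc 1 T, (if k ≤ t ∧ t < k + p j then
            (Gf (C jstar) ((k:ℝ) - 1) - Gf (C jstar) (k:ℝ)) * x j t else 0) := by
          refine Finset.sum_congr rfl (fun k _ => ?_)
          rw [Finset.mul_sum, Finset.sum_filter]
    _ = ∑ t ∈ Icc 1 T, ∑ k ∈ Icc 1 T, (if k ≤ t ∧ t < k + p j then
            (Gf (C jstar) ((k:ℝ) - 1) - Gf (C jstar) (k:ℝ)) * x j t else 0) := Finset.sum_comm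
    _ = ∑ t ∈ Icc 1 T, x j t * (Gf (C jstar) ((t:ℝ) - (p j:ℝ)) - Gf (C jstar) (t:ℝ)) := by
        refine Finset.sum_congr rfl (fun t ht => ?_)
        rw [← Finset.sum_filter]
        by_cases hx0 : x j t = 0
        · simp [hx0]
        · have hpt : p j ≤ t := by
            by_contra hcon
            exact hx0 (hx_len j t (not_le.mp hcon))
          obtain ⟨ht1, ht2⟩ := Finset.mem_Icc.mp ht
          have hfe : (Icc 1 T).filter (fun k => k ≤ t ∧ t < k + p j) = Icc (t - p j + 1) t := by
            ext k
            simp only [Finset.mem_filter, Finset.mem_Icc]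
            omega
          rw [hfe, ← Finset.sum_mul]
          have hc : ((t - p j : ℕ) : ℝ) = (t:ℝ) - (p j:ℝ) := Nat.cast_sub hpt
          have hteles : ∑ k ∈ Icc (t - p j + 1) t,
              (Gf (C jstar) ((k:ℝ) - 1) - Gf (C jstar) (k:ℝ))
              = Gf (C jstar) ((t:ℝ) - (p j:ℝ)) - Gf (C jstar) (t:ℝ) := by
            rw [← Finset.Ico_add_one_right_eq_Icc, Finset.sum_Ico_eq_sum_range]
            have hcnt : t + 1 - (t - p j + 1) = p j := by omega
            rw [hcnt]
            calc ∑ i ∈ range (p j),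
                (Gf (C jstar) ((↑(t - p j + 1 + i):ℝ) - 1) - Gf (C jstar) (↑(t - p j + 1 + i):ℝ))
                = ∑ i ∈ range (p j),
                  (Gf (C jstar) ((t:ℝ) - (p j:ℝ) + (i:ℝ)) - Gf (C jstar) ((t:ℝ) - (p j:ℝ) + (↑(i+1):ℝ))) := by
                  refine Finset.sum_congr rfl (fun i _ => ?_)
                  have c1 : (↑(t - p j + 1 + i):ℝ) - 1 = (t:ℝ) - (p j:ℝ) + (i:ℝ) := by
                    push_cast [hc]; ring
                  have c2 : (↑(t - p j + 1 + i):ℝ) = (t:ℝ) - (p j:ℝ) + (↑(i+1):ℝ) := by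
                    push_cast [hc]; ring
                  rw [c1, c2]
            _ = Gf (C jstar) ((t:ℝ) - (p j:ℝ) + ((0:ℕ):ℝ)) - Gf (C jstar) ((t:ℝ) - (p j:ℝ) + ((p j:ℕ):ℝ)) :=
                Finset.sum_range_sub' (fun i : ℕ => Gf (C jstar) ((t:ℝ) - (p j:ℝ) + (i:ℝ))) (p j)
            _ = Gf (C jstar) ((t:ℝ) - (p j:ℝ)) - Gf (C jstar) (t:ℝ) := by
                have e1 : (t:ℝ) - (p j:ℝ) + ((0:ℕ):ℝ) = (t:ℝ) - (p j:ℝ) := by push_cast; ring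
                have e2 : (t:ℝ) - (p j:ℝ) + ((p j:ℕ):ℝ) = (t:ℝ) := by push_cast; ring
                rw [e1, e2]
          rw [hteles]
          ring
  -- telescoping the slot weights
  have hsumd : ∑ k ∈ Icc 1 T, (Gf (C jstar) ((k:ℝ) - 1) - Gf (C jstar) (k:ℝ))
      = Gf (C jstar) ((0:ℕ):ℝ) - Gf (C jstar) ((T:ℕ):ℝ) := by
    rw [← Finset.Ico_add_one_right_eq_Icc, Finset.sum_Ico_eq_sum_range, Nat.add_sub_cancel]
    calc ∑ i ∈ range T, (Gf (C jstar) ((↑(1 + i):ℝ) - 1) - Gf (C jstar) (↑(1 + i):ℝ))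
        = ∑ i ∈ range T, (Gf (C jstar) ((i:ℕ):ℝ) - Gf (C jstar) ((↑(i+1):ℕ):ℝ)) := by
          refine Finset.sum_congr rfl (fun i _ => ?_)
          have c1 : (↑(1 + i):ℝ) - 1 = ((i:ℕ):ℝ) := by push_cast; ring
          have c2 : (↑(1 + i):ℝ) = ((↑(i+1):ℕ):ℝ) := by push_cast; ring
          rw [c1, c2]
    _ = Gf (C jstar) ((0:ℕ):ℝ) - Gf (C jstar) ((T:ℕ):ℝ) :=
        Finset.sum_range_sub' (fun i : ℕ => Gf (C jstar) ((i:ℕ):ℝ)) T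
  have hd_nonneg : ∀ k : ℕ, 0 ≤ Gf (C jstar) ((k:ℝ) - 1) - Gf (C jstar) (k:ℝ) := by
    intro k
    have := Gf_mono (C jstar) (show (k:ℝ) - 1 ≤ (k:ℝ) by linarith)
    linarith
  have hG0 : Gf (C jstar) ((0:ℕ):ℝ) = (2*(C jstar))^2 := by
    unfold Gf rf
    norm_num
    rw [max_eq_left (by linarith : (0:ℝ) ≤ 2*(C jstar))]
  -- STEP 2 global bound
  have key2 : ∑ j, ∑ t ∈ Icc 1 T, x j t * (Gf (C jstar) ((t:ℝ) - (p j:ℝ)) - Gf (C jstar) (t:ℝ))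
      ≤ (2*(C jstar))^2 * (m:ℝ) := by
    calc ∑ j, ∑ t ∈ Icc 1 T, x j t * (Gf (C jstar) ((t:ℝ) - (p j:ℝ)) - Gf (C jstar) (t:ℝ))
        = ∑ j, ∑ k ∈ Icc 1 T, (Gf (C jstar) ((k:ℝ) - 1) - Gf (C jstar) (k:ℝ)) *
            (∑ t ∈ (Icc 1 T).filter (fun t => k ≤ t ∧ t < k + p j), x j t) :=
          Finset.sum_congr rfl (fun j _ => (swap j).symm)
    _ = ∑ k ∈ Icc 1 T, ∑ j, (Gf (C jstar) ((k:ℝ) - 1) - Gf (C jstar) (k:ℝ)) *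
            (∑ t ∈ (Icc 1 T).filter (fun t => k ≤ t ∧ t < k + p j), x j t) := Finset.sum_comm
    _ = ∑ k ∈ Icc 1 T, (Gf (C jstar) ((k:ℝ) - 1) - Gf (C jstar) (k:ℝ)) *
            (∑ j, ∑ t ∈ (Icc 1 T).filter (fun t => k ≤ t ∧ t < k + p j), x j t) := by
          refine Finset.sum_congr rfl (fun k _ => ?_)
          rw [Finset.mul_sum]
    _ ≤ ∑ k ∈ Icc 1 T, (Gf (C jstar) ((k:ℝ) - 1) - Gf (C jstar) (k:ℝ)) * (m:ℝ) :=
          Finset.sum_le_sum (fun k hk =>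
            mul_le_mul_of_nonneg_left (hx_cong k hk) (hd_nonneg k))
    _ = (∑ k ∈ Icc 1 T, (Gf (C jstar) ((k:ℝ) - 1) - Gf (C jstar) (k:ℝ))) * (m:ℝ) :=
          (Finset.sum_mul _ _ _).symm
    _ = (Gf (C jstar) ((0:ℕ):ℝ) - Gf (C jstar) ((T:ℕ):ℝ)) * (m:ℝ) := by rw [hsumd]
    _ ≤ (2*(C jstar))^2 * (m:ℝ) := by
          have h1 := Gf_nonneg (C jstar) ((T:ℕ):ℝ)
          have h2 : (0:ℝ) ≤ (m:ℝ) := Nat.cast_nonneg m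
          rw [← hG0]
          nlinarith [Gf_nonneg (C jstar) ((0:ℕ):ℝ)]
  -- assemble
  have hfin : 4*(C jstar) * ∑ j, min ((p j:ℝ)/2) (max 0 (C jstar - C j + (p j:ℝ)))
      ≤ (2*(C jstar))^2 * (m:ℝ) := by
    rw [Finset.mul_sum]
    exact le_trans (Finset.sum_le_sum (fun j _ => key1 j)) key2
  nlinarith [hfin, hτ0]
end

section
/- Let J be a finite set of unit-length jobs with a strict partial order ≺, let T be a positive integer, and let x : J × {1,…,T} → ℝ≥0 satisfy the precedence constraint: for every j ≺ j' and every t' ∈ {1,…,T}, Σ_{t ≤ t'} x_{j',t} ≤ Σ_{t < t'} x_{j,t}. If j_1 ≺ j_2 ≺ ⋯ ≺ j_a is a chain of a jobs, then x_{j_a, t} = 0 for every t ∈ {1,…,a−1}. In other words, if a_j denotes the largest a such that there exists a chain of a jobs ending at j, then x_{j,t} = 0 for all t < a_j. -/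
open Finset

/-- In the time-indexed LP for unit-length jobs with precedence
constraints, if `c 0 ≺ c 1 ≺ ⋯ ≺ c (a−1)` is a chain of `a` jobs, then the last job of the
chain has `x_{j,t} = 0` for every time slot `t ∈ {1,…,a−1}` (within the horizon `{1,…,T}`).
In other words, a job at depth `a` in the precedence graph cannot be fractionally scheduled
before time `a`. -/
theorem chain_depth_zero_mass
    (J : Type) [Fintype J]
    (prec : J → J → Prop) (hso : IsStrictOrder J prec)
    (T : ℕ) (hT : 0 < T)
    (x : J → ℕ → ℝ)
    (hx_nonneg : ∀ j, ∀ t ∈ Icc 1 T, 0 ≤ x j t)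
    (hx_prec : ∀ j j', prec j j' → ∀ t' ∈ Icc 1 T,
      ∑ t ∈ (Icc 1 T).filter (fun t => t ≤ t'), x j' t
        ≤ ∑ t ∈ (Icc 1 T).filter (fun t => t < t'), x j t)
    (a : ℕ) (ha : 0 < a) (c : ℕ → J)
    (hchain : ∀ k, k + 1 < a → prec (c k) (c (k + 1))) :
    ∀ t, 1 ≤ t → t ≤ T → t < a → x (c (a - 1)) t = 0 := by
  have key : ∀ k, k < a → ∀ t', 1 ≤ t' → t' ≤ T → t' ≤ k →
      ∑ t ∈ (Icc 1 T).filter (fun t => t ≤ t'), x (c k) t = 0 := by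
    intro k
    induction k with
    | zero => intro _ t' h1 _ h0; omega
    | succ k ih =>
      intro hka t' h1 hT' hk
      have hprec := hx_prec (c k) (c (k+1)) (hchain k hka) t' (mem_Icc.mpr ⟨h1, hT'⟩)
      have hzero : ∑ t ∈ (Icc 1 T).filter (fun t => t < t'), x (c k) t = 0 := by
        rcases Nat.eq_or_lt_of_le h1 with h | h
        · have : (Icc 1 T).filter (fun t => t < t') = ∅ := by
            apply filter_eq_empty_iff.mpr
            intro t ht
            have := (mem_Icc.mp ht).1
            omega
          rw [this, sum_empty]
        · have heq : (Icc 1 T).filter (fun t => t < t')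
              = (Icc 1 T).filter (fun t => t ≤ t' - 1) := by
            apply filter_congr
            intro t _
            omega
          rw [heq]
          exact ih (by omega) (t' - 1) (by omega) (by omega) (by omega)
      have hnn : 0 ≤ ∑ t ∈ (Icc 1 T).filter (fun t => t ≤ t'), x (c (k+1)) t :=
        sum_nonneg fun t ht => hx_nonneg _ t (mem_filter.mp ht).1
      linarith [hzero ▸ hprec]
  intro t h1 hTt hta
  have hs := key (a - 1) (by omega) t h1 hTt (by omega)
  have := (sum_eq_zero_iff_of_nonneg
    (fun s hs' => hx_nonneg (c (a-1)) s (mem_filter.mp hs').1)).mp hs t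
    (mem_filter.mpr ⟨mem_Icc.mpr ⟨h1, hTt⟩, le_refl t⟩)
  exact this
end
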